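/- arXiv:2512.01740 — 13 statements merged into one kernel-verified Lean document; each statement's English description precedes it below -/
import Mathlib

section
/- For every positive integer k, the sum ∑_{i=⌈k/2⌉}^{k} (2i − k) · binom(k, i) equals ⌈k/2⌉ · binom(k, ⌈k/2⌉). -/
theorem stmt_0 (k : ℕ) (hk : 0 < k) :
    ∑ i ∈ Finset.Icc (⌈(k : ℚ) / 2⌉₊) k, ((2 * i - k : ℤ)) * (Nat.choose k i : ℤ) =
      (⌈(k : ℚ) / 2⌉₊ : ℤ) * (Nat.choose k ⌈(k : ℚ) / 2⌉₊ : ℤ) := by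
  set m := ⌈(k : ℚ) / 2⌉₊ with hm
  have hm1 : 1 ≤ m := by
    rw [hm, Nat.one_le_ceil_iff]
    have : (1:ℚ) ≤ (k:ℚ) := by exact_mod_cast hk
    positivity
  have hmk : m ≤ k := by
    rw [hm]
    apply Nat.ceil_le.mpr
    rw [div_le_iff₀ (by norm_num)]
    have : (0:ℚ) ≤ (k:ℚ) := Nat.cast_nonneg k
    linarith
  -- key nat identity: k * C(k-1, i-1) = C(k,i) * i for 1 ≤ i
  have hnat : ∀ i, 1 ≤ i → k * (k-1).choose (i-1) = k.choose i * i := by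
    intro i hi1
    have e1 : k - 1 + 1 = k := Nat.succ_pred_eq_of_pos hk
    have e2 : i - 1 + 1 = i := Nat.succ_pred_eq_of_pos hi1
    have h := Nat.add_one_mul_choose_eq (k-1) (i-1)
    rwa [e1, e2] at h
  have key : ∀ i ∈ Finset.Icc m k, ((2*i - k : ℤ)) * (k.choose i : ℤ)
      = (k:ℤ) * ((k-1).choose (i-1) : ℤ) - (k:ℤ) * ((k-1).choose i : ℤ) := by
    intro i hi
    obtain ⟨hi1, hi2⟩ := Finset.mem_Icc.mp hi
    have h1 := hnat i (hm1.trans hi1)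
    have h2 : k * (k-1).choose i = k.choose i * (k - i) := by
      have e1 : k - 1 + 1 = k := Nat.succ_pred_eq_of_pos hk
      have h := Nat.add_one_mul_choose_eq (k-1) i
      rw [e1] at h
      rw [h, Nat.choose_succ_right_eq]
    have h1' : (k:ℤ) * ((k-1).choose (i-1) : ℤ) = (k.choose i : ℤ) * i := by
      exact_mod_cast congrArg (Nat.cast : ℕ → ℤ) h1
    have h2' : (k:ℤ) * ((k-1).choose i : ℤ) = (k.choose i : ℤ) * ((k:ℤ) - i) := by
      have := congrArg (Nat.cast : ℕ → ℤ) h2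
      push_cast [Nat.cast_sub hi2] at this
      linarith
    rw [h1', h2']
    ring
  rw [Finset.sum_congr rfl key]
  rw [← Finset.Ico_add_one_right_eq_Icc, Finset.sum_Ico_eq_sum_range]
  have tele := Finset.sum_range_sub' (f := fun j => (k:ℤ) * (((k-1).choose (m-1+j)) : ℤ)) (k+1-m)
  have congr2 : ∀ j ∈ Finset.range (k+1-m),
      (k:ℤ) * ((k-1).choose (m+j-1) : ℤ) - (k:ℤ) * ((k-1).choose (m+j) : ℤ)
      = (k:ℤ) * ((k-1).choose (m-1+j) : ℤ) - (k:ℤ) * ((k-1).choose (m-1+(j+1)) : ℤ) := by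
    intro j _
    have e1 : m + j - 1 = m - 1 + j := by omega
    have e2 : m + j = m - 1 + (j+1) := by omega
    rw [e1, e2]
  rw [Finset.sum_congr rfl congr2, tele]
  have e3 : m - 1 + (k + 1 - m) = k := by omega
  have e4 : m - 1 + 0 = m - 1 := by omega
  simp only [e3, e4]
  rw [Nat.choose_eq_zero_of_lt (by omega : k - 1 < k)]
  have h1 := hnat m hm1
  have := congrArg (Nat.cast : ℕ → ℤ) h1
  push_cast at this
  push_cast
  linarith
end

section
/- Let n be a positive integer and let φ be a bijection from Fin (2^n) onto the set of all functions from Fin n to {−1, 1} ⊆ ℤ. Then the maximum over all subsets A ⊆ Fin (2^n) and B ⊆ Fin n of |σ(A,B)| equals ∑_{i=⌈n/2⌉}^{n} (2i − n) · binom(n, i), which equals ⌈n/2⌉ · binom(n, ⌈n/2⌉). -/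
open Finset

private def sgnV (n : ℕ) : Finset (Fin n → ℤ) := Fintype.piFinset fun _ => ({-1, 1} : Finset ℤ)

private lemma mem_sgnV {n : ℕ} {g : Fin n → ℤ} :
    g ∈ sgnV n ↔ ∀ j, g j = -1 ∨ g j = 1 := by
  simp [sgnV, Fintype.mem_piFinset]

/-- convexity of pos part -/
private lemma posmax_convex (x : ℤ) : 2 * max x 0 ≤ max (x + 1) 0 + max (x - 1) 0 := by
  rcases le_total x 0 with h | h
  · have : max x 0 = 0 := max_eq_right h
    rw [this]
    positivity
  · rcases le_or_gt 1 x with h1 | h1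
    · rw [max_eq_left h, max_eq_left (by omega), max_eq_left (by omega)]; ring_nf; omega
    · have hx : x = 0 := by omega
      simp [hx]

/-- reindexing a sum over sign vectors by negation -/
private lemma sum_sgnV_neg {n : ℕ} (F : (Fin n → ℤ) → ℤ) :
    ∑ g ∈ sgnV n, F (-g) = ∑ g ∈ sgnV n, F g := by
  refine Finset.sum_nbij' (fun g => -g) (fun g => -g) ?_ ?_ ?_ ?_ ?_
  · intro g hg; rw [mem_sgnV] at hg ⊢; intro j
    rcases hg j with h | h <;> simp [h]
  · intro g hg; rw [mem_sgnV] at hg ⊢; intro j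
    rcases hg j with h | h <;> simp [h]
  · intro g _; simp
  · intro g _; simp
  · intro g _; rfl

/-- reindexing a sum over sign vectors by flipping one coordinate -/
private lemma sum_sgnV_flip {n : ℕ} (j₀ : Fin n) (F : (Fin n → ℤ) → ℤ) :
    ∑ g ∈ sgnV n, F (Function.update g j₀ (-(g j₀))) = ∑ g ∈ sgnV n, F g := by
  refine Finset.sum_nbij' (fun g => Function.update g j₀ (-(g j₀)))
    (fun g => Function.update g j₀ (-(g j₀))) ?_ ?_ ?_ ?_ ?_
  · intro g hg; rw [mem_sgnV] at hg ⊢; intro j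
    rcases eq_or_ne j j₀ with h | h
    · subst h; rcases hg j with h | h <;> simp [h]
    · simp [Function.update_of_ne h, hg j]
  · intro g hg; rw [mem_sgnV] at hg ⊢; intro j
    rcases eq_or_ne j j₀ with h | h
    · subst h; rcases hg j with h | h <;> simp [h]
    · simp [Function.update_of_ne h, hg j]
  · intro g _; funext j
    rcases eq_or_ne j j₀ with h | h
    · subst h; simp
    · simp [Function.update_of_ne h]
  · intro g _; funext j
    rcases eq_or_ne j j₀ with h | h
    · subst h; simp
    · simp [Function.update_of_ne h]
  · intro g _; rfl

private lemma step_mono {n : ℕ} (B : Finset (Fin n)) (j₀ : Fin n) (hj : j₀ ∉ B) :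
    ∑ g ∈ sgnV n, max (∑ j ∈ B, g j) 0 ≤
      ∑ g ∈ sgnV n, max (∑ j ∈ insert j₀ B, g j) 0 := by
  have h1 : ∀ g ∈ sgnV n, max (∑ j ∈ insert j₀ B, g j) 0 =
      max (g j₀ + ∑ j ∈ B, g j) 0 := by
    intro g _; rw [Finset.sum_insert hj]
  have h2 : ∑ g ∈ sgnV n, max (∑ j ∈ insert j₀ B, g j) 0 =
      ∑ g ∈ sgnV n, max (-(g j₀) + ∑ j ∈ B, g j) 0 := by
    conv_lhs => rw [← sum_sgnV_flip j₀ (fun g => max (∑ j ∈ insert j₀ B, g j) 0)]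
    refine Finset.sum_congr rfl fun g _ => ?_
    rw [Finset.sum_insert hj, Function.update_self]
    congr 2
    refine Finset.sum_congr rfl fun j hjB => ?_
    rw [Function.update_of_ne (by rintro rfl; exact hj hjB)]
  have key : ∀ g ∈ sgnV n,
      2 * max (∑ j ∈ B, g j) 0 ≤
        max (g j₀ + ∑ j ∈ B, g j) 0 + max (-(g j₀) + ∑ j ∈ B, g j) 0 := by
    intro g hg
    rw [mem_sgnV] at hg
    rcases hg j₀ with h | h <;> rw [h] <;>
      simpa [sub_eq_neg_add, add_comm] using posmax_convex (∑ j ∈ B, g j)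
  have := Finset.sum_le_sum key
  rw [Finset.sum_add_distrib, ← Finset.mul_sum] at this
  have h3 : ∑ g ∈ sgnV n, max (g j₀ + ∑ j ∈ B, g j) 0 =
      ∑ g ∈ sgnV n, max (∑ j ∈ insert j₀ B, g j) 0 := by
    refine Finset.sum_congr rfl fun g hg => (h1 g hg).symm
  rw [h3, ← h2] at this
  linarith

private lemma mono_univ {n : ℕ} (B : Finset (Fin n)) :
    ∑ g ∈ sgnV n, max (∑ j ∈ B, g j) 0 ≤
      ∑ g ∈ sgnV n, max (∑ j ∈ (univ : Finset (Fin n)), g j) 0 := by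
  suffices H : ∀ k (B : Finset (Fin n)), (univ \ B).card = k →
      ∑ g ∈ sgnV n, max (∑ j ∈ B, g j) 0 ≤
        ∑ g ∈ sgnV n, max (∑ j ∈ (univ : Finset (Fin n)), g j) 0 by
    exact H _ B rfl
  intro k
  induction k with
  | zero =>
    intro B hk
    have hB : B = univ := by
      have h0 := Finset.sdiff_eq_empty_iff_subset.mp (Finset.card_eq_zero.mp hk)
      exact Finset.eq_univ_of_forall fun x => h0 (Finset.mem_univ x)
    rw [hB]
  | succ k ih =>
    intro B hk
    have hne : (univ \ B).Nonempty := by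
      rw [← Finset.card_pos, hk]; omega
    obtain ⟨j₀, hj₀⟩ := hne
    rw [Finset.mem_sdiff] at hj₀
    have hstep := step_mono B j₀ hj₀.2
    have hcard : (univ \ insert j₀ B).card = k := by
      have h2 : univ \ insert j₀ B = (univ \ B).erase j₀ := by
        ext x; simp [Finset.mem_sdiff, Finset.mem_erase, Finset.mem_insert]
      rw [h2, Finset.card_erase_of_mem (Finset.mem_sdiff.mpr hj₀), hk]
      rfl
    exact le_trans hstep (ih _ hcard)

/-- characterization of the ceiling -/
private lemma ceil_le_iff {n i : ℕ} : ⌈(n : ℚ) / 2⌉₊ ≤ i ↔ n ≤ 2 * i := by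
  rw [Nat.ceil_le, div_le_iff₀ (by norm_num),
    show ((i : ℚ) * 2) = ((2 * i : ℕ) : ℚ) by push_cast; ring, Nat.cast_le]

private lemma range_to_icc {n c : ℕ} (hcle : ∀ i : ℕ, c ≤ i ↔ n ≤ 2 * i) :
    ∑ m ∈ Finset.range (n + 1), Nat.choose n m • max (2 * (m : ℤ) - n) 0
      = ∑ i ∈ Finset.Icc c n, (2 * i - n : ℤ) * (Nat.choose n i : ℤ) := by
  have hsub : Finset.Icc c n ⊆ Finset.range (n + 1) := by
    intro i hi
    rw [Finset.mem_Icc] at hi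
    rw [Finset.mem_range]
    omega
  have hzero : ∀ i ∈ Finset.range (n + 1), i ∉ Finset.Icc c n →
      Nat.choose n i • max (2 * (i : ℤ) - n) 0 = 0 := by
    intro i hir hic
    rw [Finset.mem_range] at hir
    rw [Finset.mem_Icc] at hic
    push_neg at hic
    have hni : ¬ (n ≤ 2 * i) := by
      intro h
      exact absurd ((hcle i).mpr h) (fun hci => by omega)
    rw [max_eq_right (by omega)]
    simp
  rw [← Finset.sum_subset hsub hzero]
  refine Finset.sum_congr rfl fun i hi => ?_
  rw [Finset.mem_Icc] at hi
  have h2i : n ≤ 2 * i := (hcle i).mp hi.1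
  rw [max_eq_left (by omega), nsmul_eq_mul, mul_comm]

/-- the counting lemma -/
private lemma count_lemma {n : ℕ} :
    ∑ g ∈ sgnV n, max (∑ j ∈ (univ : Finset (Fin n)), g j) 0 =
      ∑ i ∈ Finset.Icc (⌈(n : ℚ) / 2⌉₊) n, (2 * i - n : ℤ) * (Nat.choose n i : ℤ) := by
  -- reindex sign vectors by subsets
  have h1 : ∑ g ∈ sgnV n, max (∑ j ∈ (univ : Finset (Fin n)), g j) 0 =
      ∑ S ∈ (univ : Finset (Fin n)).powerset, max (2 * (S.card : ℤ) - n) 0 := by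
    refine Finset.sum_nbij' (fun g => univ.filter (fun j => g j = 1))
      (fun S j => if j ∈ S then 1 else -1) ?_ ?_ ?_ ?_ ?_
    · intro g _; simp
    · intro S _; rw [mem_sgnV]; intro j; by_cases h : j ∈ S <;> simp [h]
    · intro g hg; rw [mem_sgnV] at hg
      funext j
      rcases hg j with h | h <;> simp [Finset.mem_filter, h]
    · intro S _
      ext j; simp [Finset.mem_filter]
    · intro g hg; rw [mem_sgnV] at hg
      congr 1
      have he : ∀ j ∈ (univ : Finset (Fin n)), g j = (if g j = 1 then (2:ℤ) else 0) - 1 := by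
        intro j _; rcases hg j with h | h <;> simp [h]
      rw [Finset.sum_congr rfl he, Finset.sum_sub_distrib, ← Finset.sum_filter,
        Finset.sum_const, Finset.sum_const]
      simp [Finset.card_univ, mul_comm]
  have h2 : ∑ S ∈ (univ : Finset (Fin n)).powerset, max (2 * (S.card : ℤ) - n) 0
      = ∑ m ∈ Finset.range (n + 1), Nat.choose n m • max (2 * (m : ℤ) - n) 0 := by
    rw [Finset.sum_powerset_apply_card (fun m => max (2 * (m : ℤ) - n) 0),
      Finset.card_univ, Fintype.card_fin]
  rw [h1, h2]
  exact range_to_icc (fun i => ceil_le_iff)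

/-- the telescoping identity -/
private lemma telescope {n : ℕ} (hn : 0 < n) :
    ∑ i ∈ Finset.Icc (⌈(n : ℚ) / 2⌉₊) n, (2 * i - n : ℤ) * (Nat.choose n i : ℤ)
      = (⌈(n : ℚ) / 2⌉₊ : ℤ) * (Nat.choose n ⌈(n : ℚ) / 2⌉₊ : ℤ) := by
  obtain ⟨c, hc⟩ : ∃ c, ⌈(n : ℚ) / 2⌉₊ = c := ⟨_, rfl⟩
  have hcle : ∀ i : ℕ, c ≤ i ↔ n ≤ 2 * i := fun i => hc ▸ ceil_le_iff
  rw [hc]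
  have hc1 : 1 ≤ c := by
    have h0 := hcle 0
    omega
  have hcn : c ≤ n := by
    have h0 := hcle n
    omega
  -- nat identity : for 1 ≤ i ≤ n, n * C(n-1, i-1) = C(n, i) * i
  have e1 : ∀ i : ℕ, 1 ≤ i → n * Nat.choose (n - 1) (i - 1) = Nat.choose n i * i := by
    intro i hi
    have h := Nat.add_one_mul_choose_eq (n - 1) (i - 1)
    simpa [Nat.succ_eq_add_one, Nat.sub_add_cancel hn, Nat.sub_add_cancel hi] using h
  have e2 : ∀ i : ℕ, Nat.choose n i * (n - i) = n * Nat.choose (n - 1) i := by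
    intro i
    have ha := Nat.choose_succ_right_eq n i
    have hb := Nat.add_one_mul_choose_eq (n - 1) i
    simp only [Nat.succ_eq_add_one, Nat.sub_add_cancel hn] at hb
    rw [← ha, ← hb]
  have key : ∀ i ∈ Finset.Icc c n, (2 * i - n : ℤ) * (Nat.choose n i : ℤ)
      = (n : ℤ) * (Nat.choose (n - 1) (i - 1) : ℤ)
        - (n : ℤ) * (Nat.choose (n - 1) i : ℤ) := by
    intro i hi
    rw [Finset.mem_Icc] at hi
    have hi1 : 1 ≤ i := le_trans hc1 hi.1
    have e1' : (n : ℤ) * (Nat.choose (n - 1) (i - 1) : ℤ) = (Nat.choose n i : ℤ) * i := by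
      exact_mod_cast e1 i hi1
    have e2' : (Nat.choose n i : ℤ) * ((n : ℤ) - i) = (n : ℤ) * (Nat.choose (n - 1) i : ℤ) := by
      have := e2 i
      zify [hi.2] at this
      exact this
    linear_combination -e1' - e2'
  rw [Finset.sum_congr rfl key]
  have hicc : Finset.Icc c n = Finset.Ico c (n + 1) := by
    ext i; simp [Finset.mem_Icc, Finset.mem_Ico]
  rw [hicc, Finset.sum_Ico_eq_sum_range]
  have hterm : ∀ k ∈ Finset.range (n + 1 - c),
      ((n : ℤ) * (Nat.choose (n - 1) (c + k - 1) : ℤ)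
        - (n : ℤ) * (Nat.choose (n - 1) (c + k) : ℤ))
      = (fun m => (n : ℤ) * (Nat.choose (n - 1) (c - 1 + m) : ℤ)) k
        - (fun m => (n : ℤ) * (Nat.choose (n - 1) (c - 1 + m) : ℤ)) (k + 1) := by
    intro k _
    have ha : c + k - 1 = c - 1 + k := by omega
    have hb : c + k = c - 1 + (k + 1) := by omega
    rw [ha, hb]
  rw [Finset.sum_congr rfl hterm, Finset.sum_range_sub']
  have hlast : Nat.choose (n - 1) (c - 1 + (n + 1 - c)) = 0 :=
    Nat.choose_eq_zero_of_lt (by omega)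
  simp only [hlast, Nat.cast_zero, mul_zero, sub_zero, Nat.add_zero]
  have e1c : (n : ℤ) * (Nat.choose (n - 1) (c - 1) : ℤ) = (Nat.choose n c : ℤ) * c := by
    exact_mod_cast e1 c hc1
  rw [e1c, mul_comm]

/-- reindexing sums over `Fin (2^n)` to sums over sign vectors -/
private lemma reindex {n : ℕ} {φ : Fin (2 ^ n) → Fin n → ℤ}
    (hφ : ∀ s j, φ s j = -1 ∨ φ s j = 1)
    (hbij : ∀ g : Fin n → ℤ, (∀ j, g j = -1 ∨ g j = 1) → ∃! s, φ s = g)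
    (F : (Fin n → ℤ) → ℤ) :
    ∑ s : Fin (2 ^ n), F (φ s) = ∑ g ∈ sgnV n, F g := by
  refine Finset.sum_bij (fun s _ => φ s) ?_ ?_ ?_ ?_
  · intro s _; exact mem_sgnV.mpr (hφ s)
  · intro s _ t _ h
    obtain ⟨u, _, hu⟩ := hbij (φ s) (hφ s)
    rw [hu s rfl, hu t h.symm]
  · intro g hg
    obtain ⟨s, hs, _⟩ := hbij g (mem_sgnV.mp hg)
    exact ⟨s, Finset.mem_univ s, hs⟩
  · intro s _; rfl

/-- the universal upper bound -/
private lemma upper_bound {n : ℕ} {φ : Fin (2 ^ n) → Fin n → ℤ}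
    (hφ : ∀ s j, φ s j = -1 ∨ φ s j = 1)
    (hbij : ∀ g : Fin n → ℤ, (∀ j, g j = -1 ∨ g j = 1) → ∃! s, φ s = g)
    (A : Finset (Fin (2 ^ n))) (B : Finset (Fin n)) :
    |∑ s ∈ A, ∑ j ∈ B, φ s j| ≤ ∑ g ∈ sgnV n, max (∑ j ∈ B, g j) 0 := by
  have habs : ∀ (ψ : Fin (2 ^ n) → Fin n → ℤ), (∀ s j, ψ s j = -1 ∨ ψ s j = 1) →
      (∀ g : Fin n → ℤ, (∀ j, g j = -1 ∨ g j = 1) → ∃! s, ψ s = g) →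
      ∑ s ∈ A, ∑ j ∈ B, ψ s j ≤ ∑ g ∈ sgnV n, max (∑ j ∈ B, g j) 0 := by
    intro ψ hψ hbijψ
    calc ∑ s ∈ A, ∑ j ∈ B, ψ s j ≤ ∑ s ∈ A, max (∑ j ∈ B, ψ s j) 0 :=
          Finset.sum_le_sum fun s _ => le_max_left _ _
    _ ≤ ∑ s : Fin (2 ^ n), max (∑ j ∈ B, ψ s j) 0 :=
          Finset.sum_le_sum_of_subset_of_nonneg (Finset.subset_univ A)
            (fun s _ _ => le_max_right _ _)
    _ = ∑ g ∈ sgnV n, max (∑ j ∈ B, g j) 0 :=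
          reindex hψ hbijψ (fun g => max (∑ j ∈ B, g j) 0)
  rw [abs_le]
  constructor
  · have h1 := habs (fun s => -(φ s)) (fun s j => by rcases hφ s j with h | h <;> simp [h])
      (fun g hg => by
        obtain ⟨s, hs, hu⟩ := hbij (-g) (fun j => by rcases hg j with h | h <;> simp [h])
        refine ⟨s, by simp [hs], fun y hy => hu y ?_⟩
        have : -(φ y) = g := hy
        rw [← this]; simp)
    have h2 : ∑ s ∈ A, ∑ j ∈ B, (fun s => -(φ s)) s j = -∑ s ∈ A, ∑ j ∈ B, φ s j := by
      simp [Finset.sum_neg_distrib]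
    rw [h2] at h1
    linarith
  · exact habs φ hφ hbij

theorem stmt_2 (n : ℕ) (hn : 0 < n) (φ : Fin (2 ^ n) → Fin n → ℤ)
    (hφ : ∀ s j, φ s j = -1 ∨ φ s j = 1)
    (hbij : ∀ g : Fin n → ℤ, (∀ j, g j = -1 ∨ g j = 1) → ∃! s, φ s = g) :
    IsGreatest {x : ℤ | ∃ (A : Finset (Fin (2 ^ n))) (B : Finset (Fin n)),
        x = |∑ s ∈ A, ∑ j ∈ B, φ s j|}
      (∑ i ∈ Finset.Icc (⌈(n : ℚ) / 2⌉₊) n, (2 * i - n : ℤ) * (Nat.choose n i : ℤ)) ∧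
    (∑ i ∈ Finset.Icc (⌈(n : ℚ) / 2⌉₊) n, (2 * i - n : ℤ) * (Nat.choose n i : ℤ))
      = (⌈(n : ℚ) / 2⌉₊ : ℤ) * (Nat.choose n ⌈(n : ℚ) / 2⌉₊ : ℤ) := by
  refine ⟨⟨?_, ?_⟩, telescope hn⟩
  · -- membership : achieved by A = positive rows, B = univ
    refine ⟨Finset.univ.filter (fun s => 0 < ∑ j, φ s j), Finset.univ, ?_⟩
    have h0 : ∑ s ∈ Finset.univ.filter (fun s => 0 < ∑ j, φ s j), ∑ j, φ s j
        = ∑ s : Fin (2 ^ n), max (∑ j, φ s j) 0 := by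
      rw [Finset.sum_filter]
      refine Finset.sum_congr rfl fun s _ => ?_
      rcases lt_or_ge 0 (∑ j, φ s j) with h | h
      · rw [if_pos h, max_eq_left h.le]
      · rw [if_neg (not_lt.mpr h), max_eq_right h]
    have h1 : ∑ s : Fin (2 ^ n), max (∑ j, φ s j) 0
        = ∑ g ∈ sgnV n, max (∑ j ∈ (univ : Finset (Fin n)), g j) 0 :=
      reindex hφ hbij (fun g => max (∑ j ∈ (univ : Finset (Fin n)), g j) 0)
    have hnn : 0 ≤ ∑ s ∈ Finset.univ.filter (fun s => 0 < ∑ j, φ s j), ∑ j, φ s j := by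
      rw [h0]
      exact Finset.sum_nonneg fun s _ => le_max_right _ _
    rw [abs_of_nonneg hnn, h0, h1, count_lemma]
  · -- upper bound
    rintro x ⟨A, B, rfl⟩
    calc |∑ s ∈ A, ∑ j ∈ B, φ s j| ≤ ∑ g ∈ sgnV n, max (∑ j ∈ B, g j) 0 :=
          upper_bound hφ hbij A B
    _ ≤ ∑ g ∈ sgnV n, max (∑ j ∈ (univ : Finset (Fin n)), g j) 0 := mono_univ B
    _ = _ := count_lemma
end

section
/- Let n be a positive integer and let φ be a bijection from Fin (2^n) onto the set of all functions from Fin n to {−1, 1} ⊆ ℤ. Then there exists a subset A ⊆ Fin (2^n) such that σ(A, Fin n) = ⌈n/2⌉ · binom(n, ⌈n/2⌉); namely, the maximum value is attained with B the full index set. -/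
lemma stmt_3_sum_id (n k : ℕ) (hk : k ≤ n) :
    ∑ t ∈ Finset.range k, ((n : ℤ) - 2 * t) * (Nat.choose n t : ℤ)
      = (k : ℤ) * (Nat.choose n k : ℤ) := by
  induction k with
  | zero => simp
  | succ k ih =>
    rw [Finset.sum_range_succ, ih (Nat.le_of_succ_le hk)]
    have h := congrArg (Nat.cast : ℕ → ℤ) (Nat.choose_succ_right_eq n k)
    have hkn : k ≤ n := Nat.le_of_succ_le hk
    push_cast [Nat.cast_sub hkn] at h
    push_cast
    linear_combination -h

theorem stmt_3 (n : ℕ) (hn : 0 < n) (φ : Fin (2 ^ n) → Fin n → ℤ)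
    (hφ : ∀ s j, φ s j = -1 ∨ φ s j = 1)
    (hbij : ∀ g : Fin n → ℤ, (∀ j, g j = -1 ∨ g j = 1) → ∃! s, φ s = g) :
    ∃ A : Finset (Fin (2 ^ n)),
      ∑ s ∈ A, ∑ j ∈ (Finset.univ : Finset (Fin n)), φ s j
        = (⌈(n : ℚ) / 2⌉₊ : ℤ) * (Nat.choose n ⌈(n : ℚ) / 2⌉₊ : ℤ) := by
  classical
  set k := ⌈(n : ℚ) / 2⌉₊ with hkdef
  have hkn : k ≤ n := by
    rw [hkdef]
    refine Nat.ceil_le.mpr ?_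
    have : (0:ℚ) ≤ (n:ℚ) := by positivity
    linarith
  let g : Finset (Fin n) → Fin n → ℤ := fun T j => if j ∈ T then -1 else 1
  have hg : ∀ T j, g T j = -1 ∨ g T j = 1 := by
    intro T j; simp only [g]; split <;> simp
  have hex : ∀ T, ∃ s, φ s = g T := fun T => (hbij (g T) (hg T)).exists
  choose ψ hψ using hex
  have hinj : Function.Injective ψ := by
    intro T T' h
    have hgg : g T = g T' := by rw [← hψ T, ← hψ T', h]
    ext j
    have h2 := congrFun hgg j
    by_cases hT : j ∈ T <;> by_cases hT' : j ∈ T' <;>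
      simp [g, hT, hT'] at h2 ⊢
  have hrow : ∀ T : Finset (Fin n), ∑ j, g T j = (n : ℤ) - 2 * T.card := by
    intro T
    have h1 : ∑ j ∈ T, g T j = -(T.card : ℤ) := by
      have e1 : ∑ j ∈ T, g T j = ∑ _j ∈ T, (-1 : ℤ) :=
        Finset.sum_congr rfl (fun j hj => by simp [g, hj])
      rw [e1]; simp
    have h2 : ∑ j ∈ Tᶜ, g T j = ((Tᶜ.card : ℤ)) := by
      have e2 : ∑ j ∈ Tᶜ, g T j = ∑ _j ∈ Tᶜ, (1 : ℤ) :=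
        Finset.sum_congr rfl (fun j hj => by simp [g, Finset.mem_compl.mp hj])
      rw [e2]; simp
    have hcard : T.card ≤ n := by
      simpa using Finset.card_le_univ T
    rw [← Finset.sum_add_sum_compl T (g T), h1, h2, Finset.card_compl]
    simp only [Fintype.card_fin]
    omega
  refine ⟨Finset.image ψ ((Finset.univ : Finset (Finset (Fin n))).filter
    (fun T => T.card < k)), ?_⟩
  rw [Finset.sum_image (fun a _ b _ h => hinj h)]
  have step1 : ∀ T ∈ (Finset.univ : Finset (Finset (Fin n))).filter
      (fun T => T.card < k), ∑ j, φ (ψ T) j = (n : ℤ) - 2 * T.card := by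
    intro T _
    rw [hψ T]; exact hrow T
  rw [Finset.sum_congr rfl step1]
  have maps : ∀ T ∈ (Finset.univ : Finset (Finset (Fin n))).filter
      (fun T => T.card < k), T.card ∈ Finset.range k := by
    intro T hT
    simp only [Finset.mem_filter] at hT
    exact Finset.mem_range.mpr hT.2
  rw [← Finset.sum_fiberwise_of_maps_to maps]
  have fib : ∀ t ∈ Finset.range k,
      ∑ T ∈ ((Finset.univ : Finset (Finset (Fin n))).filter
        (fun T => T.card < k)).filter (fun T => T.card = t),
        ((n : ℤ) - 2 * T.card) = ((n : ℤ) - 2 * t) * (Nat.choose n t : ℤ) := by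
    intro t ht
    have ht' := Finset.mem_range.mp ht
    have hset : ((Finset.univ : Finset (Finset (Fin n))).filter
        (fun T => T.card < k)).filter (fun T => T.card = t)
        = (Finset.univ : Finset (Finset (Fin n))).filter (fun T => T.card = t) := by
      ext T
      simp only [Finset.mem_filter, Finset.mem_univ, true_and]
      constructor
      · rintro ⟨_, h⟩; exact h
      · intro h; exact ⟨h.le.trans_lt ht', h⟩
    rw [hset]
    have hconst : ∀ T ∈ (Finset.univ : Finset (Finset (Fin n))).filter
        (fun T => T.card = t), ((n : ℤ) - 2 * T.card) = (n : ℤ) - 2 * t := by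
      intro T hT
      simp only [Finset.mem_filter] at hT
      rw [hT.2]
    rw [Finset.sum_congr rfl hconst, Finset.sum_const, nsmul_eq_mul]
    have hcardset : ((Finset.univ : Finset (Finset (Fin n))).filter
        (fun T => T.card = t)).card = Nat.choose n t := by
      rw [← Finset.powerset_univ, ← Finset.powersetCard_eq_filter,
        Finset.card_powersetCard]
      simp
    rw [hcardset]
    ring
  rw [Finset.sum_congr rfl fib]
  exact stmt_3_sum_id n k hkn
end

section
/- Let n be a positive integer and let φ be a bijection from Fin (2^n) onto the set of all functions from Fin n to {−1, 1} ⊆ ℤ. For every nonempty subset B ⊆ Fin n with |B| = k and m = ⌈k/2⌉, the maximum over all subsets A ⊆ Fin (2^n) of |σ(A,B)| / (n · 2^n) equals ⌈k/2⌉ · binom(k, ⌈k/2⌉) / (n · 2^k), which equals (m/n) · binom(2m, m) / 4^m; moreover this value is strictly greater than m / (n · √(π(m+1))) and strictly less than m / (n · √(πm)). -/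
open Real.Wallis in
lemma qW (m : ℕ) : ((Nat.choose (2*m) m : ℝ)/4^m)^2 * (2*m+1) * W m = 1 := by
  have hfac : (Nat.choose (2*m) m : ℝ) * (m.factorial * m.factorial) = (2*m).factorial := by
    have h := Nat.choose_mul_factorial_mul_factorial (show m ≤ 2*m by omega)
    rw [show 2*m - m = m by omega] at h
    push_cast [← h]; ring
  rw [W_eq_factorial_ratio]
  have h1 : (m.factorial : ℝ) ≠ 0 := by positivity
  have h2 : ((2*m).factorial : ℝ) ≠ 0 := by positivity
  have h3 : ((2:ℝ)^(4*m)) = 4^m * 4^m := by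
    rw [show 4*m = (2*m)+(2*m) by ring, pow_add]; norm_num [pow_mul]
  have h4 : (0:ℝ) < 2*m+1 := by positivity
  field_simp
  rw [h3]
  push_cast
  rw [← hfac]; ring

open Real.Wallis in
lemma cb_bounds (m : ℕ) :
    1 < Real.pi * (((Nat.choose (2*m) m : ℝ)/4^m)^2 * (m+1)) ∧
    Real.pi * (((Nat.choose (2*m) m : ℝ)/4^m)^2 * m) < 1 := by
  set c : ℝ := ((Nat.choose (2*m) m : ℝ)/4^m) with hc
  have hq := qW m
  have hW := W_pos m
  have hpi := Real.pi_pos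
  constructor
  · -- lower bound
    have hWlt : W m < Real.pi/2 := by
      have h1 : W m < W (m+1) := by
        rw [W_succ]
        have : (1:ℝ) < (2 * m + 2) / (2 * m + 1) * ((2 * m + 2) / (2 * m + 3)) := by
          rw [div_mul_div_comm, lt_div_iff₀ (by positivity)]
          push_cast; nlinarith
        nlinarith
      exact lt_of_lt_of_le h1 (W_le (m+1))
    -- 1 = c^2 (2m+1) W m < c^2 (2m+1) π/2
    have hcpos : 0 < c := by
      rw [hc]
      have := Nat.choose_pos (show m ≤ 2*m by omega)
      positivity
    rw [← hc] at hq
    nlinarith [hq, hWlt, mul_pos (pow_pos hcpos 2) (show (0:ℝ) < 2*m+1 by positivity), hpi]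
  · -- upper bound
    have hle := le_W m
    have hle' : ((2:ℝ)*m+1)*Real.pi ≤ W m * (2*(2*m+2)) := by
      rw [div_mul_eq_mul_div, div_le_iff₀ (by positivity)] at hle
      nlinarith [hle]
    have key := mul_le_mul_of_nonneg_left hle' (sq_nonneg c)
    rw [← hc] at hq
    have hcpos : 0 < c := by
      rw [hc]
      have := Nat.choose_pos (show m ≤ 2*m by omega)
      positivity
    have hA : 0 < c^2 * W m := mul_pos (pow_pos hcpos 2) hW
    have key2 := mul_le_mul_of_nonneg_left key (Nat.cast_nonneg (α := ℝ) m)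
    nlinarith [key2, hq, hA, mul_pos hA (show (0:ℝ) < 2*m+1 by positivity)]

-- Lemma D: sum over boolean functions by count
lemma sumBool {α : Type*} [Fintype α] [DecidableEq α] (g : ℕ → ℤ) :
    ∑ c : α → Bool, g ((Finset.univ.filter (fun x => c x = true)).card)
      = ∑ j ∈ Finset.range (Fintype.card α + 1), (Nat.choose (Fintype.card α) j : ℤ) * g j := by
  have hbij : Function.Bijective
      (fun c : α → Bool => Finset.univ.filter (fun x => c x = true)) := by
    rw [Fintype.bijective_iff_injective_and_card]
    constructor
    · intro c c' h
      funext x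
      have hx := Finset.ext_iff.1 h x
      simp only [Finset.mem_filter, Finset.mem_univ, true_and] at hx
      cases hcx : c x <;> cases hcx' : c' x <;> simp_all
    · simp [Fintype.card_finset, Fintype.card_fun]
  have h1 : ∑ c : α → Bool, g ((Finset.univ.filter (fun x => c x = true)).card)
      = ∑ T : Finset α, g T.card :=
    Fintype.sum_bijective _ hbij _ _ (fun c => rfl)
  rw [h1, ← Finset.powerset_univ, Finset.sum_powerset_apply_card]
  simp [Finset.card_univ, nsmul_eq_mul]

-- Lemma C: sum over boolean functions on Fin n, filtered on B
lemma sumBoolFin {n : ℕ} (B : Finset (Fin n)) (g : ℕ → ℤ) :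
    ∑ b : Fin n → Bool, g ((B.filter (fun j => b j = true)).card)
      = 2^(n - B.card) * ∑ j ∈ Finset.range (B.card + 1), (Nat.choose B.card j : ℤ) * g j := by
  classical
  have hcard : ∀ b : Fin n → Bool,
      (B.filter (fun j => b j = true)).card
        = ((Finset.univ : Finset {x // x ∈ B}).filter (fun x => b x.1 = true)).card := by
    intro b
    rw [Finset.univ_eq_attach, Finset.filter_attach (fun j => b j = true) B,
      Finset.card_map, Finset.card_attach]
  let e := Equiv.piEquivPiSubtypeProd (fun j => j ∈ B) (fun _ : Fin n => Bool)
  have h1 : ∑ b : Fin n → Bool, g ((B.filter (fun j => b j = true)).card)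
      = ∑ p : ({x // x ∈ B} → Bool) × ({x // ¬ x ∈ B} → Bool),
          g (((Finset.univ : Finset {x // x ∈ B}).filter (fun x => p.1 x = true)).card) := by
    apply Fintype.sum_equiv e
    intro b
    rw [hcard b]
    rfl
  rw [h1, Fintype.sum_prod_type]
  have h2 : ∀ c : {x // x ∈ B} → Bool,
      ∑ _d : {x // ¬ x ∈ B} → Bool,
        g (((Finset.univ : Finset {x // x ∈ B}).filter (fun x => c x = true)).card)
      = (2^(n - B.card) : ℤ) *
        g (((Finset.univ : Finset {x // x ∈ B}).filter (fun x => c x = true)).card) := by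
    intro c
    rw [Finset.sum_const, Finset.card_univ, Fintype.card_fun, Fintype.card_bool,
      Fintype.card_subtype_compl, Fintype.card_coe, Fintype.card_fin, nsmul_eq_mul]
    push_cast
    ring
  rw [Finset.sum_congr rfl (fun c _ => h2 c), ← Finset.mul_sum]
  congr 1
  have := sumBool (α := {x // x ∈ B}) g
  rwa [Fintype.card_coe] at this

lemma term_id {k j : ℕ} (hj1 : 1 ≤ j) (hjk : j ≤ k) :
    (Nat.choose k j : ℤ) * (2*j - k)
      = k * Nat.choose (k-1) (j-1) - k * Nat.choose (k-1) j := by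
  have hk1 : 1 ≤ k := hj1.trans hjk
  have h1 : j * Nat.choose k j = k * Nat.choose (k-1) (j-1) := by
    have h := Nat.add_one_mul_choose_eq (k-1) (j-1)
    rw [Nat.sub_add_cancel hk1,
      Nat.sub_add_cancel hj1] at h
    rw [mul_comm]; exact h.symm
  have h2 : (k - j) * Nat.choose k j = k * Nat.choose (k-1) j := by
    rcases eq_or_lt_of_le hjk with rfl | hlt
    · simp [Nat.choose_eq_zero_of_lt (show j-1 < j by omega)]
    · have e1 : Nat.choose k j = Nat.choose k (k-j) := (Nat.choose_symm hjk).symm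
      have e2 : (k-j) * Nat.choose k (k-j) = k * Nat.choose (k-1) (k-j-1) := by
        have h := Nat.add_one_mul_choose_eq (k-1) (k-j-1)
        rw [Nat.sub_add_cancel hk1,
          (show k-j-1+1 = k-j by omega)] at h
        rw [mul_comm]; exact h.symm
      have e3 : Nat.choose (k-1) (k-j-1) = Nat.choose (k-1) j := by
        have h := Nat.choose_symm (show j ≤ k-1 by omega)
        rwa [show k-1-j = k-j-1 by omega] at h
      rw [e1, e2, e3]
  zify at h1
  zify [hjk] at h2
  linear_combination h1 - h2

lemma sumE {k m : ℕ} (hk1 : 1 ≤ k) (hm : 2*m ≥ k ∧ 2*m ≤ k+1) :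
    ∑ j ∈ Finset.range (k+1), (Nat.choose k j : ℤ) * max (2*(j:ℤ) - k) 0
      = m * Nat.choose k m := by
  obtain ⟨hm1, hm2⟩ := hm
  have hm1' : 1 ≤ m := by omega
  have hmk : m ≤ k := by omega
  rw [Finset.range_eq_Ico, ← Finset.sum_Ico_consecutive _ (Nat.zero_le m) (by omega : m ≤ k+1),
    ← Finset.range_eq_Ico]
  have hz : ∑ j ∈ Finset.range m, (Nat.choose k j : ℤ) * max (2*(j:ℤ) - k) 0 = 0 := by
    apply Finset.sum_eq_zero
    intro j hj
    have hj' : j < m := Finset.mem_range.1 hj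
    have : (2*(j:ℤ) - k) ≤ 0 := by push_cast; omega
    rw [max_eq_right this, mul_zero]
  rw [hz, zero_add]
  have hpos : ∀ j ∈ Finset.Ico m (k+1),
      (Nat.choose k j : ℤ) * max (2*(j:ℤ) - k) 0 = (Nat.choose k j : ℤ) * (2*(j:ℤ) - k) := by
    intro j hj
    obtain ⟨h1, h2⟩ := Finset.mem_Ico.1 hj
    have : (0:ℤ) ≤ 2*(j:ℤ) - k := by push_cast; omega
    rw [max_eq_left this]
  rw [Finset.sum_congr rfl hpos, Finset.sum_Ico_eq_sum_range]
  have hterm : ∀ i ∈ Finset.range (k+1-m),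
      (Nat.choose k (m+i) : ℤ) * (2*((m+i:ℕ):ℤ) - k)
        = (fun i => (k:ℤ) * Nat.choose (k-1) (m-1+i)) i
          - (fun i => (k:ℤ) * Nat.choose (k-1) (m-1+i)) (i+1) := by
    intro i hi
    have hi' : i < k+1-m := Finset.mem_range.1 hi
    have h := term_id (k := k) (j := m+i) (by omega) (by omega)
    simp only []
    rw [show m-1+i = m+i-1 by omega, show m-1+(i+1) = m+i by omega]
    rw [← h]
  rw [Finset.sum_congr rfl hterm, Finset.sum_range_sub']
  rw [show m-1+(k+1-m) = k by omega, Nat.choose_eq_zero_of_lt (show k-1 < k by omega),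
    add_zero]
  have h := Nat.add_one_mul_choose_eq (k-1) (m-1)
  rw [Nat.sub_add_cancel hk1,
    Nat.sub_add_cancel hm1'] at h
  push_cast
  rw [mul_zero, sub_zero]
  exact_mod_cast h.trans (Nat.mul_comm _ _)

lemma ceil_half (k : ℕ) : ⌈(k : ℚ)/2⌉₊ = (k+1)/2 := by
  rcases Nat.even_or_odd k with ⟨t, rfl⟩ | ⟨t, rfl⟩
  · have h : ((t+t : ℕ) : ℚ)/2 = (t : ℚ) := by push_cast; ring
    rw [h, Nat.ceil_natCast]
    omega
  · have h1 : ⌈((2*t+1 : ℕ) : ℚ)/2⌉₊ ≤ t+1 := by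
      rw [Nat.ceil_le]
      push_cast
      rw [div_le_iff₀ (by norm_num : (0:ℚ) < 2)]
      linarith
    have h2 : t < ⌈((2*t+1 : ℕ) : ℚ)/2⌉₊ := by
      rw [Nat.lt_ceil]
      push_cast
      rw [lt_div_iff₀ (by norm_num : (0:ℚ) < 2)]
      linarith
    omega




theorem stmt_4 (n : ℕ) (hn : 0 < n) (φ : Fin (2 ^ n) → Fin n → ℤ)
    (hφ : ∀ s j, φ s j = -1 ∨ φ s j = 1)
    (hbij : ∀ g : Fin n → ℤ, (∀ j, g j = -1 ∨ g j = 1) → ∃! s, φ s = g)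
    (B : Finset (Fin n)) (hB : B.Nonempty) (k m : ℕ) (hk : k = B.card)
    (hm : m = ⌈(k : ℚ) / 2⌉₊) :
    IsGreatest {x : ℝ | ∃ A : Finset (Fin (2 ^ n)),
        x = |(∑ s ∈ A, ∑ j ∈ B, φ s j : ℤ)| / (n * 2 ^ n)}
      ((⌈(k : ℚ) / 2⌉₊ * Nat.choose k ⌈(k : ℚ) / 2⌉₊ : ℝ) / (n * 2 ^ k)) ∧
    ((⌈(k : ℚ) / 2⌉₊ * Nat.choose k ⌈(k : ℚ) / 2⌉₊ : ℝ) / (n * 2 ^ k)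
      = ((m : ℝ) / n) * (Nat.choose (2 * m) m : ℝ) / 4 ^ m) ∧
    ((m : ℝ) / (n * Real.sqrt (Real.pi * (m + 1)))
      < (⌈(k : ℚ) / 2⌉₊ * Nat.choose k ⌈(k : ℚ) / 2⌉₊ : ℝ) / (n * 2 ^ k)) ∧
    ((⌈(k : ℚ) / 2⌉₊ * Nat.choose k ⌈(k : ℚ) / 2⌉₊ : ℝ) / (n * 2 ^ k)
      < (m : ℝ) / (n * Real.sqrt (Real.pi * m))) := by
  rw [← hm]
  have hk1 : 1 ≤ k := hk ▸ Finset.card_pos.2 hB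
  have hkn : k ≤ n := by
    rw [hk]
    simpa using Finset.card_le_univ B
  have hmk : 2*m ≥ k ∧ 2*m ≤ k+1 := by
    rw [hm, ceil_half]; omega
  have hm1 : 1 ≤ m := by omega
  -- the sign function attached to a boolean function
  set ψ : (Fin n → Bool) → Fin n → ℤ := fun b j => if b j then (1:ℤ) else -1 with hψ
  have hψsign : ∀ b j, ψ b j = -1 ∨ ψ b j = 1 := by
    intro b j; by_cases h : b j <;> simp [hψ, h]
  have hψneg : ∀ b j, ψ (fun j => !(b j)) j = -ψ b j := by
    intro b j; by_cases h : b j <;> simp [hψ, h]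
  -- the bijection
  have hex : ∀ b, ∃ s, φ s = ψ b := fun b => (hbij (ψ b) (hψsign b)).exists
  choose f hf using hex
  have hfbij : Function.Bijective f := by
    constructor
    · intro b b' h
      have hψeq : ψ b = ψ b' := by rw [← hf b, ← hf b', h]
      funext j
      have := congrFun hψeq j
      by_cases h1 : b j <;> by_cases h2 : b' j <;> simp [hψ, h1, h2] at this ⊢ <;> omega
    · intro s
      refine ⟨fun j => decide (φ s j = 1), ?_⟩
      have hψs : ψ (fun j => decide (φ s j = 1)) = φ s := by
        funext j
        rcases hφ s j with h | h <;> simp [hψ, h]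
      exact (hbij (φ s) (hφ s)).unique (by rw [hf, hψs]) rfl
  -- transfer of sums
  have htrans : ∀ F : ℤ → ℤ,
      ∑ b : Fin n → Bool, F (∑ j ∈ B, ψ b j) = ∑ s : Fin (2^n), F (∑ j ∈ B, φ s j) := by
    intro F
    exact Fintype.sum_bijective f hfbij _ _ (fun b => by rw [hf])
  -- the integer maximum
  set Mi : ℤ := ∑ s : Fin (2^n), max (∑ j ∈ B, φ s j) 0 with hMi
  have hMi0 : 0 ≤ Mi := Finset.sum_nonneg (fun s _ => le_max_right _ _)
  -- negation symmetry
  have hneg : ∑ s : Fin (2^n), max (-∑ j ∈ B, φ s j) 0 = Mi := by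
    rw [hMi, ← htrans (fun t => max (-t) 0), ← htrans (fun t => max t 0)]
    exact Fintype.sum_bijective (fun b j => !(b j))
      (Function.Involutive.bijective (fun b => by funext j; simp))
      _ _ (fun b => by
        congr 1
        rw [← Finset.sum_neg_distrib]
        exact Finset.sum_congr rfl (fun j _ => (hψneg b j).symm))
  -- upper bound
  have hub : ∀ A : Finset (Fin (2^n)), |∑ s ∈ A, ∑ j ∈ B, φ s j| ≤ Mi := by
    intro A
    rw [abs_le]
    constructor
    · rw [neg_le, ← Finset.sum_neg_distrib]
      calc ∑ s ∈ A, -∑ j ∈ B, φ s j ≤ ∑ s ∈ A, max (-∑ j ∈ B, φ s j) 0 :=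
            Finset.sum_le_sum (fun s _ => le_max_left _ _)
        _ ≤ ∑ s : Fin (2^n), max (-∑ j ∈ B, φ s j) 0 :=
            Finset.sum_le_sum_of_subset_of_nonneg (Finset.subset_univ A)
              (fun s _ _ => le_max_right _ _)
        _ = Mi := hneg
    · calc ∑ s ∈ A, ∑ j ∈ B, φ s j ≤ ∑ s ∈ A, max (∑ j ∈ B, φ s j) 0 :=
            Finset.sum_le_sum (fun s _ => le_max_left _ _)
        _ ≤ Mi := Finset.sum_le_sum_of_subset_of_nonneg (Finset.subset_univ A)
              (fun s _ _ => le_max_right _ _)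
  -- achievability
  have hach : ∑ s ∈ Finset.univ.filter (fun s => 0 < ∑ j ∈ B, φ s j), ∑ j ∈ B, φ s j = Mi := by
    rw [hMi, Finset.sum_filter]
    apply Finset.sum_congr rfl
    intro s _
    rcases lt_or_ge 0 (∑ j ∈ B, φ s j) with h | h
    · rw [if_pos h, max_eq_left h.le]
    · rw [if_neg (not_lt.2 h), max_eq_right h]
  -- value of Mi
  have hMival : Mi = 2^(n-k) * (m * Nat.choose k m) := by
    rw [hMi, ← htrans (fun t => max t 0)]
    have hY : ∀ b : Fin n → Bool, (∑ j ∈ B, ψ b j)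
        = 2*((B.filter (fun j => b j = true)).card : ℤ) - B.card := by
      intro b
      have : ∀ j ∈ B, ψ b j = 2*(if b j = true then (1:ℤ) else 0) - 1 := by
        intro j _; by_cases h : b j <;> simp [hψ, h]
      rw [Finset.sum_congr rfl this, Finset.sum_sub_distrib, ← Finset.mul_sum,
        Finset.sum_boole, Finset.sum_const, nsmul_eq_mul, mul_one]
    have h1 : ∀ b : Fin n → Bool, max (∑ j ∈ B, ψ b j) 0
        = (fun t => max (2*(t:ℤ) - B.card) 0) ((B.filter (fun j => b j = true)).card) := by
      intro b; rw [hY b]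
    rw [Finset.sum_congr rfl (fun b _ => h1 b), sumBoolFin B (fun t => max (2*(t:ℤ) - B.card) 0)]
    rw [← hk]
    rw [sumE hk1 hmk]
  -- the real value identity
  have hpow : (2:ℝ)^n = 2^(n-k) * 2^k := by rw [← pow_add, Nat.sub_add_cancel hkn]
  have hnR : (0:ℝ) < n := Nat.cast_pos.2 hn
  have hval : ((Mi : ℤ) : ℝ) / (n * 2^n) = ((m * Nat.choose k m : ℕ) : ℝ) / (n * 2^k) := by
    rw [hMival]
    push_cast
    rw [hpow]
    field_simp
  -- target rewriting: the goal's expression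
  have hgoalval : ((m : ℝ) * (Nat.choose k m : ℝ)) / (n * 2^k)
      = ((Mi : ℤ) : ℝ) / (n * 2^n) := by rw [hval]; push_cast; ring
  -- Part 2 identity
  have hId : ((m : ℝ) * (Nat.choose k m : ℝ)) / (n * 2^k)
      = ((m : ℝ) / n) * (Nat.choose (2*m) m : ℝ) / 4^m := by
    have hcase : k = 2*m ∨ k + 1 = 2*m := by omega
    rcases hcase with hc | hc
    · rw [hc]
      have h4 : (4:ℝ)^m = 2^(2*m) := by
        rw [show (4:ℝ) = 2^2 by norm_num, ← pow_mul]
      rw [h4]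
      have h2 : ((2:ℝ))^(2*m) ≠ 0 := by positivity
      field_simp
    · have hsym : Nat.choose k (m-1) = Nat.choose k m := by
        have h := Nat.choose_symm (show m ≤ k by omega)
        rwa [show k - m = m - 1 by omega] at h
      have h := Nat.add_one_mul_choose_eq k (m-1)
      rw [Nat.sub_add_cancel hm1, hc, hsym] at h
      have hC : Nat.choose (2*m) m = 2 * Nat.choose k m := by
        apply Nat.eq_of_mul_eq_mul_left (show 0 < m by omega)
        rw [mul_comm m, ← h]
        ring
      have h4 : (4:ℝ)^m = 2 * 2^k := by
        rw [show (4:ℝ) = 2^2 by norm_num, ← pow_mul, show 2*m = k+1 by omega, pow_succ]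
        ring
      rw [hC, h4]
      push_cast
      field_simp
  -- common positivity facts
  have hmR : (0:ℝ) < m := by exact_mod_cast hm1
  have hcpos : (0:ℝ) < (Nat.choose (2*m) m : ℝ)/4^m := by
    have := Nat.choose_pos (show m ≤ 2*m by omega)
    positivity
  set c : ℝ := (Nat.choose (2*m) m : ℝ)/4^m with hc
  obtain ⟨hlow, hupp⟩ := cb_bounds m
  rw [← hc] at hlow hupp
  refine ⟨⟨⟨Finset.univ.filter (fun s => 0 < ∑ j ∈ B, φ s j), ?_⟩, ?_⟩, hId, ?_, ?_⟩
  · -- membership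
    rw [hgoalval, hach, abs_of_nonneg hMi0]
  · -- upper bound
    rintro x ⟨A, rfl⟩
    rw [hgoalval]
    gcongr
    exact_mod_cast hub A
  · -- lower strict bound
    rw [hId]
    have hSpos : (0:ℝ) < Real.sqrt (Real.pi * (m+1)) := by
      apply Real.sqrt_pos.2; positivity
    have key : 1 / Real.sqrt (Real.pi * (m+1)) < c := by
      rw [div_lt_iff₀ hSpos]
      have h1 : (1:ℝ) < Real.sqrt (c^2 * (Real.pi * (m+1))) := by
        rw [show c^2 * (Real.pi * ((m:ℝ)+1)) = Real.pi * (c^2*((m:ℝ)+1)) by ring]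
        apply (Real.lt_sqrt (by norm_num)).2
        rw [one_pow]
        exact hlow
      rw [Real.sqrt_mul (sq_nonneg c), Real.sqrt_sq hcpos.le] at h1
      exact h1
    calc (m:ℝ) / (n * Real.sqrt (Real.pi * (m+1)))
        = ((m:ℝ)/n) * (1 / Real.sqrt (Real.pi * (m+1))) := by ring
      _ < ((m:ℝ)/n) * c := by
          exact mul_lt_mul_of_pos_left key (by positivity)
      _ = ((m:ℝ)/n) * (Nat.choose (2*m) m : ℝ) / 4^m := by rw [hc]; ring
  · -- upper strict bound
    rw [hId]
    have hSpos : (0:ℝ) < Real.sqrt (Real.pi * m) := by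
      apply Real.sqrt_pos.2
      have := Real.pi_pos
      positivity
    have key : c < 1 / Real.sqrt (Real.pi * m) := by
      rw [lt_div_iff₀ hSpos]
      have h1 : Real.sqrt (c^2 * (Real.pi * m)) < 1 := by
        rw [show c^2 * (Real.pi * (m:ℝ)) = Real.pi * (c^2*(m:ℝ)) by ring]
        apply (Real.sqrt_lt' (by norm_num)).2
        rw [one_pow]
        exact hupp
      rw [Real.sqrt_mul (sq_nonneg c), Real.sqrt_sq hcpos.le] at h1
      exact h1
    calc ((m:ℝ)/n) * (Nat.choose (2*m) m : ℝ) / 4^m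
        = ((m:ℝ)/n) * c := by rw [hc]; ring
      _ < ((m:ℝ)/n) * (1 / Real.sqrt (Real.pi * m)) := by
          exact mul_lt_mul_of_pos_left key (by positivity)
      _ = (m:ℝ) / (n * Real.sqrt (Real.pi * m)) := by ring
end

section
/- For every positive integer m, 2m · binom(2m, m)^2 / 4^{2m} = (1/2) · ∏_{i=1}^{m−1} (1 + 1/(4i(i+1))); the sequence m ↦ 2m · binom(2m, m)^2 / 4^{2m} is strictly increasing and converges to 2/π as m → ∞. -/
open Filter Real Nat

noncomputable def f6 (m : ℕ) : ℝ :=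
  (2 * m : ℝ) * (Nat.choose (2 * m) m : ℝ) ^ 2 / 4 ^ (2 * m)

lemma choose_fact (n : ℕ) :
    ((Nat.choose (2 * n) n : ℝ)) * (n ! : ℝ) * (n ! : ℝ) = ((2 * n)! : ℝ) := by
  have h := Nat.choose_mul_factorial_mul_factorial (show n ≤ 2 * n by omega)
  rw [show 2 * n - n = n by omega] at h
  exact_mod_cast congrArg (Nat.cast : ℕ → ℝ) h

lemma f6_succ (m : ℕ) (hm : 0 < m) :
    f6 (m + 1) = f6 m * (1 + 1 / (4 * (m : ℝ) * (m + 1))) := by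
  unfold f6
  have h2m : 2 * (m + 1) = 2 * m + 2 := by ring
  rw [h2m]
  have h1 := choose_fact m
  have h2 := choose_fact (m + 1)
  rw [h2m] at h2
  set a : ℝ := (Nat.choose (2 * m) m : ℝ)
  set b : ℝ := (Nat.choose (2 * m + 2) (m + 1) : ℝ)
  have hM : (m ! : ℝ) ≠ 0 := by positivity
  have hfact : ((m + 1)! : ℝ) = ((m : ℝ) + 1) * (m ! : ℝ) := by
    rw [Nat.factorial_succ]; push_cast; ring
  have hfact2 : ((2 * m + 2)! : ℝ) = (2 * (m : ℝ) + 2) * (2 * m + 1) * ((2 * m)! : ℝ) := by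
    rw [show 2 * m + 2 = (2 * m + 1) + 1 by ring, Nat.factorial_succ, Nat.factorial_succ]
    push_cast; ring
  rw [hfact, hfact2, ← h1] at h2
  have hm1 : ((m : ℝ) + 1) ≠ 0 := by positivity
  have hc : ((m : ℝ) + 1) * ((m ! : ℝ) * (m ! : ℝ)) ≠ 0 :=
    mul_ne_zero hm1 (mul_ne_zero hM hM)
  have hb : b * ((m : ℝ) + 1) = 2 * (2 * (m : ℝ) + 1) * a := by
    apply mul_right_cancel₀ hc
    linear_combination h2
  have hmr : (m : ℝ) ≠ 0 := Nat.cast_ne_zero.mpr hm.ne'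
  push_cast
  rw [show (4:ℝ) ^ (2 * m + 2) = 4 ^ (2 * m) * 16 by rw [pow_add]; norm_num]
  have h4 : (4:ℝ) ^ (2 * m) ≠ 0 := by positivity
  field_simp
  linear_combination (4 * (b * ((m : ℝ) + 1) + 2 * (2 * (m : ℝ) + 1) * a)) * hb

lemma f6_prod (m : ℕ) (hm : 0 < m) :
    f6 m = (1 / 2) * ∏ i ∈ Finset.Icc 1 (m - 1), (1 + 1 / (4 * (i : ℝ) * (i + 1))) := by
  induction m with
  | zero => omega
  | succ n ih =>
    rcases Nat.eq_zero_or_pos n with hn | hn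
    · subst hn
      simp [f6]
      norm_num
    · rw [f6_succ n hn, ih hn]
      rw [show n + 1 - 1 = (n - 1) + 1 by omega]
      rw [Finset.prod_Icc_succ_top (by omega)]
      rw [show ((n - 1 : ℕ) + 1 : ℕ) = n by omega]
      ring

lemma f6_pos (m : ℕ) (hm : 0 < m) : 0 < f6 m := by
  unfold f6
  have : 0 < Nat.choose (2 * m) m := Nat.choose_pos (by omega)
  have : (0:ℝ) < (Nat.choose (2 * m) m : ℝ) := by exact_mod_cast this
  positivity

lemma f6_mono : StrictMonoOn f6 (Set.Ici 1) := by
  intro a ha b hb hab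
  simp only [Set.mem_Ici] at ha hb
  have key : ∀ n, 1 ≤ n → f6 n < f6 (n + 1) := by
    intro n hn
    rw [f6_succ n hn]
    have hp := f6_pos n hn
    have : (1:ℝ) < 1 + 1 / (4 * (n : ℝ) * (n + 1)) := by
      have : (0:ℝ) < 1 / (4 * (n : ℝ) * (n + 1)) := by
        have : (0:ℝ) < (n:ℝ) := by exact_mod_cast hn
        positivity
      linarith
    nlinarith
  have main : ∀ b, a < b → f6 a < f6 b := by
    intro b
    induction b with
    | zero => omega
    | succ n ih =>
      intro h
      rcases Nat.lt_or_ge a n with h' | h'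
      · exact (ih h').trans (key n (by omega))
      · have : a = n := by omega
        subst this
        exact key a ha
  exact main b hab

lemma f6_eq_W (n : ℕ) :
    f6 n = (2 * n : ℝ) / (2 * n + 1) * (Real.Wallis.W n)⁻¹ := by
  rw [Real.Wallis.W_eq_factorial_ratio]
  have h1 := choose_fact n
  have hM : (n ! : ℝ) ≠ 0 := by positivity
  have hF : ((2 * n)! : ℝ) ≠ 0 := by positivity
  have h2 : (0:ℝ) < 2 * (n:ℝ) + 1 := by positivity
  unfold f6
  rw [show (4:ℝ) ^ (2 * n) = 2 ^ (4 * n) by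
    rw [show (4:ℝ) = 2 ^ 2 by norm_num, ← pow_mul, show 2 * (2 * n) = 4 * n by ring]]
  have h3 : ((Nat.choose (2 * n) n : ℝ)) = ((2 * n)! : ℝ) / ((n ! : ℝ) * (n ! : ℝ)) := by
    field_simp
    linarith [h1]
  rw [h3]
  have h2n : (0:ℝ) < 2 ^ (4 * n) := by positivity
  field_simp

theorem stmt_6 :
    (∀ m : ℕ, 0 < m →
      ((2 * m : ℝ) * (Nat.choose (2 * m) m : ℝ) ^ 2 / 4 ^ (2 * m)
        = (1 / 2) * ∏ i ∈ Finset.Icc 1 (m - 1), (1 + 1 / (4 * (i : ℝ) * (i + 1))))) ∧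
    StrictMonoOn
      (fun m : ℕ => (2 * m : ℝ) * (Nat.choose (2 * m) m : ℝ) ^ 2 / 4 ^ (2 * m))
      (Set.Ici 1) ∧
    Filter.Tendsto
      (fun m : ℕ => (2 * m : ℝ) * (Nat.choose (2 * m) m : ℝ) ^ 2 / 4 ^ (2 * m))
      Filter.atTop (nhds (2 / Real.pi)) := by
  refine ⟨fun m hm => f6_prod m hm, f6_mono, ?_⟩
  have hW : Tendsto (fun n => (Real.Wallis.W n)⁻¹) atTop (nhds (π / 2)⁻¹) :=
    (Real.Wallis.tendsto_W_nhds_pi_div_two).inv₀ (by positivity)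
  have hr : Tendsto (fun n : ℕ => (2 * n : ℝ) / (2 * n + 1)) atTop (nhds 1) := by
    have hat : Tendsto (fun n : ℕ => 2 * (n:ℝ) + 1) atTop atTop := by
      apply Filter.tendsto_atTop_add_const_right
      exact (tendsto_natCast_atTop_atTop (R := ℝ)).const_mul_atTop (by norm_num)
    have h0 : Tendsto (fun n : ℕ => (2 * (n:ℝ) + 1)⁻¹) atTop (nhds 0) :=
      hat.inv_tendsto_atTop
    have := (tendsto_const_nhds (x := (1:ℝ)) (f := atTop)).sub h0
    rw [sub_zero] at this
    refine this.congr fun n => ?_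
    have hne : (2*(n:ℝ)+1) ≠ 0 := by positivity
    field_simp
    ring
  have := hr.mul hW
  rw [one_mul] at this
  have hval : (π / 2)⁻¹ = 2 / π := by
    rw [inv_div]
  rw [hval] at this
  exact this.congr (fun n => (f6_eq_W n).symm)
end

section
/- For every positive integer m, 4^m / √(π(m+1)) < binom(2m, m) < 4^m / √(πm). -/
open Filter Real Nat Topology

noncomputable def cseq (m : ℕ) : ℝ := (Nat.centralBinom m : ℝ) / 4 ^ m

lemma cseq_pos (m : ℕ) : 0 < cseq m := by
  have := Nat.centralBinom_pos m
  unfold cseq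
  positivity

lemma cseq_succ_mul (m : ℕ) :
    cseq (m + 1) * (2 * m + 2) = cseq m * (2 * m + 1) := by
  have h := Nat.succ_mul_centralBinom_succ m
  have h' : ((m : ℝ) + 1) * (Nat.centralBinom (m + 1) : ℝ)
      = 2 * (2 * m + 1) * Nat.centralBinom m := by exact_mod_cast h
  unfold cseq
  have h4 : (4 : ℝ) ^ m ≠ 0 := by positivity
  field_simp
  ring_nf
  ring_nf at h'
  linear_combination (2 * (4:ℝ)^m) * h'

noncomputable def bseq (m : ℕ) : ℝ := m * (cseq m) ^ 2
noncomputable def dseq (m : ℕ) : ℝ := (m + 1) * (cseq m) ^ 2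

lemma bseq_mono : StrictMono bseq := by
  apply strictMono_nat_of_lt_succ
  intro m
  have hc := cseq_pos m
  have h1sq : (cseq (m + 1) * (2 * m + 2)) ^ 2 = (cseq m * (2 * m + 1)) ^ 2 := by
    rw [cseq_succ_mul]
  unfold bseq
  push_cast
  nlinarith [h1sq, mul_pos hc hc, sq_nonneg (cseq m), sq_nonneg (cseq (m+1)),
    cseq_pos (m+1), sq_nonneg ((m:ℝ))]

lemma dseq_anti : StrictAnti dseq := by
  apply strictAnti_nat_of_succ_lt
  intro m
  have hc := cseq_pos m
  have h1sq : (cseq (m + 1) * (2 * m + 2)) ^ 2 = (cseq m * (2 * m + 1)) ^ 2 := by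
    rw [cseq_succ_mul]
  unfold dseq
  push_cast
  nlinarith [h1sq, mul_pos hc hc, sq_nonneg (cseq m), sq_nonneg (cseq (m+1)),
    cseq_pos (m+1), sq_nonneg ((m:ℝ))]

lemma cseq_sqrt_eq (m : ℕ) (hm : 0 < m) :
    cseq m * Real.sqrt m = Stirling.stirlingSeq (2 * m) / (Stirling.stirlingSeq m) ^ 2 := by
  have hm' : (0:ℝ) < m := by exact_mod_cast hm
  have hfac : ((Nat.centralBinom m : ℝ)) * (m ! : ℝ) * (m ! : ℝ) = ((2 * m)! : ℝ) := by
    have := Nat.choose_mul_factorial_mul_factorial (show m ≤ 2 * m by omega)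
    rw [Nat.centralBinom]
    have h2 : 2 * m - m = m := by omega
    rw [h2] at this
    exact_mod_cast this
  have hE : (0:ℝ) < ((m:ℝ) / Real.exp 1) ^ m := by positivity
  have hs4 : Real.sqrt (2 * ((2 * m : ℕ) : ℝ)) = 2 * Real.sqrt m := by
    push_cast
    rw [show 2 * (2 * (m:ℝ)) = 4 * m by ring, show (4:ℝ) * m = 2^2 * m by norm_num,
      Real.sqrt_mul (by positivity), Real.sqrt_sq (by norm_num)]
  have hF : (((2 * m : ℕ) : ℝ) / Real.exp 1) ^ (2 * m)
      = 4 ^ m * (((m:ℝ) / Real.exp 1) ^ m) ^ 2 := by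
    push_cast
    rw [show 2 * (m:ℝ) / Real.exp 1 = 2 * ((m:ℝ) / Real.exp 1) by ring, mul_pow,
      mul_comm 2 m, pow_mul, pow_mul, ← pow_mul, mul_comm m 2, pow_mul]
    norm_num
  have hs2 : Real.sqrt (2 * (m:ℝ)) ^ 2 = 2 * m := Real.sq_sqrt (by positivity)
  have hsm : (0:ℝ) < Real.sqrt m := Real.sqrt_pos.mpr hm'
  have hs2p : (0:ℝ) < Real.sqrt (2 * (m:ℝ)) := Real.sqrt_pos.mpr (by positivity)
  have hfm : (0:ℝ) < (m ! : ℝ) := by exact_mod_cast Nat.factorial_pos m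
  unfold Stirling.stirlingSeq cseq
  rw [hs4, hF]
  rw [eq_div_iff (by positivity), div_pow]
  field_simp
  rw [← hfac]
  ring_nf
  rw [Real.sq_sqrt hm'.le, Real.sq_sqrt (by positivity : (0:ℝ) ≤ m * 2)]
  ring

lemma tendsto_bseq : Tendsto bseq atTop (𝓝 (1 / π)) := by
  have h2m : Tendsto (fun m : ℕ => 2 * m) atTop atTop :=
    tendsto_atTop_mono (fun n => by simp [two_mul]) tendsto_id
  have h1 : Tendsto (fun m => Stirling.stirlingSeq (2 * m)) atTop (𝓝 (Real.sqrt π)) :=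
    Stirling.tendsto_stirlingSeq_sqrt_pi.comp h2m
  have h2 := Stirling.tendsto_stirlingSeq_sqrt_pi
  have hpi : (0:ℝ) < Real.sqrt π := Real.sqrt_pos.mpr pi_pos
  have h3 : Tendsto (fun m => (Stirling.stirlingSeq (2 * m) /
      (Stirling.stirlingSeq m) ^ 2) ^ 2) atTop
      (𝓝 ((Real.sqrt π / (Real.sqrt π) ^ 2) ^ 2)) :=
    (h1.div (h2.pow 2) (by positivity)).pow 2
  have hval : ((Real.sqrt π / (Real.sqrt π) ^ 2) ^ 2) = 1 / π := by
    rw [Real.sq_sqrt pi_pos.le, div_pow, Real.sq_sqrt pi_pos.le]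
    field_simp
  rw [hval] at h3
  apply h3.congr'
  filter_upwards [eventually_ge_atTop 1] with m hm
  rw [← cseq_sqrt_eq m hm]
  unfold bseq
  rw [mul_pow, Real.sq_sqrt (by positivity)]
  ring

lemma tendsto_dseq : Tendsto dseq atTop (𝓝 (1 / π)) := by
  have hcsq : Tendsto (fun m => (cseq m) ^ 2) atTop (𝓝 0) := by
    have h := tendsto_bseq.mul tendsto_one_div_atTop_nhds_zero_nat
    rw [mul_zero] at h
    apply h.congr'
    filter_upwards [eventually_ge_atTop 1] with m hm
    have hm' : (0:ℝ) < m := by exact_mod_cast hm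
    unfold bseq
    field_simp
  have h := tendsto_bseq.add hcsq
  rw [add_zero] at h
  apply h.congr
  intro m
  unfold bseq dseq
  ring

theorem stmt_7 (m : ℕ) (hm : 0 < m) :
    (4 : ℝ) ^ m / Real.sqrt (Real.pi * (m + 1)) < (Nat.choose (2 * m) m : ℝ) ∧
    (Nat.choose (2 * m) m : ℝ) < (4 : ℝ) ^ m / Real.sqrt (Real.pi * m) := by
  have hm' : (0:ℝ) < m := by exact_mod_cast hm
  have hb : bseq m < 1 / π :=
    lt_of_lt_of_le (bseq_mono (Nat.lt_succ_self m))
      (bseq_mono.monotone.ge_of_tendsto tendsto_bseq (m + 1))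
  have hd : 1 / π < dseq m :=
    lt_of_le_of_lt (dseq_anti.antitone.le_of_tendsto tendsto_dseq (m + 1))
      (dseq_anti (Nat.lt_succ_self m))
  have hcb : Nat.choose (2 * m) m = Nat.centralBinom m :=
    (Nat.centralBinom_eq_two_mul_choose m).symm
  have hA0' : (0:ℝ) < (Nat.centralBinom m : ℝ) := by
    exact_mod_cast Nat.centralBinom_pos m
  set A : ℝ := (Nat.centralBinom m : ℝ) with hA
  have hA0 : (0:ℝ) < A := hA0'
  have hP : (0:ℝ) < (4:ℝ) ^ m := by positivity
  have hbb : π * (m * (A / 4 ^ m) ^ 2) < 1 := by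
    rw [← lt_div_iff₀' pi_pos]
    exact hb
  have hdd : 1 < π * ((m + 1) * (A / 4 ^ m) ^ 2) := by
    rw [← div_lt_iff₀' pi_pos]
    exact hd
  rw [div_pow] at hbb hdd
  have h4 : (0:ℝ) < ((4:ℝ) ^ m) ^ 2 := by positivity
  rw [show π * (↑m * (A ^ 2 / (4 ^ m) ^ 2)) = (π * ↑m * A ^ 2) / ((4:ℝ) ^ m) ^ 2 by ring,
    div_lt_iff₀ h4] at hbb
  rw [show π * ((↑m + 1) * (A ^ 2 / (4 ^ m) ^ 2)) = (π * (↑m + 1) * A ^ 2) / ((4:ℝ) ^ m) ^ 2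
    by ring, lt_div_iff₀ h4] at hdd
  have hkey1 : π * m * A ^ 2 < ((4:ℝ) ^ m) ^ 2 := by linarith
  have hkey2 : ((4:ℝ) ^ m) ^ 2 < π * (m + 1) * A ^ 2 := by linarith
  constructor
  · rw [hcb]
    have hs : (0:ℝ) < Real.sqrt (π * (m + 1)) := Real.sqrt_pos.mpr (by positivity)
    rw [div_lt_iff₀ hs]
    have h2 : (A * Real.sqrt (π * (m + 1))) ^ 2 = A ^ 2 * (π * (m + 1)) := by
      rw [mul_pow, Real.sq_sqrt (by positivity)]
    nlinarith [h2, hkey2, mul_nonneg hA0.le hs.le, hP]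
  · rw [hcb]
    have hs : (0:ℝ) < Real.sqrt (π * m) := Real.sqrt_pos.mpr (by positivity)
    rw [lt_div_iff₀ hs]
    have h2 : (A * Real.sqrt (π * m)) ^ 2 = A ^ 2 * (π * m) := by
      rw [mul_pow, Real.sq_sqrt (by positivity)]
    nlinarith [h2, hkey1, mul_nonneg hA0.le hs.le, hP]
end

section
/- For every positive integer n, 1/(2√(πn)) < ⌈n/2⌉ · binom(n, ⌈n/2⌉) / (n · 2^n) < 2/√(πn). -/
lemma cbI (m : ℕ) : ((m : ℝ) + 1) * Nat.centralBinom (m + 1) =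
    2 * (2 * m + 1) * Nat.centralBinom m := by
  have := Nat.succ_mul_centralBinom_succ m
  exact_mod_cast congrArg (Nat.cast : ℕ → ℝ) this

lemma cbI2 (m : ℕ) : ((m:ℝ)+1)^2 * (Nat.centralBinom (m+1):ℝ)^2
    = 4*(2*(m:ℝ)+1)^2*(Nat.centralBinom m:ℝ)^2 := by
  have hI := cbI m
  linear_combination (((m:ℝ)+1) * Nat.centralBinom (m+1) + 2*(2*(m:ℝ)+1)*Nat.centralBinom m) * hI

lemma cb_sq_upper (m : ℕ) : (Nat.centralBinom m : ℝ)^2 * (m + 1) ≤ 16 ^ m := by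
  induction m with
  | zero => simp [Nat.centralBinom]
  | succ m IH =>
    have hI2 := cbI2 m
    have hcb2 : (0:ℝ) ≤ (Nat.centralBinom m : ℝ)^2 := sq_nonneg _
    have hpoly : 4*(2*(m:ℝ)+1)^2*((m:ℝ)+2) ≤ 16*((m:ℝ)+1)^3 := by nlinarith [Nat.cast_nonneg (α := ℝ) m]
    have hmain : ((m:ℝ)+1)^2 * ((Nat.centralBinom (m+1):ℝ)^2 * ((m:ℝ)+2))
        ≤ ((m:ℝ)+1)^2 * (16 * 16 ^ m) := by
      nlinarith [mul_le_mul_of_nonneg_right hpoly hcb2,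
        mul_le_mul_of_nonneg_left IH (show (0:ℝ) ≤ 16*((m:ℝ)+1)^2 by positivity)]
    have := le_of_mul_le_mul_left hmain (by positivity : (0:ℝ) < ((m:ℝ)+1)^2)
    push_cast
    calc (Nat.centralBinom (m+1):ℝ)^2 * ((m:ℝ)+1+1) ≤ 16 * 16^m := by linarith
      _ = 16 ^ (m+1) := by ring

lemma cb_sq_lower (m : ℕ) (hm : 1 ≤ m) : (16:ℝ)^m ≤ (Nat.centralBinom m : ℝ)^2 * (4*m) := by
  induction m, hm using Nat.le_induction with
  | base => norm_num [Nat.centralBinom]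
  | succ m hm IH =>
    have hI2 := cbI2 m
    have hm0 : (1:ℝ) ≤ (m:ℝ) := by exact_mod_cast hm
    have h16 : (0:ℝ) ≤ 16^m := by positivity
    have hpoly : 16*((m:ℝ)+1)^2*(m:ℝ) ≤ 4*((m:ℝ)+1)*(2*(m:ℝ)+1)^2 := by nlinarith
    have hI2' : 4*(m:ℝ)*((m:ℝ)+1)*(((m:ℝ)+1)^2 * (Nat.centralBinom (m+1):ℝ)^2)
        = 4*(m:ℝ)*((m:ℝ)+1)*(4*(2*(m:ℝ)+1)^2*(Nat.centralBinom m:ℝ)^2) := by rw [hI2]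
    have hps : (16:ℝ)^(m+1) = 16^m * 16 := pow_succ 16 m
    have hmain : (((m:ℝ)+1)^2 * (m:ℝ)) * (16 ^ m * 16)
        ≤ (((m:ℝ)+1)^2 * (m:ℝ)) * ((Nat.centralBinom (m+1):ℝ)^2 * (4*((m:ℝ)+1))) := by
      nlinarith [mul_le_mul_of_nonneg_right hpoly h16,
        mul_le_mul_of_nonneg_left IH (show (0:ℝ) ≤ 4*((m:ℝ)+1)*(2*(m:ℝ)+1)^2 by positivity),
        hI2']
    have := le_of_mul_le_mul_left hmain
      (by positivity : (0:ℝ) < ((m:ℝ)+1)^2 * (m:ℝ))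
    push_cast
    linarith [hps]

lemma aux (n m : ℕ) (hn : 0 < n)
    (h1 : (16:ℝ)^m < (Nat.centralBinom m : ℝ)^2 * (Real.pi * n))
    (h2 : (Real.pi * n) * (Nat.centralBinom m : ℝ)^2 < 16 * 16^m) :
    1/(2*Real.sqrt (Real.pi*n)) < (Nat.centralBinom m : ℝ)/(2*4^m) ∧
    (Nat.centralBinom m : ℝ)/(2*4^m) < 2/Real.sqrt (Real.pi*n) := by
  have hn' : (0:ℝ) < n := by exact_mod_cast hn
  have hπn : (0:ℝ) < Real.pi * n := mul_pos Real.pi_pos hn'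
  have hs0 : 0 < Real.sqrt (Real.pi * n) := Real.sqrt_pos.mpr hπn
  have hs2 : Real.sqrt (Real.pi * n)^2 = Real.pi * n := Real.sq_sqrt hπn.le
  have hcb : (0:ℝ) < Nat.centralBinom m := by exact_mod_cast Nat.centralBinom_pos m
  have h4 : (0:ℝ) < 4^m := by positivity
  have h16 : ((4:ℝ)^m)^2 = 16^m := by
    rw [← pow_mul, mul_comm, pow_mul]; norm_num
  constructor
  · rw [div_lt_div_iff₀ (by positivity) (by positivity)]
    have hkey : (4:ℝ)^m < Nat.centralBinom m * Real.sqrt (Real.pi * n) := by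
      refine lt_of_pow_lt_pow_left₀ 2 (by positivity) ?_
      rw [mul_pow, hs2, h16]; linarith
    nlinarith [hkey]
  · rw [div_lt_div_iff₀ (by positivity) hs0]
    have hkey : (Nat.centralBinom m : ℝ) * Real.sqrt (Real.pi * n) < 4 * 4^m := by
      refine lt_of_pow_lt_pow_left₀ 2 (by positivity) ?_
      rw [mul_pow, hs2, mul_pow, h16]; nlinarith
    nlinarith [hkey]

theorem stmt_8 (n : ℕ) (hn : 0 < n) :
    1 / (2 * Real.sqrt (Real.pi * n))
      < (⌈(n : ℚ) / 2⌉₊ * Nat.choose n ⌈(n : ℚ) / 2⌉₊ : ℝ) / (n * 2 ^ n) ∧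
    (⌈(n : ℚ) / 2⌉₊ * Nat.choose n ⌈(n : ℚ) / 2⌉₊ : ℝ) / (n * 2 ^ n)
      < 2 / Real.sqrt (Real.pi * n) := by
  have hπ3 := Real.pi_gt_three
  have hπ4 := Real.pi_lt_d2
  rcases Nat.even_or_odd n with ⟨m, hm⟩ | ⟨m, hm⟩
  · -- n = m + m, m ≥ 1
    subst hm
    have hm1 : 1 ≤ m := by omega
    have hm1' : (1:ℝ) ≤ m := by exact_mod_cast hm1
    have hceil : ⌈((m + m : ℕ) : ℚ) / 2⌉₊ = m := by
      push_cast
      rw [show ((m:ℚ) + m) / 2 = (m:ℚ) by ring]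
      exact Nat.ceil_natCast m
    have hchoose : Nat.choose (m + m) m = Nat.centralBinom m := by
      rw [Nat.centralBinom_eq_two_mul_choose, two_mul]
    have hcb : (0:ℝ) < Nat.centralBinom m := by exact_mod_cast Nat.centralBinom_pos m
    have hEq : ((⌈((m + m : ℕ) : ℚ) / 2⌉₊ * Nat.choose (m + m) ⌈((m + m : ℕ) : ℚ) / 2⌉₊ : ℝ))
        / ((m + m : ℕ) * 2 ^ (m + m)) = (Nat.centralBinom m : ℝ) / (2 * 4 ^ m) := by
      rw [hceil, hchoose]
      have h24 : (2:ℝ) ^ (m + m) = 4 ^ m := by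
        rw [pow_add, ← mul_pow]; norm_num
      push_cast
      rw [h24]
      have hm0 : (m:ℝ) ≠ 0 := by positivity
      field_simp
      ring
    rw [hEq]
    apply aux (m + m) m hn
    · have hl := cb_sq_lower m hm1
      have h : (4:ℝ) * m < Real.pi * (m + m : ℕ) := by push_cast; nlinarith
      have hcb2 : (0:ℝ) < (Nat.centralBinom m : ℝ)^2 := by positivity
      linarith [mul_lt_mul_of_pos_left h hcb2]
    · have hu := cb_sq_upper m
      have h : Real.pi * ((m + m : ℕ) : ℝ) < 16 * ((m:ℝ) + 1) := by push_cast; nlinarith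
      have hcb2 : (0:ℝ) < (Nat.centralBinom m : ℝ)^2 := by positivity
      linarith [mul_lt_mul_of_pos_right h hcb2,
        mul_le_mul_of_nonneg_left hu (show (0:ℝ) ≤ 16 by norm_num)]
  · -- n = 2 * m + 1
    subst hm
    have hceil : ⌈((2 * m + 1 : ℕ) : ℚ) / 2⌉₊ = m + 1 := by
      rw [Nat.ceil_eq_iff (by omega : m + 1 ≠ 0)]
      push_cast
      constructor <;> [nlinarith; nlinarith]
    have hcc : 2 * Nat.choose (2 * m + 1) (m + 1) = Nat.centralBinom (m + 1) := by
      have h1 := Nat.choose_succ_succ (2 * m + 1) m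
      rw [Nat.centralBinom, show 2 * (m + 1) = (2 * m + 1) + 1 by ring, h1,
        Nat.choose_symm_half, two_mul]
    have hcb : (0:ℝ) < Nat.centralBinom m := by exact_mod_cast Nat.centralBinom_pos m
    have hEq : ((⌈((2 * m + 1 : ℕ) : ℚ) / 2⌉₊ *
          Nat.choose (2 * m + 1) ⌈((2 * m + 1 : ℕ) : ℚ) / 2⌉₊ : ℝ))
        / ((2 * m + 1 : ℕ) * 2 ^ (2 * m + 1)) = (Nat.centralBinom m : ℝ) / (2 * 4 ^ m) := by
      rw [hceil]
      have hI := cbI m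
      have hcc' : 2 * (Nat.choose (2 * m + 1) (m + 1) : ℝ) = Nat.centralBinom (m + 1) := by
        exact_mod_cast congrArg (Nat.cast : ℕ → ℝ) hcc
      have h24 : (2:ℝ) ^ (2 * m + 1) = 2 * 4 ^ m := by
        rw [pow_succ, two_mul, pow_add, ← mul_pow]; norm_num; ring
      push_cast
      rw [h24]
      have hnum : ((m:ℝ) + 1) * (Nat.choose (2 * m + 1) (m + 1) : ℝ)
          = (2 * (m:ℝ) + 1) * Nat.centralBinom m := by
        linear_combination (1/2) * hI + (((m:ℝ)+1)/2) * hcc'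
      have hd : (2 * (m:ℝ) + 1) ≠ 0 := by positivity
      field_simp
      linear_combination hnum
    rw [hEq]
    apply aux (2 * m + 1) m hn
    · rcases Nat.eq_zero_or_pos m with rfl | hm1
      · simp [Nat.centralBinom]
        nlinarith
      · have hm1' : (1:ℝ) ≤ m := by exact_mod_cast hm1
        have hl := cb_sq_lower m hm1
        have h : (4:ℝ) * m < Real.pi * ((2 * m + 1 : ℕ) : ℝ) := by push_cast; nlinarith
        have hcb2 : (0:ℝ) < (Nat.centralBinom m : ℝ)^2 := by positivity
        linarith [mul_lt_mul_of_pos_left h hcb2]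
    · have hu := cb_sq_upper m
      have h : Real.pi * ((2 * m + 1 : ℕ) : ℝ) < 16 * ((m:ℝ) + 1) := by
        push_cast; nlinarith [Nat.cast_nonneg (α := ℝ) m]
      have hcb2 : (0:ℝ) < (Nat.centralBinom m : ℝ)^2 := by positivity
      linarith [mul_lt_mul_of_pos_right h hcb2,
        mul_le_mul_of_nonneg_left hu (show (0:ℝ) ≤ 16 by norm_num)]
end

section
/- Let n be a positive integer and let φ be a bijection from Fin (2^n) onto the set of all functions from Fin n to {−1, 1} ⊆ ℤ. Then for all functions f : Fin (2^n) → ℝ and g : Fin n → ℝ: (a) |(1/(n·2^n)) · ∑_{s ∈ Fin (2^n)} ∑_{j ∈ Fin n} φ(s)(j) · f(s) · g(j)| ≤ (8/√(πn)) · (max_s |f(s)|) · (max_j |g(j)|); and (b) |(1/(n·2^n)) · ∑_{s ∈ Fin (2^n)} ∑_{j ∈ Fin n} φ(s)(j) · (f(s) + g(j))| ≤ (8/√(πn)) · max_{s,j} |f(s) + g(j)|. -/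
section aux
variable {n : ℕ} (φ : Fin (2 ^ n) → Fin n → ℤ)
    (hφ : ∀ s j, φ s j = -1 ∨ φ s j = 1)
    (hbij : ∀ g : Fin n → ℤ, (∀ j, g j = -1 ∨ g j = 1) → ∃! s, φ s = g)

include hφ hbij

lemma phi_inj : Function.Injective φ := by
  intro s t h
  obtain ⟨u, _, huniq⟩ := hbij (φ s) (hφ s)
  exact (huniq s rfl).trans (huniq t h.symm).symm

lemma flip_exists (j : Fin n) :
    ∃ σ : Fin (2 ^ n) → Fin (2 ^ n), Function.Involutive σ ∧
      ∀ s, φ (σ s) = Function.update (φ s) j (-(φ s j)) := by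
  have hupd : ∀ s : Fin (2 ^ n), ∀ k, Function.update (φ s) j (-(φ s j)) k = -1 ∨
      Function.update (φ s) j (-(φ s j)) k = 1 := by
    intro s k
    rcases eq_or_ne k j with rfl | hk
    · rw [Function.update_self]
      rcases hφ s k with h | h <;> simp [h]
    · rw [Function.update_of_ne hk]; exact hφ s k
  choose σ hσ _ using fun s => hbij _ (hupd s)
  refine ⟨σ, ?_, hσ⟩
  intro s
  apply phi_inj φ hφ hbij
  rw [hσ, hσ]
  ext k
  rcases eq_or_ne k j with rfl | hk
  · simp
  · simp [Function.update_of_ne hk]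

lemma sum_phi_mul (j k : Fin n) (hjk : j ≠ k) :
    ∑ s : Fin (2 ^ n), (φ s j : ℝ) * (φ s k) = 0 := by
  obtain ⟨σ, hinv, hσ⟩ := flip_exists φ hφ hbij j
  have := Fintype.sum_equiv hinv.toPerm
    (fun s => (φ (σ s) j : ℝ) * (φ (σ s) k)) (fun s => (φ s j : ℝ) * (φ s k))
    (fun s => rfl)
  have h2 : ∀ s, (φ (σ s) j : ℝ) * (φ (σ s) k) = -((φ s j : ℝ) * (φ s k)) := by
    intro s
    rw [hσ, Function.update_self, Function.update_of_ne hjk.symm]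
    push_cast; ring
  rw [Fintype.sum_congr _ _ h2, Finset.sum_neg_distrib] at this
  linarith

lemma sum_phi (j : Fin n) : ∑ s : Fin (2 ^ n), (φ s j : ℝ) = 0 := by
  obtain ⟨σ, hinv, hσ⟩ := flip_exists φ hφ hbij j
  have := Fintype.sum_equiv hinv.toPerm
    (fun s => (φ (σ s) j : ℝ)) (fun s => (φ s j : ℝ)) (fun s => rfl)
  have h2 : ∀ s, (φ (σ s) j : ℝ) = -(φ s j : ℝ) := by
    intro s; rw [hσ, Function.update_self]; push_cast; ring
  rw [Fintype.sum_congr _ _ h2, Finset.sum_neg_distrib] at this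
  linarith

lemma sum_phi_sq (j : Fin n) :
    ∑ s : Fin (2 ^ n), (φ s j : ℝ) * (φ s j) = 2 ^ n := by
  have : ∀ s : Fin (2 ^ n), (φ s j : ℝ) * (φ s j) = 1 := by
    intro s; rcases hφ s j with h | h <;> simp [h]
  rw [Fintype.sum_congr _ _ this]
  simp

lemma sum_sq_eq (a : Fin n → ℝ) :
    ∑ s : Fin (2 ^ n), (∑ j : Fin n, (φ s j : ℝ) * a j) ^ 2
      = 2 ^ n * ∑ j : Fin n, (a j) ^ 2 := by
  have expand : ∀ s : Fin (2 ^ n), (∑ j : Fin n, (φ s j : ℝ) * a j) ^ 2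
      = ∑ j : Fin n, ∑ k : Fin n, ((φ s j : ℝ) * (φ s k)) * (a j * a k) := by
    intro s
    rw [sq, Finset.sum_mul_sum]
    refine Finset.sum_congr rfl fun j _ => Finset.sum_congr rfl fun k _ => by ring
  rw [Fintype.sum_congr _ _ expand, Finset.sum_comm]
  rw [Finset.sum_congr rfl fun j _ => Finset.sum_comm]
  have inner : ∀ j : Fin n, ∑ k : Fin n, ∑ s : Fin (2 ^ n),
      ((φ s j : ℝ) * (φ s k)) * (a j * a k) = 2 ^ n * a j ^ 2 := by
    intro j
    rw [Finset.sum_eq_single j]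
    · rw [← Finset.sum_mul, sum_phi_sq φ hφ hbij j]; ring
    · intro k _ hkj
      rw [← Finset.sum_mul, sum_phi_mul φ hφ hbij j k (Ne.symm hkj), zero_mul]
    · intro h; exact absurd (Finset.mem_univ j) h
  rw [Finset.sum_congr rfl fun j _ => inner j, ← Finset.mul_sum]

lemma sum_abs_le (a : Fin n → ℝ) :
    ∑ s : Fin (2 ^ n), |∑ j : Fin n, (φ s j : ℝ) * a j|
      ≤ 2 ^ n * Real.sqrt (∑ j : Fin n, (a j) ^ 2) := by
  set S : Fin (2 ^ n) → ℝ := fun s => ∑ j : Fin n, (φ s j : ℝ) * a j with hS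
  have h1 : (∑ s : Fin (2 ^ n), |S s|) ^ 2 ≤ (2 ^ n : ℝ) * ∑ s : Fin (2 ^ n), (S s) ^ 2 := by
    have := sq_sum_le_card_mul_sum_sq (s := (Finset.univ : Finset (Fin (2 ^ n))))
      (f := fun s => |S s|)
    simpa [sq_abs] using this
  have h2 : ∑ s : Fin (2 ^ n), (S s) ^ 2 = 2 ^ n * ∑ j : Fin n, (a j) ^ 2 :=
    sum_sq_eq φ hφ hbij a
  have hnn : (0:ℝ) ≤ ∑ j : Fin n, (a j) ^ 2 := Finset.sum_nonneg fun j _ => sq_nonneg _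
  have h3 : (∑ s : Fin (2 ^ n), |S s|) ^ 2 ≤ (2 ^ n * Real.sqrt (∑ j : Fin n, (a j) ^ 2)) ^ 2 := by
    rw [mul_pow, Real.sq_sqrt hnn]
    calc (∑ s : Fin (2 ^ n), |S s|) ^ 2 ≤ (2 ^ n : ℝ) * (2 ^ n * ∑ j : Fin n, (a j) ^ 2) := by
          rw [← h2]; exact h1
      _ = ((2:ℝ) ^ n) ^ 2 * ∑ j : Fin n, (a j) ^ 2 := by ring
  calc ∑ s : Fin (2 ^ n), |S s| = Real.sqrt ((∑ s : Fin (2 ^ n), |S s|) ^ 2) :=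
        (Real.sqrt_sq (by positivity)).symm
    _ ≤ Real.sqrt ((2 ^ n * Real.sqrt (∑ j : Fin n, (a j) ^ 2)) ^ 2) := Real.sqrt_le_sqrt h3
    _ = 2 ^ n * Real.sqrt (∑ j : Fin n, (a j) ^ 2) := Real.sqrt_sq (by positivity)
end aux


theorem stmt_9 (n : ℕ) (hn : 0 < n) (φ : Fin (2 ^ n) → Fin n → ℤ)
    (hφ : ∀ s j, φ s j = -1 ∨ φ s j = 1)
    (hbij : ∀ g : Fin n → ℤ, (∀ j, g j = -1 ∨ g j = 1) → ∃! s, φ s = g)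
    (f : Fin (2 ^ n) → ℝ) (g : Fin n → ℝ) :
    |(1 / (n * 2 ^ n : ℝ)) * ∑ s : Fin (2 ^ n), ∑ j : Fin n, (φ s j : ℝ) * f s * g j|
      ≤ (8 / Real.sqrt (Real.pi * n)) * (⨆ s, |f s|) * (⨆ j, |g j|) ∧
    |(1 / (n * 2 ^ n : ℝ)) * ∑ s : Fin (2 ^ n), ∑ j : Fin n, (φ s j : ℝ) * (f s + g j)|
      ≤ (8 / Real.sqrt (Real.pi * n)) * ⨆ p : Fin (2 ^ n) × Fin n, |f p.1 + g p.2| := by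
  have hnR : (0:ℝ) < n := Nat.cast_pos.mpr hn
  have h2R : (0:ℝ) < 2 ^ n := by positivity
  have hsn : (0:ℝ) < Real.sqrt n := Real.sqrt_pos.mpr hnR
  have hsπ : (0:ℝ) < Real.sqrt Real.pi := Real.sqrt_pos.mpr Real.pi_pos
  have hne : Nonempty (Fin (2 ^ n)) := ⟨⟨0, Nat.pow_pos (by norm_num)⟩⟩
  have hne2 : Nonempty (Fin n) := ⟨⟨0, hn⟩⟩
  -- generic bound
  have hbound : ∀ (c : Fin (2 ^ n) → ℝ) (C : ℝ), (∀ s, |c s| ≤ C) →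
      ∀ (a : Fin n → ℝ) (A : ℝ), 0 ≤ A → (∀ j, |a j| ≤ A) →
      |∑ s : Fin (2 ^ n), c s * ∑ j : Fin n, (φ s j : ℝ) * a j|
        ≤ 2 ^ n * Real.sqrt n * (C * A) := by
    intro c C hC a A hA hAa
    have hC0 : 0 ≤ C := le_trans (abs_nonneg _) (hC hne.some)
    have hsum2 : ∑ j : Fin n, (a j) ^ 2 ≤ n * A ^ 2 := by
      calc ∑ j : Fin n, (a j) ^ 2 ≤ ∑ _j : Fin n, A ^ 2 := by
            refine Finset.sum_le_sum fun j _ => ?_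
            rw [← sq_abs]; exact pow_le_pow_left₀ (abs_nonneg _) (hAa j) 2
        _ = n * A ^ 2 := by simp [Finset.sum_const, mul_comm]
    have hsqrt : Real.sqrt (∑ j : Fin n, (a j) ^ 2) ≤ Real.sqrt n * A := by
      calc Real.sqrt (∑ j : Fin n, (a j) ^ 2) ≤ Real.sqrt ((n:ℝ) * A ^ 2) :=
            Real.sqrt_le_sqrt hsum2
        _ = Real.sqrt n * A := by
            rw [Real.sqrt_mul (Nat.cast_nonneg n), Real.sqrt_sq hA]
    calc |∑ s : Fin (2 ^ n), c s * ∑ j : Fin n, (φ s j : ℝ) * a j|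
        ≤ ∑ s : Fin (2 ^ n), |c s * ∑ j : Fin n, (φ s j : ℝ) * a j| :=
          Finset.abs_sum_le_sum_abs _ _
      _ ≤ ∑ s : Fin (2 ^ n), C * |∑ j : Fin n, (φ s j : ℝ) * a j| := by
          refine Finset.sum_le_sum fun s _ => ?_
          rw [abs_mul]
          exact mul_le_mul_of_nonneg_right (hC s) (abs_nonneg _)
      _ = C * ∑ s : Fin (2 ^ n), |∑ j : Fin n, (φ s j : ℝ) * a j| := by
          rw [Finset.mul_sum]
      _ ≤ C * (2 ^ n * Real.sqrt (∑ j : Fin n, (a j) ^ 2)) :=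
          mul_le_mul_of_nonneg_left (sum_abs_le φ hφ hbij a) hC0
      _ ≤ C * (2 ^ n * (Real.sqrt n * A)) := by
          refine mul_le_mul_of_nonneg_left ?_ hC0
          exact mul_le_mul_of_nonneg_left hsqrt h2R.le
      _ = 2 ^ n * Real.sqrt n * (C * A) := by ring
  -- arithmetic: (1/(n*2^n)) * (2^n*√n*K) ≤ 8/√(πn) * K for K ≥ 0
  have harith : ∀ K : ℝ, 0 ≤ K →
      (1 / ((n:ℝ) * 2 ^ n)) * (2 ^ n * Real.sqrt n * K) ≤ (8 / Real.sqrt (Real.pi * n)) * K := by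
    intro K hK
    have hs : Real.sqrt n * Real.sqrt n = (n:ℝ) := Real.mul_self_sqrt (Nat.cast_nonneg n)
    have e1 : (1 / ((n:ℝ) * 2 ^ n)) * (2 ^ n * Real.sqrt n * K) = K / Real.sqrt n := by
      rw [eq_div_iff hsn.ne']
      field_simp
      linear_combination K * hs
    have hπ2 : Real.sqrt Real.pi ≤ 8 := by
      have : Real.sqrt Real.pi ≤ Real.sqrt 4 := Real.sqrt_le_sqrt (by nlinarith [Real.pi_le_four])
      have h4 : Real.sqrt 4 = 2 := by
        rw [show (4:ℝ) = 2 ^ 2 by norm_num, Real.sqrt_sq (by norm_num)]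
      linarith [this, h4.le]
    have e2 : (8 / Real.sqrt (Real.pi * n)) * K = (8 / Real.sqrt Real.pi) * (K / Real.sqrt n) := by
      rw [Real.sqrt_mul Real.pi_pos.le]
      field_simp
    rw [e1, e2]
    have h1 : (1:ℝ) ≤ 8 / Real.sqrt Real.pi := by
      rw [le_div_iff₀ hsπ]; linarith
    nlinarith [div_nonneg hK hsn.le]
  constructor
  · -- part (a)
    set Fm := ⨆ s, |f s| with hFm
    set Gm := ⨆ j, |g j| with hGm
    have hF : ∀ s, |f s| ≤ Fm := fun s => le_ciSup (f := fun s => |f s|) (Set.Finite.bddAbove (Set.finite_range _)) s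
    have hG : ∀ j, |g j| ≤ Gm := fun j => le_ciSup (f := fun j => |g j|) (Set.Finite.bddAbove (Set.finite_range _)) j
    have hF0 : 0 ≤ Fm := le_trans (abs_nonneg _) (hF hne.some)
    have hG0 : 0 ≤ Gm := le_trans (abs_nonneg _) (hG hne2.some)
    have hrw : ∑ s : Fin (2 ^ n), ∑ j : Fin n, (φ s j : ℝ) * f s * g j
        = ∑ s : Fin (2 ^ n), f s * ∑ j : Fin n, (φ s j : ℝ) * g j := by
      refine Finset.sum_congr rfl fun s _ => ?_
      rw [Finset.mul_sum]
      exact Finset.sum_congr rfl fun j _ => by ring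
    rw [hrw, abs_mul, abs_of_pos (by positivity : (0:ℝ) < 1 / ((n:ℝ) * 2 ^ n))]
    calc (1 / ((n:ℝ) * 2 ^ n)) * |∑ s : Fin (2 ^ n), f s * ∑ j : Fin n, (φ s j : ℝ) * g j|
        ≤ (1 / ((n:ℝ) * 2 ^ n)) * (2 ^ n * Real.sqrt n * (Fm * Gm)) := by
          refine mul_le_mul_of_nonneg_left ?_ (by positivity)
          exact hbound f Fm hF g Gm hG0 hG
      _ ≤ (8 / Real.sqrt (Real.pi * n)) * (Fm * Gm) := harith _ (by positivity)
      _ = (8 / Real.sqrt (Real.pi * n)) * Fm * Gm := by ring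
  · -- part (b)
    set M := ⨆ p : Fin (2 ^ n) × Fin n, |f p.1 + g p.2| with hM
    have hMle : ∀ p : Fin (2 ^ n) × Fin n, |f p.1 + g p.2| ≤ M :=
      fun p => le_ciSup (f := fun p : Fin (2 ^ n) × Fin n => |f p.1 + g p.2|) (Set.Finite.bddAbove (Set.finite_range _)) p
    have hM0 : 0 ≤ M := le_trans (abs_nonneg _) (hMle ⟨hne.some, hne2.some⟩)
    set j₀ : Fin n := ⟨0, hn⟩ with hj₀
    have hrw : ∑ s : Fin (2 ^ n), ∑ j : Fin n, (φ s j : ℝ) * (f s + g j)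
        = ∑ s : Fin (2 ^ n), (f s + g j₀) * ∑ j : Fin n, (φ s j : ℝ) * 1 := by
      have e1 : ∑ s : Fin (2 ^ n), ∑ j : Fin n, (φ s j : ℝ) * (f s + g j)
          = (∑ s : Fin (2 ^ n), f s * ∑ j : Fin n, (φ s j : ℝ))
            + ∑ j : Fin n, g j * ∑ s : Fin (2 ^ n), (φ s j : ℝ) := by
        have step : ∀ s : Fin (2 ^ n), ∑ j : Fin n, (φ s j : ℝ) * (f s + g j)
            = f s * ∑ j : Fin n, (φ s j : ℝ) + ∑ j : Fin n, g j * (φ s j : ℝ) := by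
          intro s
          rw [Finset.mul_sum, ← Finset.sum_add_distrib]
          exact Finset.sum_congr rfl fun j _ => by ring
        rw [Finset.sum_congr rfl fun s _ => step s, Finset.sum_add_distrib]
        congr 1
        rw [Finset.sum_comm]
        exact Finset.sum_congr rfl fun j _ => (Finset.mul_sum _ _ _).symm
      have e2 : ∑ j : Fin n, g j * ∑ s : Fin (2 ^ n), (φ s j : ℝ) = 0 := by
        refine Finset.sum_eq_zero fun j _ => ?_
        rw [sum_phi φ hφ hbij j, mul_zero]
      have e3 : ∑ s : Fin (2 ^ n), g j₀ * ∑ j : Fin n, (φ s j : ℝ) = 0 := by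
        rw [← Finset.mul_sum, Finset.sum_comm]
        rw [Finset.sum_congr rfl fun j _ => sum_phi φ hφ hbij j]
        simp
      rw [e1, e2, add_zero]
      have : ∑ s : Fin (2 ^ n), (f s + g j₀) * ∑ j : Fin n, (φ s j : ℝ) * 1
          = (∑ s : Fin (2 ^ n), f s * ∑ j : Fin n, (φ s j : ℝ))
            + ∑ s : Fin (2 ^ n), g j₀ * ∑ j : Fin n, (φ s j : ℝ) := by
        rw [← Finset.sum_add_distrib]
        refine Finset.sum_congr rfl fun s _ => ?_
        simp [add_mul]
      rw [this, e3, add_zero]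
    rw [hrw, abs_mul, abs_of_pos (by positivity : (0:ℝ) < 1 / ((n:ℝ) * 2 ^ n))]
    calc (1 / ((n:ℝ) * 2 ^ n)) * |∑ s : Fin (2 ^ n), (f s + g j₀) * ∑ j : Fin n, (φ s j : ℝ) * 1|
        ≤ (1 / ((n:ℝ) * 2 ^ n)) * (2 ^ n * Real.sqrt n * (M * 1)) := by
          refine mul_le_mul_of_nonneg_left ?_ (by positivity)
          exact hbound (fun s => f s + g j₀) M (fun s => hMle ⟨s, j₀⟩)
            (fun _ => 1) 1 zero_le_one (fun j => by norm_num)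
      _ ≤ (8 / Real.sqrt (Real.pi * n)) * (M * 1) := harith _ (by positivity)
      _ = (8 / Real.sqrt (Real.pi * n)) * M := by ring
end

section
/- The function g : ℕ≥1 → ℝ defined by g(k) = ⌈k/2⌉ · binom(k, ⌈k/2⌉) / 2^k is non-decreasing, i.e. g(k) ≤ g(k+1) for every positive integer k. -/
theorem stmt_10 (k : ℕ) (hk : 0 < k) :
    (⌈(k : ℚ) / 2⌉₊ * Nat.choose k ⌈(k : ℚ) / 2⌉₊ : ℝ) / 2 ^ k
      ≤ (⌈(k + 1 : ℚ) / 2⌉₊ * Nat.choose (k + 1) ⌈(k + 1 : ℚ) / 2⌉₊ : ℝ) / 2 ^ (k + 1) := by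
  have hhalf : ∀ m : ℕ, ⌈((m : ℚ) + 1/2)⌉₊ = m + 1 := by
    intro m
    rw [show ((m : ℚ) + 1/2) = 1/2 + m by ring, Nat.ceil_add_natCast (by norm_num)]
    have : ⌈(1/2 : ℚ)⌉₊ = 1 := by
      rw [Nat.ceil_eq_iff one_ne_zero]; norm_num
    omega
  have key : ∀ (A B : ℕ), 2 * A ≤ B → (A : ℝ) / 2 ^ k ≤ (B : ℝ) / 2 ^ (k + 1) := by
    intro A B h
    rw [div_le_div_iff₀ (by positivity) (by positivity), pow_succ]
    have : (2 * A : ℝ) ≤ B := by exact_mod_cast h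
    nlinarith [pow_pos (by norm_num : (0:ℝ) < 2) k]
  rcases Nat.even_or_odd k with ⟨m, hm⟩ | ⟨m, hm⟩
  · subst hm
    have h1 : ⌈((m + m : ℕ) : ℚ) / 2⌉₊ = m := by
      push_cast
      rw [show ((m : ℚ) + m) / 2 = m by ring]
      exact Nat.ceil_natCast m
    have h2 : ⌈(((m + m : ℕ) : ℚ) + 1) / 2⌉₊ = m + 1 := by
      push_cast
      rw [show ((m : ℚ) + m + 1) / 2 = m + 1/2 by ring]
      exact hhalf m
    rw [h1, h2, ← Nat.cast_mul, ← Nat.cast_mul]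
    apply key
    have hc := Nat.add_one_mul_choose_eq (m + m) m
    -- (m+m+1) * C(m+m, m) = C(m+m+1, m+1) * (m+1)
    nlinarith [hc, Nat.choose_pos (show m ≤ m + m by omega)]
  · subst hm
    have h1 : ⌈((2 * m + 1 : ℕ) : ℚ) / 2⌉₊ = m + 1 := by
      push_cast
      rw [show ((2 * m + 1 : ℚ)) / 2 = m + 1/2 by ring]
      exact hhalf m
    have h2 : ⌈(((2 * m + 1 : ℕ) : ℚ) + 1) / 2⌉₊ = m + 1 := by
      push_cast
      rw [show ((2 * (m : ℚ) + 1 + 1)) / 2 = ((m + 1 : ℕ) : ℚ) by push_cast; ring]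
      exact Nat.ceil_natCast (m + 1)
    rw [h1, h2, ← Nat.cast_mul, ← Nat.cast_mul]
    apply key
    have hc : (2 * m + 1 + 1).choose (m + 1) = 2 * (2 * m + 1).choose (m + 1) := by
      rw [Nat.choose_succ_succ (2 * m + 1) m]
      have : (2 * m + 1).choose m = (2 * m + 1).choose (m + 1) := by
        rw [← Nat.choose_symm (show m + 1 ≤ 2 * m + 1 by omega)]
        congr 1
        omega
      simp only [Nat.succ_eq_add_one] at this ⊢
      omega
    rw [hc]
    exact le_of_eq (by ring)
end

section
/- Let X and Y be Tychonoff (completely regular Hausdorff) topological spaces containing infinite compact subsets K ⊆ X and L ⊆ Y respectively. For each positive integer n, let K_n ⊆ K be a finite subset with |K_n| = 2^n, let L_n ⊆ L be a finite subset with |L_n| = n, let φ_n : K_n → ({−1,1}^{L_n}) be a bijection onto the set of all functions L_n → {−1,1}, and define the finitely supported signed measure μ_n on X × Y by μ_n = (1/(n·2^n)) · ∑_{(s,j) ∈ K_n × L_n} φ_n(s)(j) · δ_{(s,j)}. Then for every n: ‖μ_n‖ = 1 and supp(μ_n) = K_n × L_n; and for every continuous function f : X × Y → ℝ, μ_n(f)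 → 0 as n → ∞. In particular (μ_n) is a JN-sequence on X × Y. -/
open Classical in
lemma aux_inj {X Y : Type*} {S : Finset X} {T : Finset Y} {φ : X → Y → ℤ}
    (hφ : ∀ s ∈ S, ∀ j ∈ T, φ s j = -1 ∨ φ s j = 1)
    (hbij : ∀ g : Y → ℤ, (∀ j ∈ T, g j = -1 ∨ g j = 1) →
      ∃! s, s ∈ S ∧ ∀ j ∈ T, φ s j = g j)
    {s1 s2 : X} (h1 : s1 ∈ S) (h2 : s2 ∈ S) (h : ∀ j ∈ T, φ s1 j = φ s2 j) : s1 = s2 := by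
  obtain ⟨s, _, hu⟩ := hbij (φ s1) (fun j hj => hφ s1 h1 j hj)
  rw [hu s1 ⟨h1, fun _ _ => rfl⟩, hu s2 ⟨h2, fun j hj => (h j hj).symm⟩]

open Classical in
lemma aux_orth {X Y : Type*} {S : Finset X} {T : Finset Y} {φ : X → Y → ℤ}
    (hφ : ∀ s ∈ S, ∀ j ∈ T, φ s j = -1 ∨ φ s j = 1)
    (hbij : ∀ g : Y → ℤ, (∀ j ∈ T, g j = -1 ∨ g j = 1) →
      ∃! s, s ∈ S ∧ ∀ j ∈ T, φ s j = g j)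
    {j j' : Y} (hj : j ∈ T) (hj' : j' ∈ T) (hne : j' ≠ j) :
    ∑ s ∈ S, (φ s j * φ s j' : ℤ) = 0 := by
  have key : ∀ s ∈ S, ∃! s', s' ∈ S ∧
      ∀ y ∈ T, φ s' y = (fun y => if y = j then -φ s y else φ s y) y := by
    intro s hs
    refine hbij _ (fun y hy => ?_)
    by_cases hyj : y = j
    · subst hyj
      simp only [if_pos rfl]
      rcases hφ s hs y hy with h | h <;> omega
    · simp only [if_neg hyj]
      exact hφ s hs y hy
  set σ : ∀ s ∈ S, X := fun s hs => (key s hs).choose with hσdef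
  have hσ : ∀ s (hs : s ∈ S), (σ s hs) ∈ S ∧
      ∀ y ∈ T, φ (σ s hs) y = if y = j then -φ s y else φ s y :=
    fun s hs => (key s hs).choose_spec.1
  have hσj : ∀ s (hs : s ∈ S), φ (σ s hs) j = -φ s j := by
    intro s hs; simpa using (hσ s hs).2 j hj
  have hσj' : ∀ s (hs : s ∈ S), φ (σ s hs) j' = φ s j' := by
    intro s hs; simpa [hne] using (hσ s hs).2 j' hj'
  have hmem : ∀ s (hs : s ∈ S), σ s hs ∈ S := fun s hs => (hσ s hs).1
  refine Finset.sum_involution σ (fun s hs => ?_) (fun s hs _ => ?_) hmem (fun s hs => ?_)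
  · rw [hσj s hs, hσj' s hs]; ring
  · intro heq
    have := hσj s hs
    rw [heq] at this
    rcases hφ s hs j hj with h | h <;> omega
  · refine aux_inj hφ hbij (hmem _ (hmem s hs)) hs (fun y hy => ?_)
    rw [(hσ _ (hmem s hs)).2 y hy, (hσ s hs).2 y hy]
    by_cases hyj : y = j <;> simp [hyj]

open Classical in
lemma aux_sq {X Y : Type*} {S : Finset X} {T : Finset Y} {φ : X → Y → ℤ}
    (hφ : ∀ s ∈ S, ∀ j ∈ T, φ s j = -1 ∨ φ s j = 1)
    (hbij : ∀ g : Y → ℤ, (∀ j ∈ T, g j = -1 ∨ g j = 1) →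
      ∃! s, s ∈ S ∧ ∀ j ∈ T, φ s j = g j)
    {C : Finset Y} (hC : C ⊆ T) :
    ∑ s ∈ S, (∑ j ∈ C, (φ s j : ℤ)) ^ 2 = C.card * S.card := by
  have step1 : ∑ s ∈ S, (∑ j ∈ C, (φ s j : ℤ)) ^ 2
      = ∑ j ∈ C, ∑ j' ∈ C, ∑ s ∈ S, φ s j * φ s j' :=
    calc ∑ s ∈ S, (∑ j ∈ C, (φ s j : ℤ)) ^ 2
        = ∑ s ∈ S, ∑ j ∈ C, ∑ j' ∈ C, φ s j * φ s j' :=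
          Finset.sum_congr rfl (fun s _ => by rw [sq, Finset.sum_mul_sum])
      _ = ∑ j ∈ C, ∑ s ∈ S, ∑ j' ∈ C, φ s j * φ s j' := Finset.sum_comm
      _ = ∑ j ∈ C, ∑ j' ∈ C, ∑ s ∈ S, φ s j * φ s j' :=
          Finset.sum_congr rfl (fun j _ => Finset.sum_comm)
  rw [step1]
  have step2 : ∀ j ∈ C, ∑ j' ∈ C, ∑ s ∈ S, (φ s j * φ s j' : ℤ) = S.card := by
    intro j hjC
    rw [Finset.sum_eq_single j]
    · have h1 : ∀ s ∈ S, (φ s j * φ s j : ℤ) = 1 := by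
        intro s hs; rcases hφ s hs j (hC hjC) with h | h <;> rw [h] <;> norm_num
      rw [Finset.sum_congr rfl h1, Finset.sum_const, nsmul_eq_mul, mul_one]
    · intro j' hj'C hne
      exact aux_orth hφ hbij (hC hjC) (hC hj'C) hne
    · intro h; exact absurd hjC h
  rw [Finset.sum_congr rfl step2, Finset.sum_const, nsmul_eq_mul]

open Classical in

theorem stmt_11 {X Y : Type*} [TopologicalSpace X] [TopologicalSpace Y]
    [T35Space X] [T35Space Y]
    (K : Set X) (L : Set Y) (hKc : IsCompact K) (hKi : K.Infinite)
    (hLc : IsCompact L) (hLi : L.Infinite)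
    (Kn : ℕ → Finset X) (Ln : ℕ → Finset Y)
    (hKn : ∀ n, 1 ≤ n → ↑(Kn n) ⊆ K ∧ (Kn n).card = 2 ^ n)
    (hLn : ∀ n, 1 ≤ n → ↑(Ln n) ⊆ L ∧ (Ln n).card = n)
    (φ : ℕ → X → Y → ℤ)
    (hφ : ∀ n, 1 ≤ n → ∀ s ∈ Kn n, ∀ j ∈ Ln n, φ n s j = -1 ∨ φ n s j = 1)
    (hbij : ∀ n, 1 ≤ n → ∀ g : Y → ℤ, (∀ j ∈ Ln n, g j = -1 ∨ g j = 1) →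
      ∃! s, s ∈ Kn n ∧ ∀ j ∈ Ln n, φ n s j = g j)
    (μ : ℕ → X × Y → ℝ)
    (hμ : ∀ n, 1 ≤ n → ∀ p : X × Y,
      μ n p = if p.1 ∈ Kn n ∧ p.2 ∈ Ln n then (φ n p.1 p.2 : ℝ) / (n * 2 ^ n) else 0) :
    (∀ n, 1 ≤ n → (∑ p ∈ Kn n ×ˢ Ln n, |μ n p|) = 1 ∧
      {p : X × Y | μ n p ≠ 0} = ↑(Kn n ×ˢ Ln n)) ∧
    ∀ f : C(X × Y, ℝ),
      Filter.Tendsto (fun n => ∑ p ∈ Kn n ×ˢ Ln n, μ n p * f p) Filter.atTop (nhds 0) := by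
  constructor
  · intro n hn
    have hKcard := (hKn n hn).2
    have hLcard := (hLn n hn).2
    have hnR : (0:ℝ) < (n : ℝ) := by exact_mod_cast hn
    have hD : (0:ℝ) < (n : ℝ) * 2 ^ n := by positivity
    constructor
    · have h1 : ∀ p ∈ Kn n ×ˢ Ln n, |μ n p| = ((n:ℝ) * 2 ^ n)⁻¹ := by
        intro p hp
        rw [Finset.mem_product] at hp
        rw [hμ n hn p, if_pos hp, abs_div, abs_of_pos hD]
        rcases hφ n hn p.1 hp.1 p.2 hp.2 with h | h <;> rw [h] <;> norm_num
      rw [Finset.sum_congr rfl h1, Finset.sum_const, Finset.card_product, hKcard, hLcard,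
        nsmul_eq_mul]
      push_cast
      field_simp
    · ext p
      simp only [Set.mem_setOf_eq, Finset.coe_product, Set.mem_prod, Finset.mem_coe]
      rw [hμ n hn p]
      constructor
      · intro hne
        by_cases hp : p.1 ∈ Kn n ∧ p.2 ∈ Ln n
        · exact hp
        · rw [if_neg hp] at hne; exact absurd rfl hne
      · intro hp
        rw [if_pos hp]
        have hden : ((n:ℝ) * 2 ^ n) ≠ 0 := ne_of_gt hD
        rcases hφ n hn p.1 hp.1 p.2 hp.2 with h | h <;> rw [h] <;>
          simp [div_eq_zero_iff, hden] <;> omega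
  · intro f
    rw [Metric.tendsto_atTop]
    intro εt hεt
    set ε := εt / 3 with hεdef
    have hε : 0 < ε := by positivity
    -- uniform bound M on K × L
    obtain ⟨M0, hM0⟩ := (hKc.prod hLc).exists_bound_of_continuousOn f.continuous.continuousOn
    set M := max M0 1 with hMdef
    have hM1 : (1:ℝ) ≤ M := le_max_right _ _
    have hM0' : (0:ℝ) ≤ M := le_trans zero_le_one hM1
    have hM : ∀ p ∈ K ×ˢ L, |f p| ≤ M := fun p hp =>
      le_trans (by simpa using hM0 p hp) (le_max_left _ _)
    -- tube lemma neighborhoods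
    have hV : ∀ y : Y, ∃ V : Set Y, IsOpen V ∧
        (y ∈ L → y ∈ V ∧ ∀ s ∈ K, ∀ y' ∈ V, |f (s, y') - f (s, y)| < ε) := by
      intro y
      by_cases hy : y ∈ L
      · have hUopen : IsOpen {p : X × Y | |f p - f (p.1, y)| < ε} := by
          have hc : Continuous fun p : X × Y => |f p - f (p.1, y)| :=
            (f.continuous.sub (f.continuous.comp (continuous_fst.prodMk
              continuous_const))).abs
          exact isOpen_lt hc continuous_const
        have hsub : K ×ˢ ({y} : Set Y) ⊆ {p : X × Y | |f p - f (p.1, y)| < ε} := by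
          rintro ⟨s, y'⟩ ⟨hs, hy'⟩
          rcases hy' with rfl
          simpa using hε
        obtain ⟨u, v, huo, hvo, hKu, hyv, huv⟩ :=
          generalized_tube_lemma hKc isCompact_singleton hUopen hsub
        refine ⟨v, hvo, fun _ => ⟨hyv rfl, fun s hs y' hy' => ?_⟩⟩
        exact huv ⟨hKu hs, hy'⟩
      · exact ⟨∅, isOpen_empty, fun h => absurd h hy⟩
    choose V hVopen hVL using hV
    have hcover : L ⊆ ⋃ y ∈ L, V y := fun y hy => Set.mem_biUnion hy (hVL y hy).1
    obtain ⟨T, hTL, hTfin, hTsub⟩ :=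
      hLc.elim_finite_subcover_image (fun y _ => hVopen y) hcover
    set Tf := hTfin.toFinset with hTfdef
    set m := Tf.card with hmdef
    -- assignment of each point of L to a member of the cover
    have hassign : ∀ j : Y, ∃ y : Y, j ∈ L → y ∈ Tf ∧ j ∈ V y := by
      intro j
      by_cases hj : j ∈ L
      · obtain ⟨y, hyT, hjV⟩ := Set.mem_iUnion₂.1 (hTsub hj)
        exact ⟨y, fun _ => ⟨hTfin.mem_toFinset.2 hyT, hjV⟩⟩
      · exact ⟨j, fun h => absurd h hj⟩
    choose t ht using hassign
    -- choose the threshold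
    obtain ⟨N1, hN1⟩ : ∃ N : ℕ, ((m : ℝ) * M / ε) ^ 2 < N := exists_nat_gt _
    refine ⟨max 1 N1, fun n hnN => ?_⟩
    have hn : 1 ≤ n := le_trans (le_max_left _ _) hnN
    have hnN1 : ((m : ℝ) * M / ε) ^ 2 < n := lt_of_lt_of_le hN1
      (by exact_mod_cast le_trans (le_max_right _ _) hnN)
    have hKsub := (hKn n hn).1
    have hKcard := (hKn n hn).2
    have hLsub := (hLn n hn).1
    have hLcard := (hLn n hn).2
    have hnR : (0:ℝ) < (n : ℝ) := by exact_mod_cast hn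
    have hD : (0:ℝ) < (n : ℝ) * 2 ^ n := by positivity
    have hsqn : (0:ℝ) < Real.sqrt n := Real.sqrt_pos.2 hnR
    set g : Y → ℝ := fun j => ∑ s ∈ Kn n, (φ n s j : ℝ) * f (s, j) with hgdef
    -- rewrite the sum
    have hsum : ∑ p ∈ Kn n ×ˢ Ln n, μ n p * f p = (∑ j ∈ Ln n, g j) / ((n:ℝ) * 2 ^ n) := by
      rw [Finset.sum_product, Finset.sum_comm, Finset.sum_div]
      refine Finset.sum_congr rfl fun j hj => ?_
      rw [hgdef, Finset.sum_div]
      refine Finset.sum_congr rfl fun s hs => ?_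
      rw [hμ n hn (s, j), if_pos ⟨hs, hj⟩]
      ring
    -- fiberwise decomposition
    have hmaps : ∀ j ∈ Ln n, t j ∈ Tf := fun j hj => (ht j (hLsub hj)).1
    have hfiber : ∑ i ∈ Tf, ∑ j ∈ (Ln n).filter (fun j => t j = i), g j
        = ∑ j ∈ Ln n, g j := Finset.sum_fiberwise_of_maps_to hmaps g
    have hcard : ∑ i ∈ Tf, ((Ln n).filter (fun j => t j = i)).card = n := by
      rw [← Finset.card_eq_sum_card_fiberwise hmaps, hLcard]
    -- per fiber bound
    have hper : ∀ i ∈ Tf, |∑ j ∈ (Ln n).filter (fun j => t j = i), g j|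
        ≤ Real.sqrt n * 2 ^ n * M
          + (((Ln n).filter (fun j => t j = i)).card : ℝ) * 2 ^ n * ε := by
      intro i hiT
      have hiL : i ∈ L := hTL (hTfin.mem_toFinset.1 hiT)
      set Ci := (Ln n).filter (fun j => t j = i) with hCidef
      have hCisub : Ci ⊆ Ln n := Finset.filter_subset _ _
      set A1 : ℝ := ∑ s ∈ Kn n, (∑ j ∈ Ci, (φ n s j : ℝ)) * f (s, i) with hA1def
      set A2 : ℝ := ∑ j ∈ Ci, ∑ s ∈ Kn n, (φ n s j : ℝ) * (f (s, j) - f (s, i)) with hA2def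
      have hdec : ∑ j ∈ Ci, g j = A1 + A2 := by
        have e1 : A1 = ∑ j ∈ Ci, ∑ s ∈ Kn n, (φ n s j : ℝ) * f (s, i) := by
          rw [hA1def]
          rw [Finset.sum_congr rfl fun s (_ : s ∈ Kn n) => Finset.sum_mul Ci _ (f (s, i))]
          exact Finset.sum_comm
        rw [e1, hA2def, ← Finset.sum_add_distrib]
        refine Finset.sum_congr rfl fun j hj => ?_
        rw [← Finset.sum_add_distrib]
        exact Finset.sum_congr rfl fun s hs => by ring
      have hsq1 : ∑ s ∈ Kn n, (∑ j ∈ Ci, (φ n s j : ℝ)) ^ 2 = (Ci.card : ℝ) * 2 ^ n := by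
        have hz := aux_sq (hφ n hn) (hbij n hn) hCisub
        have : ∑ s ∈ Kn n, (∑ j ∈ Ci, (φ n s j : ℝ)) ^ 2
            = ((∑ s ∈ Kn n, (∑ j ∈ Ci, φ n s j) ^ 2 : ℤ) : ℝ) := by push_cast; rfl
        rw [this, hz, hKcard]; push_cast; ring
      have hsq2 : ∑ s ∈ Kn n, (f (s, i)) ^ 2 ≤ (2:ℝ) ^ n * M ^ 2 := by
        have hb : ∀ s ∈ Kn n, (f (s, i)) ^ 2 ≤ M ^ 2 := by
          intro s hs
          rw [← sq_abs]
          exact pow_le_pow_left₀ (abs_nonneg _) (hM (s, i) ⟨hKsub hs, hiL⟩) 2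
        calc ∑ s ∈ Kn n, (f (s, i)) ^ 2 ≤ ∑ s ∈ Kn n, M ^ 2 := Finset.sum_le_sum hb
          _ = (2:ℝ) ^ n * M ^ 2 := by
            rw [Finset.sum_const, hKcard, nsmul_eq_mul]; push_cast; ring
      have hCile : (Ci.card : ℝ) ≤ n := by
        exact_mod_cast le_trans (Finset.card_filter_le _ _) (le_of_eq hLcard)
      have hA1 : |A1| ≤ Real.sqrt n * 2 ^ n * M := by
        refine abs_le_of_sq_le_sq ?_ (by positivity)
        calc A1 ^ 2 ≤ (∑ s ∈ Kn n, (∑ j ∈ Ci, (φ n s j : ℝ)) ^ 2)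
              * ∑ s ∈ Kn n, (f (s, i)) ^ 2 :=
            Finset.sum_mul_sq_le_sq_mul_sq (Kn n) _ _
          _ ≤ ((Ci.card : ℝ) * 2 ^ n) * ((2:ℝ) ^ n * M ^ 2) := by
            rw [hsq1]
            refine mul_le_mul_of_nonneg_left hsq2 (by positivity)
          _ ≤ ((n : ℝ) * 2 ^ n) * ((2:ℝ) ^ n * M ^ 2) := by
            have h2 : (0:ℝ) ≤ (2:ℝ) ^ n * M ^ 2 := by positivity
            refine mul_le_mul_of_nonneg_right (mul_le_mul_of_nonneg_right hCile
              (by positivity)) h2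
          _ = (Real.sqrt n * 2 ^ n * M) ^ 2 := by
            rw [mul_pow, mul_pow, Real.sq_sqrt (le_of_lt hnR)]; ring
      have hA2 : |A2| ≤ (Ci.card : ℝ) * 2 ^ n * ε := by
        refine le_trans (Finset.abs_sum_le_sum_abs _ _) ?_
        have hj2 : ∀ j ∈ Ci, |∑ s ∈ Kn n, (φ n s j : ℝ) * (f (s, j) - f (s, i))|
            ≤ (2:ℝ) ^ n * ε := by
          intro j hj
          refine le_trans (Finset.abs_sum_le_sum_abs _ _) ?_
          have hterm : ∀ s ∈ Kn n, |(φ n s j : ℝ) * (f (s, j) - f (s, i))| ≤ ε := by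
            intro s hs
            rw [abs_mul]
            have hφ1 : |(φ n s j : ℝ)| = 1 := by
              rcases hφ n hn s hs j (hCisub hj) with h | h <;> rw [h] <;> norm_num
            rw [hφ1, one_mul]
            have hjL : j ∈ L := hLsub (hCisub hj)
            have hti : t j = i := (Finset.mem_filter.1 hj).2
            have hjV : j ∈ V i := hti ▸ (ht j hjL).2
            exact le_of_lt ((hVL i hiL).2 s (hKsub hs) j hjV)
          calc ∑ s ∈ Kn n, |(φ n s j : ℝ) * (f (s, j) - f (s, i))|
              ≤ ∑ _s ∈ Kn n, ε := Finset.sum_le_sum hterm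
            _ = (2:ℝ) ^ n * ε := by
              rw [Finset.sum_const, hKcard, nsmul_eq_mul]; push_cast; ring
        calc ∑ j ∈ Ci, |∑ s ∈ Kn n, (φ n s j : ℝ) * (f (s, j) - f (s, i))|
            ≤ ∑ _j ∈ Ci, (2:ℝ) ^ n * ε := Finset.sum_le_sum hj2
          _ = (Ci.card : ℝ) * 2 ^ n * ε := by rw [Finset.sum_const, nsmul_eq_mul]; ring
      calc |∑ j ∈ Ci, g j| = |A1 + A2| := by rw [hdec]
        _ ≤ |A1| + |A2| := abs_add_le _ _
        _ ≤ Real.sqrt n * 2 ^ n * M + (Ci.card : ℝ) * 2 ^ n * ε := add_le_add hA1 hA2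
    -- total bound
    have htot : |∑ j ∈ Ln n, g j|
        ≤ (m : ℝ) * (Real.sqrt n * 2 ^ n * M) + (n : ℝ) * 2 ^ n * ε := by
      rw [← hfiber]
      refine le_trans (Finset.abs_sum_le_sum_abs _ _) ?_
      calc ∑ i ∈ Tf, |∑ j ∈ (Ln n).filter (fun j => t j = i), g j|
          ≤ ∑ i ∈ Tf, (Real.sqrt n * 2 ^ n * M
            + (((Ln n).filter (fun j => t j = i)).card : ℝ) * 2 ^ n * ε) :=
            Finset.sum_le_sum hper
        _ = (m : ℝ) * (Real.sqrt n * 2 ^ n * M) + (n : ℝ) * 2 ^ n * ε := by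
            rw [Finset.sum_add_distrib, Finset.sum_const, nsmul_eq_mul, hmdef]
            congr 1
            have : ∑ i ∈ Tf, (((Ln n).filter (fun j => t j = i)).card : ℝ) * 2 ^ n * ε
                = (∑ i ∈ Tf, (((Ln n).filter (fun j => t j = i)).card : ℝ)) * (2 ^ n * ε) := by
              rw [Finset.sum_mul]
              exact Finset.sum_congr rfl fun i _ => by ring
            rw [this]
            have h2 : ∑ i ∈ Tf, (((Ln n).filter (fun j => t j = i)).card : ℝ) = (n : ℝ) := by
              exact_mod_cast congrArg (Nat.cast : ℕ → ℝ) hcard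
            rw [h2]; ring
    -- the small-term estimate
    have hsmall : (m : ℝ) * M / Real.sqrt n < ε := by
      have hlt : (m : ℝ) * M / ε < Real.sqrt n := by
        rw [show ((m : ℝ) * M / ε) = Real.sqrt (((m : ℝ) * M / ε) ^ 2) by
          rw [Real.sqrt_sq (by positivity)]]
        exact Real.sqrt_lt_sqrt (by positivity) hnN1
      rw [div_lt_iff₀ hsqn]
      calc (m : ℝ) * M = ((m : ℝ) * M / ε) * ε := by field_simp
        _ < Real.sqrt n * ε := by
          exact mul_lt_mul_of_pos_right hlt hε
        _ = ε * Real.sqrt n := by ring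
    -- conclusion
    rw [Real.dist_eq, sub_zero, hsum, abs_div, abs_of_pos hD]
    calc |∑ j ∈ Ln n, g j| / ((n:ℝ) * 2 ^ n)
        ≤ ((m : ℝ) * (Real.sqrt n * 2 ^ n * M) + (n : ℝ) * 2 ^ n * ε) / ((n:ℝ) * 2 ^ n) := by
          gcongr
      _ = (m : ℝ) * M / Real.sqrt n + ε := by
          have hss : Real.sqrt n * Real.sqrt n = (n : ℝ) :=
            Real.mul_self_sqrt (le_of_lt hnR)
          rw [div_eq_iff (ne_of_gt hD)]
          field_simp
          linear_combination ((m : ℝ) * M) * hss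
      _ < ε + ε := by linarith [hsmall]
      _ < εt := by rw [hεdef]; linarith
end

section
/- Let K and L be infinite compact Hausdorff spaces. For each positive integer n, let K_n ⊆ K with |K_n| = 2^n, L_n ⊆ L with |L_n| = n, let φ_n : K_n → ({−1,1}^{L_n}) be a bijection onto the set of all functions L_n → {−1,1}, and define μ_n = (1/(n·2^n)) · ∑_{(s,j) ∈ K_n × L_n} φ_n(s)(j) · δ_{(s,j)}. If (s_n) is a strictly increasing sequence of positive integers with ∑_{n=1}^{∞} 1/√(s_n) < ∞, then for all continuous functions f : K → ℝ and g : L → ℝ, the series ∑_{n=1}^{∞} |μ_{s_n}(f ⊗ g)| converges; indeed ∑_{n=1}^{∞} |μ_{s_n}(f ⊗ g)| ≤ (8/√π) · (∑_{n=1}^{∞} 1/√(s_n)) · ‖f‖_∞ · ‖g‖_∞. -/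
open Classical in
private lemma orth_aux {K L : Type*} (A : Finset K) (B : Finset L) (φ : K → L → ℤ)
    (hφ : ∀ s ∈ A, ∀ j ∈ B, φ s j = -1 ∨ φ s j = 1)
    (hbij : ∀ g : L → ℤ, (∀ j ∈ B, g j = -1 ∨ g j = 1) →
      ∃! s, s ∈ A ∧ ∀ j ∈ B, φ s j = g j)
    {j j' : L} (hj : j ∈ B) (hj' : j' ∈ B) (hne : j' ≠ j) :
    ∑ a ∈ A, (φ a j : ℝ) * φ a j' = 0 := by
  have hvalid : ∀ a ∈ A, ∀ l ∈ B,
      (if l = j then -φ a l else φ a l) = -1 ∨ (if l = j then -φ a l else φ a l) = 1 := by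
    intro a ha l hl
    rcases hφ a ha l hl with h | h <;> split <;> omega
  have H : ∀ a, a ∈ A → ∃ t, (t ∈ A ∧ ∀ l ∈ B, φ t l = (if l = j then -φ a l else φ a l)) ∧
      ∀ y, (y ∈ A ∧ ∀ l ∈ B, φ y l = (if l = j then -φ a l else φ a l)) → y = t :=
    fun a ha => hbij (fun l => if l = j then -φ a l else φ a l) (hvalid a ha)
  choose σ hspec huniq using H
  have hmem : ∀ a (ha : a ∈ A), σ a ha ∈ A := fun a ha => (hspec a ha).1
  have hpat : ∀ a (ha : a ∈ A), ∀ l ∈ B, φ (σ a ha) l = (if l = j then -φ a l else φ a l) :=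
    fun a ha => (hspec a ha).2
  refine Finset.sum_involution σ ?_ ?_ hmem ?_
  · intro a ha
    have h1 : φ (σ a ha) j = -φ a j := by simpa using hpat a ha j hj
    have h2 : φ (σ a ha) j' = φ a j' := by simpa [hne] using hpat a ha j' hj'
    rw [h1, h2]
    push_cast
    ring
  · intro a ha _
    intro h
    have h1 : φ (σ a ha) j = -φ a j := by simpa using hpat a ha j hj
    rw [h] at h1
    rcases hφ a ha j hj with h2 | h2 <;> omega
  · intro a ha
    have key : ∀ l ∈ B, φ a l = if l = j then -φ (σ a ha) l else φ (σ a ha) l := by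
      intro l hl
      by_cases hlj : l = j
      · subst hlj
        have h1 : φ (σ a ha) l = -φ a l := by simpa using hpat a ha l hl
        simp [h1]
      · have h1 : φ (σ a ha) l = φ a l := by simpa [hlj] using hpat a ha l hl
        simp [hlj, h1]
    exact (huniq (σ a ha) (hmem a ha) a ⟨ha, key⟩).symm

open Classical in
private lemma key_aux {K L : Type*} [TopologicalSpace K] [TopologicalSpace L]
    [CompactSpace K] [CompactSpace L]
    (n : ℕ) (hn : 1 ≤ n) (A : Finset K) (B : Finset L)
    (hA : A.card = 2 ^ n) (hB : B.card = n) (φ : K → L → ℤ)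
    (hφ : ∀ s ∈ A, ∀ j ∈ B, φ s j = -1 ∨ φ s j = 1)
    (hbij : ∀ g : L → ℤ, (∀ j ∈ B, g j = -1 ∨ g j = 1) →
      ∃! s, s ∈ A ∧ ∀ j ∈ B, φ s j = g j)
    (f : C(K, ℝ)) (g : C(L, ℝ)) :
    |∑ p ∈ A ×ˢ B, ((φ p.1 p.2 : ℝ) / (n * 2 ^ n)) * f p.1 * g p.2|
      ≤ ‖f‖ * ‖g‖ / Real.sqrt n := by
  have hn0 : (0:ℝ) < n := by exact_mod_cast hn
  have hsq : (0:ℝ) < Real.sqrt n := Real.sqrt_pos.mpr hn0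
  have h2n : (0:ℝ) < 2 ^ n := by positivity
  set T : K → ℝ := fun a => ∑ l ∈ B, (φ a l : ℝ) * g l with hT
  -- sum of squares identity
  have sqsum : ∑ a ∈ A, T a ^ 2 = (A.card : ℝ) * ∑ l ∈ B, g l ^ 2 := by
    calc ∑ a ∈ A, T a ^ 2
        = ∑ a ∈ A, ∑ l ∈ B, ∑ l' ∈ B, ((φ a l : ℝ) * φ a l') * (g l * g l') := by
          refine Finset.sum_congr rfl fun a _ => ?_
          rw [hT, sq, Finset.sum_mul_sum]
          exact Finset.sum_congr rfl fun l _ => Finset.sum_congr rfl fun l' _ => by ring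
      _ = ∑ l ∈ B, ∑ l' ∈ B, (∑ a ∈ A, (φ a l : ℝ) * φ a l') * (g l * g l') := by
          rw [Finset.sum_comm]
          refine Finset.sum_congr rfl fun l _ => ?_
          rw [Finset.sum_comm]
          exact Finset.sum_congr rfl fun l' _ => (Finset.sum_mul ..).symm
      _ = ∑ l ∈ B, (A.card : ℝ) * g l ^ 2 := by
          refine Finset.sum_congr rfl fun l hl => ?_
          rw [← Finset.add_sum_erase _ _ hl]
          have h0 : ∑ l' ∈ B.erase l, (∑ a ∈ A, (φ a l : ℝ) * φ a l') * (g l * g l') = 0 := by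
            refine Finset.sum_eq_zero fun l' hl' => ?_
            rw [orth_aux A B φ hφ hbij hl (Finset.mem_erase.mp hl').2
              (Finset.mem_erase.mp hl').1, zero_mul]
          have h1 : ∑ a ∈ A, (φ a l : ℝ) * φ a l = (A.card : ℝ) := by
            rw [Finset.sum_congr rfl (fun a ha => ?_), Finset.sum_const, nsmul_eq_mul, mul_one]
            rcases hφ a ha l hl with h | h <;> rw [h] <;> norm_num
          rw [h0, add_zero, h1]
          ring
      _ = (A.card : ℝ) * ∑ l ∈ B, g l ^ 2 := (Finset.mul_sum ..).symm
  -- bound on sum of |T a|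
  have hTb : ∑ a ∈ A, |T a| ≤ (2:ℝ) ^ n * Real.sqrt n * ‖g‖ := by
    have hcs : (∑ a ∈ A, |T a|) ^ 2 ≤ (A.card : ℝ) * ∑ a ∈ A, |T a| ^ 2 := by
      exact_mod_cast sq_sum_le_card_mul_sum_sq (s := A) (f := fun a => |T a|)
    have hsq2 : ∑ a ∈ A, |T a| ^ 2 = ∑ a ∈ A, T a ^ 2 :=
      Finset.sum_congr rfl fun a _ => sq_abs _
    have hg2 : ∑ l ∈ B, g l ^ 2 ≤ (n : ℝ) * ‖g‖ ^ 2 := by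
      calc ∑ l ∈ B, g l ^ 2 ≤ ∑ l ∈ B, ‖g‖ ^ 2 := by
            refine Finset.sum_le_sum fun l _ => ?_
            have h := g.norm_coe_le_norm l
            rw [Real.norm_eq_abs] at h
            obtain ⟨h1, h2⟩ := abs_le.mp h
            exact sq_le_sq' h1 h2
        _ = (n : ℝ) * ‖g‖ ^ 2 := by rw [Finset.sum_const, hB, nsmul_eq_mul]
    have hcard : (A.card : ℝ) = 2 ^ n := by exact_mod_cast hA
    have h1 : (∑ a ∈ A, |T a|) ^ 2 ≤ ((2:ℝ) ^ n * Real.sqrt n * ‖g‖) ^ 2 := by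
      have hsn : Real.sqrt n ^ 2 = (n : ℝ) := Real.sq_sqrt hn0.le
      have hgn : (0:ℝ) ≤ ‖g‖ := norm_nonneg g
      calc (∑ a ∈ A, |T a|) ^ 2 ≤ (A.card : ℝ) * ∑ a ∈ A, T a ^ 2 := by rw [hsq2] at hcs; exact hcs
        _ = (2:ℝ) ^ n * ((2:ℝ) ^ n * ∑ l ∈ B, g l ^ 2) := by rw [sqsum, hcard]
        _ ≤ (2:ℝ) ^ n * ((2:ℝ) ^ n * ((n : ℝ) * ‖g‖ ^ 2)) := by
            have := mul_le_mul_of_nonneg_left hg2 h2n.le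
            exact mul_le_mul_of_nonneg_left this h2n.le
        _ = ((2:ℝ) ^ n * Real.sqrt n * ‖g‖) ^ 2 := by rw [mul_pow, mul_pow, hsn]; ring
    have hnn : (0:ℝ) ≤ ∑ a ∈ A, |T a| := Finset.sum_nonneg fun a _ => abs_nonneg _
    have hY : (0:ℝ) ≤ (2:ℝ) ^ n * Real.sqrt n * ‖g‖ := by positivity
    nlinarith [h1, hnn, hY]
  -- main bound
  have hS : ∑ p ∈ A ×ˢ B, ((φ p.1 p.2 : ℝ) / (n * 2 ^ n)) * f p.1 * g p.2
      = ∑ a ∈ A, f a * T a / (n * 2 ^ n) := by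
    rw [Finset.sum_product]
    refine Finset.sum_congr rfl fun a _ => ?_
    rw [hT, Finset.mul_sum, Finset.sum_div]
    exact Finset.sum_congr rfl fun l _ => by ring
  rw [hS]
  calc |∑ a ∈ A, f a * T a / (n * 2 ^ n)|
      ≤ ∑ a ∈ A, |f a * T a / (n * 2 ^ n)| := Finset.abs_sum_le_sum_abs _ _
    _ ≤ ∑ a ∈ A, ‖f‖ * |T a| / (n * 2 ^ n) := by
        refine Finset.sum_le_sum fun a _ => ?_
        rw [abs_div, abs_mul]
        have h1 : |f a| ≤ ‖f‖ := f.norm_coe_le_norm a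
        have h2 : |((n : ℝ) * 2 ^ n)| = (n : ℝ) * 2 ^ n := abs_of_pos (by positivity)
        rw [h2]
        apply div_le_div_of_nonneg_right (mul_le_mul_of_nonneg_right h1 (abs_nonneg _))
          (by positivity)
    _ = ‖f‖ * (∑ a ∈ A, |T a|) / (n * 2 ^ n) := by
        rw [Finset.mul_sum, Finset.sum_div]
    _ ≤ ‖f‖ * ((2:ℝ) ^ n * Real.sqrt n * ‖g‖) / (n * 2 ^ n) := by
        apply div_le_div_of_nonneg_right _ (by positivity)
        exact mul_le_mul_of_nonneg_left hTb (norm_nonneg f)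
    _ = ‖f‖ * ‖g‖ / Real.sqrt n := by
        have hss : Real.sqrt n * Real.sqrt n = (n:ℝ) := Real.mul_self_sqrt hn0.le
        rw [div_eq_div_iff (by positivity) hsq.ne']
        linear_combination (‖f‖ * ‖g‖ * 2 ^ n) * hss

open Classical in
theorem stmt_13 {K L : Type*} [TopologicalSpace K] [TopologicalSpace L]
    [CompactSpace K] [CompactSpace L] [T2Space K] [T2Space L]
    [Infinite K] [Infinite L]
    (Kn : ℕ → Finset K) (Ln : ℕ → Finset L)
    (hKn : ∀ n, 1 ≤ n → (Kn n).card = 2 ^ n)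
    (hLn : ∀ n, 1 ≤ n → (Ln n).card = n)
    (φ : ℕ → K → L → ℤ)
    (hφ : ∀ n, 1 ≤ n → ∀ s ∈ Kn n, ∀ j ∈ Ln n, φ n s j = -1 ∨ φ n s j = 1)
    (hbij : ∀ n, 1 ≤ n → ∀ g : L → ℤ, (∀ j ∈ Ln n, g j = -1 ∨ g j = 1) →
      ∃! s, s ∈ Kn n ∧ ∀ j ∈ Ln n, φ n s j = g j)
    (μ : ℕ → K × L → ℝ)
    (hμ : ∀ n, 1 ≤ n → ∀ p : K × L,
      μ n p = if p.1 ∈ Kn n ∧ p.2 ∈ Ln n then (φ n p.1 p.2 : ℝ) / (n * 2 ^ n) else 0)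
    (s : ℕ → ℕ) (hs : StrictMono s) (hs1 : ∀ n, 1 ≤ s n)
    (hsum : Summable fun n => 1 / Real.sqrt (s n))
    (f : C(K, ℝ)) (g : C(L, ℝ)) :
    (Summable fun n =>
      |∑ p ∈ Kn (s n) ×ˢ Ln (s n), μ (s n) p * f p.1 * g p.2|) ∧
    (∑' n, |∑ p ∈ Kn (s n) ×ˢ Ln (s n), μ (s n) p * f p.1 * g p.2|)
      ≤ (8 / Real.sqrt Real.pi) * (∑' n, 1 / Real.sqrt (s n)) * ‖f‖ * ‖g‖ := by
  have key : ∀ n, |∑ p ∈ Kn (s n) ×ˢ Ln (s n), μ (s n) p * f p.1 * g p.2|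
      ≤ ‖f‖ * ‖g‖ * (1 / Real.sqrt (s n)) := by
    intro n
    have hrw : ∑ p ∈ Kn (s n) ×ˢ Ln (s n), μ (s n) p * f p.1 * g p.2
        = ∑ p ∈ Kn (s n) ×ˢ Ln (s n),
          ((φ (s n) p.1 p.2 : ℝ) / ((s n) * 2 ^ (s n))) * f p.1 * g p.2 := by
      refine Finset.sum_congr rfl fun p hp => ?_
      rw [hμ (s n) (hs1 n) p, if_pos (Finset.mem_product.mp hp)]
    rw [hrw]
    have := key_aux (s n) (hs1 n) (Kn (s n)) (Ln (s n)) (hKn (s n) (hs1 n))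
      (hLn (s n) (hs1 n)) (φ (s n)) (hφ (s n) (hs1 n)) (hbij (s n) (hs1 n)) f g
    exact this.trans (le_of_eq (by ring))
  have hsum2 : Summable fun n => ‖f‖ * ‖g‖ * (1 / Real.sqrt (s n)) :=
    (hsum.mul_left (‖f‖ * ‖g‖))
  have hsummable : Summable fun n =>
      |∑ p ∈ Kn (s n) ×ˢ Ln (s n), μ (s n) p * f p.1 * g p.2| :=
    hsum2.of_nonneg_of_le (fun n => abs_nonneg _) key
  refine ⟨hsummable, ?_⟩
  have h1 : (∑' n, |∑ p ∈ Kn (s n) ×ˢ Ln (s n), μ (s n) p * f p.1 * g p.2|)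
      ≤ ∑' n, ‖f‖ * ‖g‖ * (1 / Real.sqrt (s n)) :=
    Summable.tsum_le_tsum key hsummable hsum2
  rw [tsum_mul_left] at h1
  have hSig : (0:ℝ) ≤ ∑' n, 1 / Real.sqrt (s n) :=
    tsum_nonneg fun n => by positivity
  have hpi : Real.sqrt Real.pi ≤ 2 := by
    nlinarith [Real.sq_sqrt Real.pi_pos.le, Real.sqrt_nonneg Real.pi, Real.pi_le_four]
  have hpi0 : (0:ℝ) < Real.sqrt Real.pi := Real.sqrt_pos.mpr Real.pi_pos
  have hc : (1:ℝ) ≤ 8 / Real.sqrt Real.pi := by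
    rw [le_div_iff₀ hpi0]
    linarith
  have hfg : (0:ℝ) ≤ ‖f‖ * ‖g‖ := mul_nonneg (norm_nonneg f) (norm_nonneg g)
  nlinarith [mul_nonneg hfg hSig]
end

section
/- Let X be a Tychonoff (completely regular Hausdorff) space and let (μ_n) be a JN-sequence on X such that the supports of the μ_n are pairwise disjoint and the union ⋃_n supp(μ_n) is a discrete subspace of X. Then there exists a sequence (φ_n) of continuous functions from X to [0,1] with pairwise disjoint supports such that μ_n(φ_m) = 0 for all n ≠ m and inf_n |μ_n(φ_n)| > 0. -/
theorem stmt_16 {X : Type*} [TopologicalSpace X] [T35Space X]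
    (μ : ℕ → (X →₀ ℝ))
    (hnorm : ∀ n, ((μ n).sum fun _ v => |v|) = 1)
    (hJN : ∀ f : C(X, ℝ),
      Filter.Tendsto (fun n => (μ n).sum fun x v => v * f x) Filter.atTop (nhds 0))
    (hdisj : ∀ n m, n ≠ m → Disjoint (μ n).support (μ m).support)
    (hdiscr : DiscreteTopology (⋃ n, ((μ n).support : Set X) : Set X)) :
    ∃ φ : ℕ → C(X, ℝ),
      (∀ n x, φ n x ∈ Set.Icc (0 : ℝ) 1) ∧
      (∀ n m, n ≠ m → Disjoint (Function.support (φ n)) (Function.support (φ m))) ∧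
      (∀ n m, n ≠ m → ((μ n).sum fun x v => v * φ m x) = 0) ∧
      0 < ⨅ n, |(μ n).sum fun x v => v * φ n x| := by
  classical
  set D : Set X := ⋃ n, ((μ n).support : Set X) with hDdef
  have hDx : ∀ n, ∀ x ∈ (μ n).support, x ∈ D := fun n x hx =>
    Set.mem_iUnion.mpr ⟨n, Finset.mem_coe.mpr hx⟩
  -- Step 1: bump functions at each point of D
  have key : ∀ x : X, ∃ f : C(X, ℝ), (∀ y, f y ∈ Set.Icc (0:ℝ) 1) ∧
      (x ∈ D → f x = 1 ∧ ∀ y ∈ D, y ≠ x → f y = 0) := by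
    intro x
    by_cases hx : x ∈ D
    · have hopen : IsOpen {(⟨x, hx⟩ : D)} := isOpen_discrete _
      obtain ⟨U, hU, hUx⟩ := isOpen_induced_iff.mp hopen
      have hxU : x ∈ U := by
        have : (⟨x, hx⟩ : D) ∈ Subtype.val ⁻¹' U := by rw [hUx]; rfl
        exact this
      obtain ⟨f, cf, hf0, hf1⟩ := CompletelyRegularSpace.completely_regular x Uᶜ
        hU.isClosed_compl (by simpa using hxU)
      refine ⟨⟨fun y => 1 - (f y : ℝ),
        continuous_const.sub (continuous_subtype_val.comp cf)⟩, ?_, fun _ => ⟨?_, ?_⟩⟩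
      · intro y
        have := (f y).2
        simp only [Set.mem_Icc] at this
        simp only [ContinuousMap.coe_mk, Set.mem_Icc]
        constructor <;> linarith [this.1, this.2]
      · simp only [ContinuousMap.coe_mk]
        have : ((f x : ℝ)) = 0 := by rw [hf0]; rfl
        rw [this]; ring
      · intro y hy hyx
        have hyU : y ∉ U := by
          intro hyU
          have : (⟨y, hy⟩ : D) ∈ Subtype.val ⁻¹' U := hyU
          rw [hUx] at this
          exact hyx (congrArg Subtype.val this)
        have : f y = 1 := hf1 hyU
        simp only [ContinuousMap.coe_mk]
        have : ((f y : ℝ)) = 1 := by rw [this]; rfl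
        rw [this]; ring
    · exact ⟨⟨fun _ => 0, continuous_const⟩, fun y => by simp, fun h => absurd h hx⟩
  choose f hf01 hfD using key
  -- Step 2: choose majority-sign parts F n
  set P : ℕ → ℝ := fun n => ∑ x ∈ (μ n).support.filter (fun x => 0 < μ n x), μ n x with hP
  set F : ℕ → Finset X := fun n =>
    if 1/2 ≤ P n then (μ n).support.filter (fun x => 0 < μ n x)
    else (μ n).support.filter (fun x => ¬ 0 < μ n x) with hFdef
  have hFsub : ∀ n, F n ⊆ (μ n).support := by
    intro n; rw [hFdef]; dsimp only; split_ifs <;> exact Finset.filter_subset _ _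
  have hFsum : ∀ n, 1/2 ≤ |∑ x ∈ F n, μ n x| := by
    intro n
    have hsplit := Finset.sum_filter_add_sum_filter_not (μ n).support
      (fun x => 0 < μ n x) (fun x => |μ n x|)
    have h1 : ∑ x ∈ (μ n).support, |μ n x| = 1 := hnorm n
    have hA : ∑ x ∈ (μ n).support.filter (fun x => 0 < μ n x), |μ n x| = P n := by
      rw [hP]
      exact Finset.sum_congr rfl fun x hx => abs_of_pos (Finset.mem_filter.mp hx).2
    have hB : ∑ x ∈ (μ n).support.filter (fun x => ¬ 0 < μ n x), |μ n x|
        = -∑ x ∈ (μ n).support.filter (fun x => ¬ 0 < μ n x), μ n x := by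
      rw [← Finset.sum_neg_distrib]
      refine Finset.sum_congr rfl fun x hx => ?_
      have hx' := Finset.mem_filter.mp hx
      have : μ n x ≤ 0 := not_lt.mp hx'.2
      exact abs_of_nonpos this
    rw [hFdef]; dsimp only; split_ifs with h
    · have : 0 ≤ P n := le_trans (by norm_num) h
      rw [abs_of_nonneg this]; exact h
    · push_neg at h
      have hBval : -∑ x ∈ (μ n).support.filter (fun x => ¬ 0 < μ n x), μ n x = 1 - P n := by
        rw [← hB, ← hA] at *; linarith [hsplit, h1]
      have : ∑ x ∈ (μ n).support.filter (fun x => ¬ 0 < μ n x), μ n x = P n - 1 := by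
        linarith
      rw [this, abs_of_nonpos (by linarith)]
      linarith
  -- Step 3: the functions g n
  set g : ℕ → X → ℝ := fun n x => min (∑ y ∈ F n, f y x) 1 with hgdef
  have hgcont : ∀ n, Continuous (g n) := fun n =>
    (continuous_finset_sum _ fun y _ => (f y).continuous).min continuous_const
  have hg0 : ∀ n x, 0 ≤ g n x := fun n x =>
    le_min (Finset.sum_nonneg fun y _ => (hf01 y x).1) zero_le_one
  have hg1 : ∀ n x, g n x ≤ 1 := fun n x => min_le_right _ _
  have hgD : ∀ n x, x ∈ D → g n x = (if x ∈ F n then 1 else 0) := by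
    intro n x hx
    by_cases hxF : x ∈ F n
    · have hsum : ∑ y ∈ F n, f y x = 1 := by
        rw [Finset.sum_eq_single x]
        · exact (hfD x hx).1
        · intro y hy hyx
          have hyD : y ∈ D := hDx n y (hFsub n hy)
          exact (hfD y hyD).2 x hx (fun h => hyx h.symm)
        · intro h; exact absurd hxF h
      rw [hgdef]; dsimp only; rw [hsum, if_pos hxF, min_self]
    · have hsum : ∑ y ∈ F n, f y x = 0 := by
        refine Finset.sum_eq_zero fun y hy => ?_
        have hyD : y ∈ D := hDx n y (hFsub n hy)
        exact (hfD y hyD).2 x hx (fun h => hxF (h ▸ hy))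
      rw [hgdef]; dsimp only; rw [hsum, if_neg hxF, min_eq_left zero_le_one]
  -- Step 4: the function S
  set a : ℕ → ℝ := fun n => (1/2 : ℝ)^(n+1) with hadef
  have hapos : ∀ n, 0 < a n := fun n => pow_pos (by norm_num) _
  have haSummable : Summable a := by
    have : Summable fun n : ℕ => (1/2 : ℝ)^n :=
      summable_geometric_of_lt_one (by norm_num) (by norm_num)
    have h2 := this.mul_right (1/2 : ℝ)
    refine h2.congr fun n => ?_
    rw [hadef]; dsimp only; rw [pow_succ]
  set S : X → ℝ := fun x => ∑' k, a k * g k x with hSdef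
  have hScont : Continuous S := by
    refine continuous_tsum (fun k => continuous_const.mul (hgcont k)) haSummable ?_
    intro k x
    rw [Real.norm_eq_abs, abs_mul, abs_of_pos (hapos k), abs_of_nonneg (hg0 k x)]
    calc a k * g k x ≤ a k * 1 := by
          exact mul_le_mul_of_nonneg_left (hg1 k x) (hapos k).le
      _ = a k := mul_one _
  have hSsupp : ∀ n x, x ∈ (μ n).support → S x = (if x ∈ F n then a n else 0) := by
    intro n x hx
    have hxD : x ∈ D := hDx n x hx
    have h0 : ∀ k, k ≠ n → a k * g k x = 0 := by
      intro k hk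
      have hxFk : x ∉ F k := by
        intro hmem
        exact Finset.disjoint_left.mp (hdisj k n hk) (hFsub k hmem) hx
      rw [hgD k x hxD, if_neg hxFk, mul_zero]
    rw [hSdef]; dsimp only
    rw [tsum_eq_single n h0, hgD n x hxD]
    split_ifs <;> simp
  -- Step 5: the tent functions φ
  set φf : ℕ → X → ℝ := fun n x => max 0 (1 - |S x - a n| / (a n / 4)) with hφdef
  have hφcont : ∀ n, Continuous (φf n) := fun n =>
    continuous_const.max
      ((continuous_const.sub (((hScont.sub continuous_const).abs).div_const _)))
  have hφ0 : ∀ n x, 0 ≤ φf n x := fun n x => le_max_left _ _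
  have hφ1 : ∀ n x, φf n x ≤ 1 := by
    intro n x
    refine max_le zero_le_one ?_
    have : 0 ≤ |S x - a n| / (a n / 4) := div_nonneg (abs_nonneg _) (by linarith [hapos n])
    linarith
  have hzero : ∀ m x, a m / 4 ≤ |S x - a m| → φf m x = 0 := by
    intro m x h
    rw [hφdef]; dsimp only
    rw [max_eq_left]
    rw [sub_nonpos]
    exact (one_le_div (by linarith [hapos m])).mpr h
  have hone : ∀ n x, S x = a n → φf n x = 1 := by
    intro n x h
    rw [hφdef]; dsimp only
    rw [h, sub_self, abs_zero, zero_div, sub_zero, max_eq_right zero_le_one]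
  have hsuppφ : ∀ n x, φf n x ≠ 0 → |S x - a n| < a n / 4 := by
    intro n x h
    by_contra hge
    push_neg at hge
    exact h (hzero n x hge)
  have hamon : ∀ n m : ℕ, n < m → a m ≤ a n / 2 := by
    intro n m hnm
    rw [hadef]; dsimp only
    have : (1/2 : ℝ)^(m+1) ≤ (1/2 : ℝ)^(n+2) :=
      pow_le_pow_of_le_one (by norm_num) (by norm_num) (by omega)
    calc (1/2 : ℝ)^(m+1) ≤ (1/2 : ℝ)^(n+2) := this
      _ = (1/2 : ℝ)^(n+1) / 2 := by rw [pow_succ]; ring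
  -- values of S on supports: S x = a n only on F n, else 0, so φ m x = 0 for x ∈ supp μ n, m ≠ n
  have hφzero_on : ∀ n m, n ≠ m → ∀ x ∈ (μ n).support, φf m x = 0 := by
    intro n m hnm x hx
    have hS := hSsupp n x hx
    refine hzero m x ?_
    by_cases hxF : x ∈ F n
    · rw [hS, if_pos hxF]
      rcases lt_or_gt_of_ne (fun h : n = m => hnm h) with h | h
      · -- n < m : a n - a m ≥ a m
        have h1 := hamon n m h
        have h2 := hapos m
        have h3 := hapos n
        rw [abs_of_pos (by linarith)]
        linarith
      · -- m < n : a m - a n ≥ a m / 2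
        have h1 := hamon m n h
        have h2 := hapos m
        have h3 := hapos n
        rw [abs_of_neg (by linarith), neg_sub]
        linarith
    · rw [hS, if_neg hxF, abs_of_neg (by linarith [hapos m]), neg_sub, sub_zero]
      linarith [hapos m]
  refine ⟨fun n => ⟨φf n, hφcont n⟩, ?_, ?_, ?_, ?_⟩
  · exact fun n x => ⟨hφ0 n x, hφ1 n x⟩
  · intro n m hnm
    have aux : ∀ p q : ℕ, p < q → Disjoint (Function.support (φf p)) (Function.support (φf q)) := by
      intro p q hpq
      rw [Set.disjoint_left]
      intro x hxp hxq
      have h1 := hsuppφ p x hxp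
      have h2 := hsuppφ q x hxq
      have h3 := hamon p q hpq
      have h4 := hapos p
      have h5 := hapos q
      have e1 : (3/4) * a p < S x := by
        have := abs_lt.mp h1
        linarith [this.1]
      have e2 : S x < (5/4) * a q := by
        have := abs_lt.mp h2
        linarith [this.2]
      linarith
    rcases lt_or_gt_of_ne hnm with h | h
    · exact aux n m h
    · exact (aux m n h).symm
  · intro n m hnm
    rw [Finsupp.sum]
    refine Finset.sum_eq_zero fun x hx => ?_
    have : φf m x = 0 := hφzero_on n m hnm x hx
    simp only [ContinuousMap.coe_mk, this, mul_zero]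
  · have hval : ∀ n, ((μ n).sum fun x v => v * φf n x) = ∑ x ∈ F n, μ n x := by
      intro n
      rw [Finsupp.sum]
      rw [← Finset.sum_subset (hFsub n) (fun x hx hxF => ?_)]
      · refine Finset.sum_congr rfl fun x hx => ?_
        have hS := hSsupp n x (hFsub n hx)
        rw [if_pos hx] at hS
        rw [hone n x hS, mul_one]
      · have hS := hSsupp n x hx
        rw [if_neg hxF] at hS
        have : φf n x = 0 := by
          refine hzero n x ?_
          rw [hS, abs_of_neg (by linarith [hapos n]), neg_sub, sub_zero]
          linarith [hapos n]
        rw [this, mul_zero]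
    have hlb : (1/2 : ℝ) ≤ ⨅ n, |(μ n).sum fun x v => v * (⟨φf n, hφcont n⟩ : C(X,ℝ)) x| := by
      refine le_ciInf fun n => ?_
      have : ((μ n).sum fun x v => v * (⟨φf n, hφcont n⟩ : C(X,ℝ)) x)
          = ∑ x ∈ F n, μ n x := hval n
      rw [this]
      exact hFsum n
    linarith [hlb]
end

section
/- Let X and Y be Tychonoff (completely regular Hausdorff) topological spaces containing infinite compact subsets. Then X × Y admits a complemented JN-sequence: there exist a JN-sequence (μ_n) on X × Y and a sequence (φ_n) of continuous non-negative real-valued functions on X × Y with pairwise disjoint supports such that sup_{z ∈ X × Y} φ_n(z) = 1 for every n, μ_n(φ_m) = 0 for all n ≠ m, and inf_n |μ_n(φ_n)| > 0. -/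
open Finset

/-- Sylvester-Hadamard sign matrix, recursively defined. -/
noncomputable def Had : ℕ → ℕ → ℕ → ℝ
  | 0, _, _ => 1
  | (n+1), i, j => Had n (i/2) (j/2) * (if i % 2 = 1 ∧ j % 2 = 1 then -1 else 1)

lemma had_cases (n i j : ℕ) : Had n i j = 1 ∨ Had n i j = -1 := by
  induction n generalizing i j with
  | zero => left; rfl
  | succ n ih =>
    rcases ih (i/2) (j/2) with h | h <;>
    · simp only [Had, h]
      by_cases hc : i % 2 = 1 ∧ j % 2 = 1 <;> simp [hc]

lemma had_abs (n i j : ℕ) : |Had n i j| = 1 := by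
  rcases had_cases n i j with h | h <;> simp [h]

lemma had_sq (n i j : ℕ) : Had n i j * Had n i j = 1 := by
  rcases had_cases n i j with h | h <;> simp [h]

lemma had_zero (n : ℕ) : Had n 0 0 = 1 := by
  induction n with
  | zero => rfl
  | succ n ih => simp [Had, ih]

lemma had_even_left (n a j : ℕ) : Had (n+1) (2*a) j = Had n a (j/2) := by
  have h1 : (2*a) / 2 = a := by omega
  have h2 : (2*a) % 2 = 0 := by omega
  simp [Had, h1, h2]

lemma had_odd_left (n a j : ℕ) :
    Had (n+1) (2*a+1) j = Had n a (j/2) * (if j % 2 = 1 then -1 else 1) := by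
  have h1 : (2*a+1) / 2 = a := by omega
  have h2 : (2*a+1) % 2 = 1 := by omega
  simp [Had, h1, h2]

lemma sum_range_two_mul (m : ℕ) (f : ℕ → ℝ) :
    ∑ i ∈ range (2*m), f i = ∑ a ∈ range m, (f (2*a) + f (2*a+1)) := by
  induction m with
  | zero => simp
  | succ m ih =>
    have : 2 * (m+1) = (2*m) + 1 + 1 := by ring
    rw [this, Finset.sum_range_succ, Finset.sum_range_succ, ih, Finset.sum_range_succ]
    ring

lemma had_orth (n : ℕ) : ∀ j j' : ℕ, j < 2^n → j' < 2^n →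
    ∑ i ∈ range (2^n), Had n i j * Had n i j' = if j = j' then (2^n : ℝ) else 0 := by
  induction n with
  | zero =>
    intro j j' hj hj'
    interval_cases j <;> interval_cases j' <;> simp [Had]
  | succ n ih =>
    intro j j' hj hj'
    have h2 : (2:ℕ)^(n+1) = 2 * 2^n := by ring
    rw [h2, sum_range_two_mul]
    have hjd : j / 2 < 2^n := by omega
    have hjd' : j' / 2 < 2^n := by omega
    set ε : ℕ → ℝ := fun j => if j % 2 = 1 then -1 else 1 with hε
    have : ∀ a ∈ range (2^n),
        (Had (n+1) (2*a) j * Had (n+1) (2*a) j' +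
          Had (n+1) (2*a+1) j * Had (n+1) (2*a+1) j')
        = Had n a (j/2) * Had n a (j'/2) * (1 + ε j * ε j') := by
      intro a _
      rw [had_even_left, had_even_left, had_odd_left, had_odd_left]
      ring
    rw [Finset.sum_congr rfl this, ← Finset.sum_mul, ih _ _ hjd hjd']
    by_cases hjj : j = j'
    · subst hjj
      have hee : ε j * ε j = 1 := by
        by_cases h : j % 2 = 1 <;> simp [hε, h]
      rw [if_pos rfl, if_pos rfl, hee, pow_succ]
      push_cast
      ring
    · rw [if_neg hjj]
      by_cases hpar : j % 2 = j' % 2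
      · have hd2 : j / 2 ≠ j' / 2 := by omega
        rw [if_neg hd2]
        ring
      · have hee : ε j * ε j' = -1 := by
          rcases Nat.mod_two_eq_zero_or_one j with h | h <;>
            rcases Nat.mod_two_eq_zero_or_one j' with h' | h'
          · exact absurd (h.trans h'.symm) hpar
          · simp [hε, h, h']
          · simp [hε, h, h']
          · exact absurd (h.trans h'.symm) hpar
        rw [hee]
        ring
lemma sum_had (n : ℕ) :
    ∑ i ∈ range (2^n), ∑ j ∈ range (2^n), Had n i j = (2^n : ℝ) := by
  induction n with
  | zero => simp [Had]
  | succ n ih =>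
    have h2 : (2:ℕ)^(n+1) = 2 * 2^n := by ring
    rw [h2, sum_range_two_mul]
    have : ∀ a ∈ range (2^n),
        (∑ j ∈ range (2 * 2^n), Had (n+1) (2*a) j
          + ∑ j ∈ range (2 * 2^n), Had (n+1) (2*a+1) j)
        = 2 * ∑ b ∈ range (2^n), Had n a b := by
      intro a _
      rw [sum_range_two_mul, sum_range_two_mul]
      rw [← Finset.sum_add_distrib, Finset.mul_sum]
      refine Finset.sum_congr rfl fun b _ => ?_
      rw [had_even_left, had_even_left, had_odd_left, had_odd_left]
      have e1 : (2*b) / 2 = b := by omega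
      have e2 : (2*b+1) / 2 = b := by omega
      have e3 : (2*b) % 2 = 0 := by omega
      have e4 : (2*b+1) % 2 = 1 := by omega
      rw [e1, e2, e3, e4]
      norm_num
      ring
    rw [Finset.sum_congr rfl this, ← Finset.mul_sum, ih, pow_succ]
    push_cast
    ring

/-- Cauchy–Schwarz / orthogonality estimate for the Hadamard bilinear form. -/
lemma had_key (n : ℕ) (u v : ℕ → ℝ) :
    (∑ i ∈ range (2^n), ∑ j ∈ range (2^n), Had n i j * u i * v j)^2
      ≤ 2^n * ((∑ i ∈ range (2^n), (u i)^2) * (∑ j ∈ range (2^n), (v j)^2)) := by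
  set s := range (2^n) with hs
  set t : ℕ → ℝ := fun i => ∑ j ∈ s, Had n i j * v j with ht
  have h1 : ∑ i ∈ s, ∑ j ∈ s, Had n i j * u i * v j = ∑ i ∈ s, u i * t i := by
    refine Finset.sum_congr rfl fun i _ => ?_
    rw [ht, Finset.mul_sum]
    refine Finset.sum_congr rfl fun j _ => ?_
    ring
  have h2 : ∑ i ∈ s, (t i)^2 = 2^n * ∑ j ∈ s, (v j)^2 := by
    have expand : ∀ i ∈ s, (t i)^2
        = ∑ j ∈ s, ∑ j' ∈ s, (Had n i j * Had n i j') * (v j * v j') := by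
      intro i _
      rw [ht, sq, Finset.sum_mul_sum]
      refine Finset.sum_congr rfl fun j _ => Finset.sum_congr rfl fun j' _ => by ring
    rw [Finset.sum_congr rfl expand]
    rw [Finset.sum_comm]
    have : ∀ j ∈ s, ∑ i ∈ s, ∑ j' ∈ s, (Had n i j * Had n i j') * (v j * v j')
        = 2^n * (v j)^2 := by
      intro j hj
      rw [Finset.sum_comm]
      have inner : ∀ j' ∈ s, ∑ i ∈ s, (Had n i j * Had n i j') * (v j * v j')
          = (if j = j' then (2^n : ℝ) else 0) * (v j * v j') := by
        intro j' hj'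
        rw [← Finset.sum_mul]
        rw [had_orth n j j' (Finset.mem_range.mp hj) (Finset.mem_range.mp hj')]
      rw [Finset.sum_congr rfl inner]
      simp only [ite_mul, zero_mul]
      rw [Finset.sum_ite_eq]
      simp only [hj, if_pos]
      ring
    rw [Finset.sum_congr rfl this, ← Finset.mul_sum]
  calc (∑ i ∈ s, ∑ j ∈ s, Had n i j * u i * v j)^2
      = (∑ i ∈ s, u i * t i)^2 := by rw [h1]
    _ ≤ (∑ i ∈ s, (u i)^2) * (∑ i ∈ s, (t i)^2) := by
        simpa [sq] using Finset.sum_mul_sq_le_sq_mul_sq s u t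
    _ = 2^n * ((∑ i ∈ s, (u i)^2) * (∑ j ∈ s, (v j)^2)) := by rw [h2]; ring
section Topo

variable {W : Type*} [TopologicalSpace W] [T35Space W]

lemma step_ex {K S G : Set W} (hS : S.Infinite) (hSK : S ⊆ K) (hG : IsOpen G)
    (hSG : S ⊆ G) :
    ∃ (x : W) (O S' G' : Set W), x ∈ K ∧ IsOpen O ∧ x ∈ O ∧ O ⊆ G ∧
      S'.Infinite ∧ S' ⊆ K ∧ IsOpen G' ∧ S' ⊆ G' ∧ G' ⊆ G ∧ Disjoint G' O := by
  obtain ⟨a, ha, b, hb, hab⟩ := hS.nontrivial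
  obtain ⟨A0, B0, hA0, hB0, haA, hbB, hAB⟩ := t2_separation hab
  -- find x ∈ S and open Wo ⊆ G with x ∈ Wo and (S \ Wo) infinite
  have main : ∃ (x : W) (Wo : Set W), x ∈ S ∧ IsOpen Wo ∧ x ∈ Wo ∧ Wo ⊆ G ∧
      (S \ Wo).Infinite := by
    by_cases hcase : (S \ (A0 ∩ G)).Infinite
    · exact ⟨a, A0 ∩ G, ha, hA0.inter hG, ⟨haA, hSG ha⟩, Set.inter_subset_right, hcase⟩
    · have hfin : (S \ (A0 ∩ G)).Finite := Set.not_infinite.mp hcase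
      have hSA : (S ∩ (A0 ∩ G)).Infinite := by
        have := hS.diff hfin
        exact this.mono (fun z hz => ⟨hz.1, by
          by_contra hzc
          exact hz.2 ⟨hz.1, hzc⟩⟩)
      refine ⟨b, B0 ∩ G, hb, hB0.inter hG, ⟨hbB, hSG hb⟩, Set.inter_subset_right, ?_⟩
      refine hSA.mono (fun z hz => ⟨hz.1, fun hzB => ?_⟩)
      exact Set.disjoint_left.mp hAB hz.2.1 hzB.1
  obtain ⟨x, Wo, hxS, hWo, hxW, hWG, hinf⟩ := main
  obtain ⟨t, htn, htc, htW⟩ := exists_mem_nhds_isClosed_subset (hWo.mem_nhds hxW)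
  refine ⟨x, interior t, S \ Wo, G \ t, hSK hxS, isOpen_interior,
    mem_interior_iff_mem_nhds.mpr htn, (interior_subset.trans htW).trans hWG,
    hinf, fun z hz => hSK hz.1, hG.sdiff htc, ?_, Set.diff_subset, ?_⟩
  · intro z hz
    exact ⟨hSG hz.1, fun hzt => hz.2 (htW hzt)⟩
  · exact Set.disjoint_left.mpr (fun z hz hzO => hz.2 (interior_subset hzO))

lemma exists_discrete_family {K : Set W} (hKi : K.Infinite) :
    ∃ (x : ℕ → W) (O : ℕ → Set W), (∀ q, x q ∈ K) ∧ (∀ q, IsOpen (O q)) ∧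
      (∀ q, x q ∈ O q) ∧ (∀ q q', q ≠ q' → Disjoint (O q) (O q')) := by
  classical
  let T := {p : Set W × Set W // p.1.Infinite ∧ p.1 ⊆ K ∧ IsOpen p.2 ∧ p.1 ⊆ p.2}
  have hstep : ∀ t : T, ∃ r : (W × Set W) × T,
      r.1.1 ∈ K ∧ IsOpen r.1.2 ∧ r.1.1 ∈ r.1.2 ∧ r.1.2 ⊆ t.1.2 ∧
      (r.2 : T).1.2 ⊆ t.1.2 ∧ Disjoint (r.2 : T).1.2 r.1.2 := by
    rintro ⟨⟨S, G⟩, hS, hSK, hG, hSG⟩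
    obtain ⟨x, O, S', G', hxK, hO, hxO, hOG, hS', hS'K, hG', hS'G', hG'G, hdisj⟩ :=
      step_ex hS hSK hG hSG
    exact ⟨((x, O), ⟨(S', G'), hS', hS'K, hG', hS'G'⟩), hxK, hO, hxO, hOG, hG'G, hdisj⟩
  choose f hf1 hf2 hf3 hf4 hf5 hf6 using hstep
  let t0 : T := ⟨(K, Set.univ), hKi, subset_rfl, isOpen_univ, Set.subset_univ K⟩
  let seq : ℕ → T := fun n => Nat.rec t0 (fun _ t => (f t).2) n
  have hseq : ∀ n, seq (n+1) = (f (seq n)).2 := fun n => rfl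
  refine ⟨fun n => (f (seq n)).1.1, fun n => (f (seq n)).1.2,
    fun n => hf1 _, fun n => hf2 _, fun n => hf3 _, ?_⟩
  have hmono : ∀ n m, n ≤ m → (seq m).1.2 ⊆ (seq n).1.2 := by
    intro n m hnm
    induction m with
    | zero => have : n = 0 := Nat.le_zero.mp hnm; subst this; exact subset_rfl
    | succ m ih =>
      rcases Nat.lt_or_ge n (m+1) with h | h
      · exact (hseq m ▸ hf5 (seq m)).trans (ih (Nat.lt_succ_iff.mp h))
      · have : n = m + 1 := le_antisymm hnm h
        subst this; exact subset_rfl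
  have key : ∀ n m, n < m → Disjoint ((f (seq n)).1.2) ((f (seq m)).1.2) := by
    intro n m hnm
    have h1 : (f (seq m)).1.2 ⊆ (seq m).1.2 := hf4 _
    have h2 : (seq m).1.2 ⊆ (seq (n+1)).1.2 := hmono _ _ hnm
    have h3 : (seq (n+1)).1.2 ⊆ (seq n).1.2 := hseq n ▸ hf5 _
    have h4 : Disjoint ((seq (n+1)).1.2) ((f (seq n)).1.2) := hseq n ▸ hf6 _
    exact (h4.mono_left (h1.trans h2)).symm
  intro q q' hqq
  rcases Nat.lt_or_ge q q' with h | h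
  · exact key q q' h
  · exact (key q' q (lt_of_le_of_ne h (Ne.symm hqq))).symm

lemma exists_bump {O : Set W} (hO : IsOpen O) {x : W} (hx : x ∈ O) :
    ∃ u : C(W, ℝ), u x = 1 ∧ (∀ a, 0 ≤ u a) ∧ (∀ a, u a ≤ 1) ∧ ∀ a ∉ O, u a = 0 := by
  obtain ⟨g, hgc, hg0, hg1⟩ := CompletelyRegularSpace.completely_regular x Oᶜ
    (isClosed_compl_iff.mpr hO) (by simpa using hx)
  refine ⟨⟨fun a => 1 - (g a : ℝ), by
    exact continuous_const.sub (continuous_subtype_val.comp hgc)⟩, ?_, ?_, ?_, ?_⟩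
  · simp [hg0]
  · intro a; simp only [ContinuousMap.coe_mk]
    have := (g a).2.2
    linarith
  · intro a; simp only [ContinuousMap.coe_mk]
    have := (g a).2.1
    linarith
  · intro a ha
    have : g a = 1 := hg1 (by simpa using ha)
    simp [ContinuousMap.coe_mk, this]

end Topo
lemma approx_tendsto {a : ℕ → ℝ}
    (h : ∀ ε > (0:ℝ), ∃ b : ℕ → ℝ, Filter.Tendsto b Filter.atTop (nhds 0) ∧
      ∀ n, |a n - b n| ≤ ε) :
    Filter.Tendsto a Filter.atTop (nhds 0) := by
  rw [NormedAddCommGroup.tendsto_nhds_zero]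
  intro ε hε
  obtain ⟨b, hb, hab⟩ := h (ε/3) (by linarith)
  rw [NormedAddCommGroup.tendsto_nhds_zero] at hb
  filter_upwards [hb (ε/3) (by linarith)] with n hn
  have h1 := hab n
  rw [Real.norm_eq_abs] at hn ⊢
  calc |a n| = |(a n - b n) + b n| := by ring_nf
    _ ≤ |a n - b n| + |b n| := abs_add_le _ _
    _ < ε := by linarith

lemma sum_sq_le {M : ℝ} (n : ℕ) (w : ℕ → ℝ) (hw : ∀ i, |w i| ≤ M) :
    ∑ i ∈ range (2^n), (w i)^2 ≤ 2^n * M^2 := by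
  calc ∑ i ∈ range (2^n), (w i)^2 ≤ ∑ i ∈ range (2^n), M^2 := by
        refine Finset.sum_le_sum fun i _ => ?_
        have := hw i
        have h1 : (w i)^2 = |w i|^2 := (sq_abs _).symm
        rw [h1]
        exact pow_le_pow_left₀ (abs_nonneg _) this 2
    _ = 2^n * M^2 := by
        rw [Finset.sum_const, Finset.card_range, nsmul_eq_mul]
        push_cast
        ring

lemma had_tendsto_aux {M1 M2 : ℝ} (u v : ℕ → ℕ → ℝ)
    (hu : ∀ n i, |u n i| ≤ M1) (hv : ∀ n j, |v n j| ≤ M2) :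
    Filter.Tendsto (fun n => ∑ i ∈ range (2^n), ∑ j ∈ range (2^n),
      (Had n i j / 4^n) * (u n i * v n j)) Filter.atTop (nhds 0) := by
  have hM1 : 0 ≤ M1 := le_trans (abs_nonneg _) (hu 0 0)
  have hM2 : 0 ≤ M2 := le_trans (abs_nonneg _) (hv 0 0)
  set a : ℕ → ℝ := fun n => ∑ i ∈ range (2^n), ∑ j ∈ range (2^n),
      (Had n i j / 4^n) * (u n i * v n j) with ha
  have hrw : ∀ n, a n = (∑ i ∈ range (2^n), ∑ j ∈ range (2^n),
      Had n i j * u n i * v n j) * (1/4^n) := by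
    intro n
    rw [ha, Finset.sum_mul]
    refine Finset.sum_congr rfl fun i _ => ?_
    rw [Finset.sum_mul]
    refine Finset.sum_congr rfl fun j _ => ?_
    ring
  have hbound : ∀ n, (a n)^2 ≤ (M1*M2)^2 * (1/2)^n := by
    intro n
    have h4 : ((4:ℝ))^n = 2^n * 2^n := by
      rw [show (4:ℝ) = 2*2 by norm_num, mul_pow]
    have hk := had_key n (u n) (v n)
    have hu2 : ∑ i ∈ range (2^n), (u n i)^2 ≤ 2^n * M1^2 := sum_sq_le n (u n) (hu n)
    have hv2 : ∑ j ∈ range (2^n), (v n j)^2 ≤ 2^n * M2^2 := sum_sq_le n (v n) (hv n)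
    have hnn1 : (0:ℝ) ≤ ∑ i ∈ range (2^n), (u n i)^2 :=
      Finset.sum_nonneg fun i _ => sq_nonneg _
    have hnn2 : (0:ℝ) ≤ ∑ j ∈ range (2^n), (v n j)^2 :=
      Finset.sum_nonneg fun j _ => sq_nonneg _
    have hS : (∑ i ∈ range (2^n), ∑ j ∈ range (2^n), Had n i j * u n i * v n j)^2
        ≤ 2^n * ((2^n * M1^2) * (2^n * M2^2)) := by
      refine hk.trans ?_
      have : (∑ i ∈ range (2^n), (u n i)^2) * (∑ j ∈ range (2^n), (v n j)^2)
          ≤ (2^n * M1^2) * (2^n * M2^2) :=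
        mul_le_mul hu2 hv2 hnn2 (by positivity)
      have h2n : (0:ℝ) ≤ 2^n := by positivity
      exact mul_le_mul_of_nonneg_left this h2n
    rw [hrw]
    rw [mul_pow]
    calc (∑ i ∈ range (2^n), ∑ j ∈ range (2^n), Had n i j * u n i * v n j)^2 * ((1:ℝ)/4^n)^2
        ≤ (2^n * ((2^n * M1^2) * (2^n * M2^2))) * ((1:ℝ)/4^n)^2 := by
          exact mul_le_mul_of_nonneg_right hS (by positivity)
      _ = (M1*M2)^2 * (1/2)^n := by
          rw [h4]
          have h2 : (2:ℝ)^n ≠ 0 := by positivity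
          field_simp
          rw [one_div_pow]; field_simp
  have hg : Filter.Tendsto (fun n => Real.sqrt ((M1*M2)^2 * (1/2)^n))
      Filter.atTop (nhds 0) := by
    have h1 : Filter.Tendsto (fun n : ℕ => (M1*M2)^2 * (1/2)^n) Filter.atTop (nhds 0) := by
      have := tendsto_pow_atTop_nhds_zero_of_lt_one
        (by norm_num : (0:ℝ) ≤ 1/2) (by norm_num : (1:ℝ)/2 < 1)
      simpa using this.const_mul ((M1*M2)^2)
    have h2 : Filter.Tendsto Real.sqrt (nhds 0) (nhds 0) := by
      simpa using (Real.continuous_sqrt.tendsto 0)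
    exact h2.comp h1
  refine squeeze_zero_norm (fun n => ?_) hg
  rw [Real.norm_eq_abs, ← Real.sqrt_sq_eq_abs]
  exact Real.sqrt_le_sqrt (hbound n)
set_option maxHeartbeats 1000000 in
theorem stmt_17 {X Y : Type*} [TopologicalSpace X] [TopologicalSpace Y]
    [T35Space X] [T35Space Y]
    (K : Set X) (L : Set Y) (hKc : IsCompact K) (hKi : K.Infinite)
    (hLc : IsCompact L) (hLi : L.Infinite) :
    ∃ (μ : ℕ → (X × Y →₀ ℝ)) (φ : ℕ → C(X × Y, ℝ)),
      (∀ n, ((μ n).sum fun _ v => |v|) = 1) ∧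
      (∀ f : C(X × Y, ℝ),
        Filter.Tendsto (fun n => (μ n).sum fun z v => v * f z) Filter.atTop (nhds 0)) ∧
      (∀ n z, 0 ≤ φ n z) ∧
      (∀ n m, n ≠ m → Disjoint (Function.support (φ n)) (Function.support (φ m))) ∧
      (∀ n, (⨆ z : X × Y, φ n z) = 1) ∧
      (∀ n m, n ≠ m → ((μ n).sum fun z v => v * φ m z) = 0) ∧
      0 < ⨅ n, |(μ n).sum fun z v => v * φ n z| := by
  classical
  obtain ⟨xx, O, hxK, hOop, hxO, hOdis⟩ := exists_discrete_family hKi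
  obtain ⟨yy, P, hyL, hPop, hyP, hPdis⟩ := exists_discrete_family hLi
  choose u hu1 hu0 hule huz using fun q => exists_bump (hOop q) (hxO q)
  choose v hv1 hv0 hvle hvz using fun q => exists_bump (hPop q) (hyP q)
  have huvan : ∀ q q', u q (xx q') ≠ 0 → q = q' := by
    intro q q' h
    by_contra hne
    have hmem : xx q' ∈ O q := by
      by_contra hc; exact h (huz q _ hc)
    exact Set.disjoint_left.mp (hOdis q q' hne) hmem (hxO q')
  have hvvan : ∀ q q', v q (yy q') ≠ 0 → q = q' := by
    intro q q' h
    by_contra hne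
    have hmem : yy q' ∈ P q := by
      by_contra hc; exact h (hvz q _ hc)
    exact Set.disjoint_left.mp (hPdis q q' hne) hmem (hyP q')
  have hxxinj : ∀ q q', xx q = xx q' → q = q' := by
    intro q q' h
    by_contra hne
    exact Set.disjoint_left.mp (hOdis q q' hne) (hxO q) (h ▸ hxO q')
  have hyyinj : ∀ q q', yy q = yy q' → q = q' := by
    intro q q' h
    by_contra hne
    exact Set.disjoint_left.mp (hPdis q q' hne) (hyP q) (h ▸ hyP q')
  -- the measures
  let emb : ℕ → (ℕ × ℕ ↪ X × Y) := fun n =>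
    ⟨fun p => (xx (Nat.pair n p.1), yy (Nat.pair n p.2)), by
      rintro ⟨i, j⟩ ⟨i', j'⟩ h
      rw [Prod.mk.injEq] at h
      have h1 := hxxinj _ _ h.1
      have h2 := hyyinj _ _ h.2
      rw [Nat.pair_eq_pair] at h1 h2
      exact Prod.ext h1.2 h2.2⟩
  let ν : ℕ → (ℕ × ℕ →₀ ℝ) := fun n => Finsupp.onFinset (range (2^n) ×ˢ range (2^n))
    (fun p => if p.1 < 2^n ∧ p.2 < 2^n then Had n p.1 p.2 / 4^n else 0)
    (by
      intro p hp
      by_cases h : p.1 < 2^n ∧ p.2 < 2^n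
      · exact Finset.mem_product.mpr ⟨Finset.mem_range.mpr h.1, Finset.mem_range.mpr h.2⟩
      · simp [h] at hp)
  let μ : ℕ → (X × Y →₀ ℝ) := fun n => Finsupp.embDomain (emb n) (ν n)
  have hμsum : ∀ (n : ℕ) (g : X × Y → ℝ → ℝ), (∀ z, g z 0 = 0) →
      (μ n).sum g = ∑ i ∈ range (2^n), ∑ j ∈ range (2^n),
        g (xx (Nat.pair n i), yy (Nat.pair n j)) (Had n i j / 4^n) := by
    intro n g hg
    show (Finsupp.embDomain (emb n) (ν n)).sum g = _
    rw [Finsupp.sum_embDomain]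
    rw [Finsupp.sum_of_support_subset _ Finsupp.support_onFinset_subset _
      (fun p _ => hg _)]
    rw [Finset.sum_product]
    refine Finset.sum_congr rfl fun i hi => Finset.sum_congr rfl fun j hj => ?_
    have hv : (ν n) (i, j) = Had n i j / 4^n := by
      show (if (i,j).1 < 2^n ∧ (i,j).2 < 2^n then Had n (i,j).1 (i,j).2 / 4^n else 0) = _
      rw [if_pos ⟨Finset.mem_range.mp hi, Finset.mem_range.mp hj⟩]
    rw [hv]
    rfl
  have h4pow : ∀ n : ℕ, ((4:ℝ))^n = 2^n * 2^n := fun n => by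
    rw [show (4:ℝ) = 2*2 by norm_num, mul_pow]
  have hμnorm : ∀ n, ((μ n).sum fun _ w => |w|) = 1 := by
    intro n
    rw [hμsum n (fun _ w => |w|) (fun _ => abs_zero)]
    calc ∑ i ∈ range (2^n), ∑ j ∈ range (2^n), |Had n i j / 4^n|
        = ∑ i ∈ range (2^n), ∑ j ∈ range (2^n), ((1:ℝ)/4^n) := by
          refine Finset.sum_congr rfl fun i _ => Finset.sum_congr rfl fun j _ => ?_
          rw [abs_div, had_abs, abs_of_pos (by positivity : (0:ℝ) < 4^n)]
      _ = 1 := by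
          simp only [Finset.sum_const, Finset.card_range, nsmul_eq_mul]
          push_cast
          rw [h4pow n]
          have h2 : (2:ℝ)^n ≠ 0 := by positivity
          field_simp
  -- the functions φ
  let φ : ℕ → C(X × Y, ℝ) := fun n =>
    ∑ p ∈ range (2^n) ×ˢ range (2^n),
      ((Had n p.1 p.2 + 1)/2) • (((u (Nat.pair n p.1)).comp (ContinuousMap.fst)) *
        ((v (Nat.pair n p.2)).comp (ContinuousMap.snd)))
  have hφeval : ∀ n z, φ n z = ∑ p ∈ range (2^n) ×ˢ range (2^n),
      ((Had n p.1 p.2 + 1)/2) * (u (Nat.pair n p.1) z.1 * v (Nat.pair n p.2) z.2) := by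
    intro n z
    show (∑ p ∈ range (2^n) ×ˢ range (2^n), _ : C(X × Y, ℝ)) z = _
    rw [ContinuousMap.coe_sum]
    rw [Finset.sum_apply]
    refine Finset.sum_congr rfl fun p _ => ?_
    simp [ContinuousMap.coe_smul, smul_eq_mul]
  have hcH : ∀ n i j, (Had n i j + 1)/2 = 0 ∨ (Had n i j + 1)/2 = 1 := by
    intro n i j
    rcases had_cases n i j with h | h
    · right; rw [h]; norm_num
    · left; rw [h]; norm_num
  have hcH0 : ∀ n i j, 0 ≤ (Had n i j + 1)/2 := by
    intro n i j; rcases hcH n i j with h | h <;> rw [h] <;> norm_num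
  have hcH1 : ∀ n i j, (Had n i j + 1)/2 ≤ 1 := by
    intro n i j; rcases hcH n i j with h | h <;> rw [h] <;> norm_num
  have hφ0 : ∀ n z, 0 ≤ φ n z := by
    intro n z
    rw [hφeval]
    refine Finset.sum_nonneg fun p _ => ?_
    exact mul_nonneg (hcH0 n p.1 p.2) (mul_nonneg (hu0 _ _) (hv0 _ _))
  have hφle1 : ∀ n z, φ n z ≤ 1 := by
    intro n z
    rw [hφeval]
    by_cases hz : ∀ p ∈ range (2^n) ×ˢ range (2^n),
        ((Had n p.1 p.2 + 1)/2) * (u (Nat.pair n p.1) z.1 * v (Nat.pair n p.2) z.2) = 0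
    · rw [Finset.sum_eq_zero hz]; norm_num
    · push_neg at hz
      obtain ⟨p₀, hp₀, hp₀ne⟩ := hz
      have hu_ne : u (Nat.pair n p₀.1) z.1 ≠ 0 := by
        intro h; exact hp₀ne (by rw [h]; ring)
      have hv_ne : v (Nat.pair n p₀.2) z.2 ≠ 0 := by
        intro h; exact hp₀ne (by rw [h]; ring)
      have hunique : ∀ p ∈ range (2^n) ×ˢ range (2^n), p ≠ p₀ →
          ((Had n p.1 p.2 + 1)/2) * (u (Nat.pair n p.1) z.1 * v (Nat.pair n p.2) z.2) = 0 := by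
        intro p _ hp
        by_contra hne
        have hu_ne' : u (Nat.pair n p.1) z.1 ≠ 0 := by
          intro h; exact hne (by rw [h]; ring)
        have hv_ne' : v (Nat.pair n p.2) z.2 ≠ 0 := by
          intro h; exact hne (by rw [h]; ring)
        have hmem1 : z.1 ∈ O (Nat.pair n p.1) := by
          by_contra hc; exact hu_ne' (huz _ _ hc)
        have hmem1' : z.1 ∈ O (Nat.pair n p₀.1) := by
          by_contra hc; exact hu_ne (huz _ _ hc)
        have hmem2 : z.2 ∈ P (Nat.pair n p.2) := by
          by_contra hc; exact hv_ne' (hvz _ _ hc)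
        have hmem2' : z.2 ∈ P (Nat.pair n p₀.2) := by
          by_contra hc; exact hv_ne (hvz _ _ hc)
        have he1 : Nat.pair n p.1 = Nat.pair n p₀.1 := by
          by_contra hc
          exact Set.disjoint_left.mp (hOdis _ _ hc) hmem1 hmem1'
        have he2 : Nat.pair n p.2 = Nat.pair n p₀.2 := by
          by_contra hc
          exact Set.disjoint_left.mp (hPdis _ _ hc) hmem2 hmem2'
        rw [Nat.pair_eq_pair] at he1 he2
        exact hp (Prod.ext he1.2 he2.2)
      rw [Finset.sum_eq_single_of_mem p₀ hp₀ hunique]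
      calc ((Had n p₀.1 p₀.2 + 1)/2) * (u (Nat.pair n p₀.1) z.1 * v (Nat.pair n p₀.2) z.2)
          ≤ 1 * (1 * 1) := by
            refine mul_le_mul (hcH1 _ _ _) ?_ (mul_nonneg (hu0 _ _) (hv0 _ _)) zero_le_one
            exact mul_le_mul (hule _ _) (hvle _ _) (hv0 _ _) zero_le_one
        _ = 1 := by norm_num
  -- grid evaluations of φ
  have hφgrid_ne : ∀ m n i j, m ≠ n →
      φ m (xx (Nat.pair n i), yy (Nat.pair n j)) = 0 := by
    intro m n i j hmn
    rw [hφeval]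
    refine Finset.sum_eq_zero fun p _ => ?_
    have : u (Nat.pair m p.1) (xx (Nat.pair n i)) = 0 := by
      by_contra hc
      have := huvan _ _ hc
      rw [Nat.pair_eq_pair] at this
      exact hmn this.1
    rw [this]
    ring
  have hφgrid_eq : ∀ n i j, i < 2^n → j < 2^n →
      φ n (xx (Nat.pair n i), yy (Nat.pair n j)) = (Had n i j + 1)/2 := by
    intro n i j hi hj
    rw [hφeval]
    have hmem : (i, j) ∈ range (2^n) ×ˢ range (2^n) :=
      Finset.mem_product.mpr ⟨Finset.mem_range.mpr hi, Finset.mem_range.mpr hj⟩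
    rw [Finset.sum_eq_single_of_mem (i, j) hmem ?_]
    · show ((Had n i j + 1)/2) * (u (Nat.pair n i) (xx (Nat.pair n i)) *
        v (Nat.pair n j) (yy (Nat.pair n j))) = _
      rw [hu1, hv1]
      ring
    · intro p _ hp
      by_cases h1 : p.1 = i
      · have h2 : p.2 ≠ j := by
          intro h2
          exact hp (Prod.ext h1 h2)
        have : v (Nat.pair n p.2) (yy (Nat.pair n j)) = 0 := by
          by_contra hc
          have := hvvan _ _ hc
          rw [Nat.pair_eq_pair] at this
          exact h2 this.2
        rw [this]
        ring
      · have : u (Nat.pair n p.1) (xx (Nat.pair n i)) = 0 := by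
          by_contra hc
          have := huvan _ _ hc
          rw [Nat.pair_eq_pair] at this
          exact h1 this.2
        rw [this]
        ring
  -- disjointness of supports
  have hφdisj : ∀ n m, n ≠ m → Disjoint (Function.support (φ n)) (Function.support (φ m)) := by
    intro n m hnm
    rw [Set.disjoint_left]
    intro z hzn hzm
    have hn : φ n z ≠ 0 := hzn
    have hm : φ m z ≠ 0 := hzm
    rw [hφeval] at hn hm
    obtain ⟨p, _, hp⟩ := Finset.exists_ne_zero_of_sum_ne_zero hn
    obtain ⟨q, _, hq⟩ := Finset.exists_ne_zero_of_sum_ne_zero hm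
    have hun : u (Nat.pair n p.1) z.1 ≠ 0 := by
      intro h; exact hp (by rw [h]; ring)
    have hum : u (Nat.pair m q.1) z.1 ≠ 0 := by
      intro h; exact hq (by rw [h]; ring)
    have hmem1 : z.1 ∈ O (Nat.pair n p.1) := by
      by_contra hc; exact hun (huz _ _ hc)
    have hmem2 : z.1 ∈ O (Nat.pair m q.1) := by
      by_contra hc; exact hum (huz _ _ hc)
    have : Nat.pair n p.1 = Nat.pair m q.1 := by
      by_contra hc
      exact Set.disjoint_left.mp (hOdis _ _ hc) hmem1 hmem2
    rw [Nat.pair_eq_pair] at this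
    exact hnm this.1
  -- the supremum is 1
  haveI : Nonempty (X × Y) := ⟨(xx 0, yy 0)⟩
  have hφsup : ∀ n, (⨆ z : X × Y, φ n z) = 1 := by
    intro n
    have hpt : φ n (xx (Nat.pair n 0), yy (Nat.pair n 0)) = 1 := by
      rw [hφgrid_eq n 0 0 (by positivity) (by positivity), had_zero]
      norm_num
    have hbdd : BddAbove (Set.range fun z : X × Y => φ n z) := by
      refine ⟨1, ?_⟩
      rintro w ⟨z, rfl⟩
      exact hφle1 n z
    refine le_antisymm ?_ ?_
    · exact ciSup_le fun z => hφle1 n z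
    · calc (1:ℝ) = φ n (xx (Nat.pair n 0), yy (Nat.pair n 0)) := hpt.symm
        _ ≤ ⨆ z : X × Y, φ n z := le_ciSup hbdd _
  -- Stone–Weierstrass setup on the compact space ↥K × ↥L
  haveI hCK : CompactSpace ↥K := isCompact_iff_compactSpace.mp hKc
  haveI hCL : CompactSpace ↥L := isCompact_iff_compactSpace.mp hLc
  let cx : C(↥K × ↥L, X) := ⟨fun z => (z.1 : X), continuous_subtype_val.comp continuous_fst⟩
  let cy : C(↥K × ↥L, Y) := ⟨fun z => (z.2 : Y), continuous_subtype_val.comp continuous_snd⟩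
  let zpt : ℕ → ℕ → ℕ → ↥K × ↥L := fun n i j =>
    (⟨xx (Nat.pair n i), hxK _⟩, ⟨yy (Nat.pair n j), hyL _⟩)
  let T : ℕ → C(↥K × ↥L, ℝ) → ℝ := fun n F =>
    ∑ i ∈ range (2^n), ∑ j ∈ range (2^n), (Had n i j / 4^n) * F (zpt n i j)
  let tens : Set C(↥K × ↥L, ℝ) :=
    {F | ∃ (g : C(X,ℝ)) (h : C(Y,ℝ)), F = g.comp cx * h.comp cy}
  let gens : Set C(↥K × ↥L, ℝ) :=
    {F | ∃ g : C(X,ℝ), F = g.comp cx} ∪ {F | ∃ h : C(Y,ℝ), F = h.comp cy}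
  have hsumconst : ∀ (n : ℕ) (c : ℝ),
      ∑ _i ∈ range (2^n), ∑ _j ∈ range (2^n), c/4^n = c := by
    intro n c
    simp only [Finset.sum_const, Finset.card_range, nsmul_eq_mul]
    push_cast
    rw [h4pow n]
    have h2 : (2:ℝ)^n ≠ 0 := by positivity
    field_simp
  have hTlip : ∀ (n : ℕ) (F G : C(↥K × ↥L, ℝ)), |T n F - T n G| ≤ dist F G := by
    intro n F G
    have heq : T n F - T n G = ∑ i ∈ range (2^n), ∑ j ∈ range (2^n),
        (Had n i j / 4^n) * (F (zpt n i j) - G (zpt n i j)) := by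
      show (∑ i ∈ range (2^n), ∑ j ∈ range (2^n), (Had n i j / 4^n) * F (zpt n i j))
        - (∑ i ∈ range (2^n), ∑ j ∈ range (2^n), (Had n i j / 4^n) * G (zpt n i j)) = _
      rw [← Finset.sum_sub_distrib]
      refine Finset.sum_congr rfl fun i _ => ?_
      rw [← Finset.sum_sub_distrib]
      refine Finset.sum_congr rfl fun j _ => ?_
      ring
    rw [heq]
    calc |∑ i ∈ range (2^n), ∑ j ∈ range (2^n),
          (Had n i j / 4^n) * (F (zpt n i j) - G (zpt n i j))|
        ≤ ∑ i ∈ range (2^n), |∑ j ∈ range (2^n),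
          (Had n i j / 4^n) * (F (zpt n i j) - G (zpt n i j))| :=
          Finset.abs_sum_le_sum_abs _ _
      _ ≤ ∑ i ∈ range (2^n), ∑ j ∈ range (2^n),
          |(Had n i j / 4^n) * (F (zpt n i j) - G (zpt n i j))| :=
          Finset.sum_le_sum fun i _ => Finset.abs_sum_le_sum_abs _ _
      _ ≤ ∑ _i ∈ range (2^n), ∑ _j ∈ range (2^n), dist F G / 4^n := by
          refine Finset.sum_le_sum fun i _ => Finset.sum_le_sum fun j _ => ?_
          have hb : |F (zpt n i j) - G (zpt n i j)| ≤ dist F G := by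
            rw [← Real.dist_eq]
            exact ContinuousMap.dist_apply_le_dist _
          calc |(Had n i j / 4^n) * (F (zpt n i j) - G (zpt n i j))|
              = |F (zpt n i j) - G (zpt n i j)| / 4^n := by
                rw [abs_mul, abs_div, had_abs,
                  abs_of_pos (by positivity : (0:ℝ) < 4^n)]
                ring
            _ ≤ dist F G / 4^n := by gcongr
      _ = dist F G := hsumconst n _
  have hTtens : ∀ F ∈ tens, Filter.Tendsto (fun n => T n F) Filter.atTop (nhds 0) := by
    rintro F ⟨g, h, rfl⟩
    let gK : C(↥K, ℝ) := g.comp ⟨Subtype.val, continuous_subtype_val⟩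
    let hL : C(↥L, ℝ) := h.comp ⟨Subtype.val, continuous_subtype_val⟩
    have hgb : ∀ q : ℕ, |g (xx q)| ≤ ‖gK‖ := by
      intro q
      have : g (xx q) = gK ⟨xx q, hxK q⟩ := rfl
      rw [this, ← Real.norm_eq_abs]
      exact gK.norm_coe_le_norm _
    have hhb : ∀ q : ℕ, |h (yy q)| ≤ ‖hL‖ := by
      intro q
      have : h (yy q) = hL ⟨yy q, hyL q⟩ := rfl
      rw [this, ← Real.norm_eq_abs]
      exact hL.norm_coe_le_norm _
    have heq : (fun n => T n (g.comp cx * h.comp cy)) = fun n =>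
        ∑ i ∈ range (2^n), ∑ j ∈ range (2^n),
          (Had n i j / 4^n) * (g (xx (Nat.pair n i)) * h (yy (Nat.pair n j))) := by
      funext n
      show ∑ i ∈ range (2^n), ∑ j ∈ range (2^n),
        (Had n i j / 4^n) * ((g.comp cx * h.comp cy) (zpt n i j)) = _
      refine Finset.sum_congr rfl fun i _ => Finset.sum_congr rfl fun j _ => rfl
    rw [heq]
    exact had_tendsto_aux (fun n i => g (xx (Nat.pair n i)))
      (fun n j => h (yy (Nat.pair n j))) (fun n i => hgb _) (fun n j => hhb _)
  have hTzero : ∀ n, T n 0 = 0 := by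
    intro n
    refine Finset.sum_eq_zero fun i _ => Finset.sum_eq_zero fun j _ => ?_
    show (Had n i j / 4^n) * ((0 : C(↥K × ↥L, ℝ)) (zpt n i j)) = 0
    rw [ContinuousMap.zero_apply, mul_zero]
  have hTadd : ∀ n (F G : C(↥K × ↥L, ℝ)), T n (F + G) = T n F + T n G := by
    intro n F G
    show ∑ i ∈ range (2^n), ∑ j ∈ range (2^n),
        (Had n i j / 4^n) * ((F + G) (zpt n i j)) = _
    rw [← Finset.sum_add_distrib]
    refine Finset.sum_congr rfl fun i _ => ?_
    rw [← Finset.sum_add_distrib]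
    refine Finset.sum_congr rfl fun j _ => ?_
    rw [ContinuousMap.add_apply]
    ring
  have hTsmul : ∀ n (a : ℝ) (F : C(↥K × ↥L, ℝ)), T n (a • F) = a * T n F := by
    intro n a F
    show ∑ i ∈ range (2^n), ∑ j ∈ range (2^n),
        (Had n i j / 4^n) * ((a • F) (zpt n i j)) = _
    rw [Finset.mul_sum]
    refine Finset.sum_congr rfl fun i _ => ?_
    rw [Finset.mul_sum]
    refine Finset.sum_congr rfl fun j _ => ?_
    rw [ContinuousMap.smul_apply, smul_eq_mul]
    ring
  have hTspan : ∀ F ∈ Submodule.span ℝ tens,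
      Filter.Tendsto (fun n => T n F) Filter.atTop (nhds 0) := by
    intro F hF
    induction hF using Submodule.span_induction with
    | mem F hFm => exact hTtens F hFm
    | zero => simpa only [hTzero] using tendsto_const_nhds
    | add F G _ _ hF' hG' =>
        have : (fun n => T n (F + G)) = fun n => T n F + T n G := funext fun n => hTadd n F G
        rw [this]
        simpa using hF'.add hG'
    | smul a F _ hF' =>
        have : (fun n => T n (a • F)) = fun n => a * T n F := funext fun n => hTsmul n a F
        rw [this]
        simpa using hF'.const_mul a
  -- the span of tensors contains the generated subalgebra
  let Mtens : Submonoid C(↥K × ↥L, ℝ) :=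
    { carrier := tens
      one_mem' := ⟨1, 1, by ext z; simp⟩
      mul_mem' := by
        rintro F G ⟨g, h, rfl⟩ ⟨g', h', rfl⟩
        refine ⟨g * g', h * h', ?_⟩
        ext z
        simp only [ContinuousMap.mul_apply, ContinuousMap.comp_apply]
        ring }
  have hgens_sub : gens ⊆ tens := by
    rintro F (⟨g, rfl⟩ | ⟨h, rfl⟩)
    · exact ⟨g, 1, by ext z; simp⟩
    · exact ⟨1, h, by ext z; simp⟩
  have hadj_sub : ∀ F, F ∈ Algebra.adjoin ℝ gens → F ∈ Submodule.span ℝ tens := by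
    intro F hF
    have h1 : F ∈ Subalgebra.toSubmodule (Algebra.adjoin ℝ gens) := hF
    rw [Algebra.adjoin_eq_span] at h1
    have h2 : (Submonoid.closure gens : Set C(↥K × ↥L, ℝ)) ⊆ tens :=
      Submonoid.closure_le (S := Mtens) |>.mpr hgens_sub
    exact Submodule.span_mono h2 h1
  have hsep : (Algebra.adjoin ℝ gens).SeparatesPoints := by
    intro z z' hzz
    have hor : (z.1 : X) ≠ (z'.1 : X) ∨ (z.2 : Y) ≠ (z'.2 : Y) := by
      by_contra hc
      push_neg at hc
      exact hzz (Prod.ext (Subtype.ext hc.1) (Subtype.ext hc.2))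
    rcases hor with hne | hne
    · obtain ⟨g, hgc, hgne⟩ := separatesPoints_continuous_of_t35Space hne
      refine ⟨_, ⟨(⟨g, hgc⟩ : C(X, ℝ)).comp cx,
        Algebra.subset_adjoin (Or.inl ⟨⟨g, hgc⟩, rfl⟩), rfl⟩, ?_⟩
      exact hgne
    · obtain ⟨g, hgc, hgne⟩ := separatesPoints_continuous_of_t35Space hne
      refine ⟨_, ⟨(⟨g, hgc⟩ : C(Y, ℝ)).comp cy,
        Algebra.subset_adjoin (Or.inr ⟨⟨g, hgc⟩, rfl⟩), rfl⟩, ?_⟩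
      exact hgne
  have happrox : ∀ (F : C(↥K × ↥L, ℝ)) (ε : ℝ), 0 < ε →
      ∃ G ∈ Algebra.adjoin ℝ gens, dist F G ≤ ε := by
    intro F ε hε
    have hcl : F ∈ closure ((Algebra.adjoin ℝ gens : Subalgebra ℝ C(↥K × ↥L, ℝ)) : Set _) := by
      have htop := ContinuousMap.subalgebra_topologicalClosure_eq_top_of_separatesPoints _ hsep
      have hmem : F ∈ (Algebra.adjoin ℝ gens).topologicalClosure := by
        rw [htop]; exact Algebra.mem_top
      rw [← Subalgebra.topologicalClosure_coe]
      exact hmem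
    rw [Metric.mem_closure_iff] at hcl
    obtain ⟨G, hG, hd⟩ := hcl ε hε
    exact ⟨G, hG, hd.le⟩
  have hTall : ∀ F : C(↥K × ↥L, ℝ),
      Filter.Tendsto (fun n => T n F) Filter.atTop (nhds 0) := by
    intro F
    apply approx_tendsto
    intro ε hε
    obtain ⟨G, hG, hd⟩ := happrox F ε hε
    exact ⟨fun n => T n G, hTspan G (hadj_sub G hG), fun n => (hTlip n F G).trans hd⟩
  -- the JN property
  have hJN : ∀ f : C(X × Y, ℝ),
      Filter.Tendsto (fun n => (μ n).sum fun z w => w * f z) Filter.atTop (nhds 0) := by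
    intro f
    let incl : C(↥K × ↥L, X × Y) :=
      ⟨fun z => ((z.1 : X), (z.2 : Y)), by
        exact (continuous_subtype_val.comp continuous_fst).prodMk
          (continuous_subtype_val.comp continuous_snd)⟩
    have heq : (fun n => (μ n).sum fun z w => w * f z) = fun n => T n (f.comp incl) := by
      funext n
      rw [hμsum n (fun z w => w * f z) (fun z => zero_mul _)]
      refine Finset.sum_congr rfl fun i _ => Finset.sum_congr rfl fun j _ => rfl
    rw [heq]
    exact hTall _
  -- orthogonality between μ n and φ m
  have hμφ_ne : ∀ n m, n ≠ m → ((μ n).sum fun z w => w * φ m z) = 0 := by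
    intro n m hnm
    rw [hμsum n (fun z w => w * φ m z) (fun z => zero_mul _)]
    refine Finset.sum_eq_zero fun i _ => Finset.sum_eq_zero fun j _ => ?_
    rw [hφgrid_ne m n i j (Ne.symm hnm), mul_zero]
  -- the diagonal values
  have hμφ_eq : ∀ n, ((μ n).sum fun z w => w * φ n z) = (4^n + 2^n)/(2 * 4^n) := by
    intro n
    rw [hμsum n (fun z w => w * φ n z) (fun z => zero_mul _)]
    have hsplit : ∑ i ∈ range (2^n), ∑ j ∈ range (2^n), ((1:ℝ) + Had n i j)
        = 4^n + 2^n := by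
      have hrow : ∀ i ∈ range (2^n), ∑ j ∈ range (2^n), ((1:ℝ) + Had n i j)
          = 2^n + ∑ j ∈ range (2^n), Had n i j := by
        intro i _
        rw [Finset.sum_add_distrib, Finset.sum_const, Finset.card_range, nsmul_eq_mul]
        push_cast
        ring
      rw [Finset.sum_congr rfl hrow, Finset.sum_add_distrib, sum_had,
        Finset.sum_const, Finset.card_range, nsmul_eq_mul, h4pow n]
      push_cast
      ring
    calc ∑ i ∈ range (2^n), ∑ j ∈ range (2^n),
          (Had n i j / 4^n) * φ n (xx (Nat.pair n i), yy (Nat.pair n j))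
        = ∑ i ∈ range (2^n), ∑ j ∈ range (2^n), (1 + Had n i j) * (1/(2*4^n)) := by
          refine Finset.sum_congr rfl fun i hi => Finset.sum_congr rfl fun j hj => ?_
          rw [hφgrid_eq n i j (Finset.mem_range.mp hi) (Finset.mem_range.mp hj)]
          have h1 : (Had n i j / 4^n) * ((Had n i j + 1)/2)
              = (Had n i j * Had n i j + Had n i j) * (1/(2*4^n)) := by ring
          rw [h1, had_sq]
      _ = (∑ i ∈ range (2^n), ∑ j ∈ range (2^n), ((1:ℝ) + Had n i j)) * (1/(2*4^n)) := by
          rw [Finset.sum_mul]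
          refine Finset.sum_congr rfl fun i _ => ?_
          rw [Finset.sum_mul]
      _ = (4^n + 2^n)/(2 * 4^n) := by
          rw [hsplit]
          ring
  have hinf : 0 < ⨅ n, |(μ n).sum fun z w => w * φ n z| := by
    have hge : ∀ n, (1:ℝ)/2 ≤ |(μ n).sum fun z w => w * φ n z| := by
      intro n
      rw [hμφ_eq n]
      have h4 : (0:ℝ) < 4^n := by positivity
      have h2 : (0:ℝ) < 2^n := by positivity
      rw [abs_of_pos (by positivity)]
      rw [div_le_div_iff₀ (by norm_num) (by positivity)]
      linarith
    exact lt_of_lt_of_le (by norm_num : (0:ℝ) < 1/2) (le_ciInf hge)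
  exact ⟨μ, φ, hμnorm, hJN, hφ0, hφdisj, hφsup, hμφ_ne, hinf⟩
end
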